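/- arXiv:2601.12517 — 13 statements merged into one kernel-verified Lean document; each statement's English description precedes it below -/
import Mathlib

section
/- Let 1 < p ≤ 2 and define f(a) = |a|^{p-1}·a for real a, and f(a,b) = min(|a|^{p-1}|b|, |a||b|^{p-1}). Then for any K ∈ ℕ and real numbers a_1,…,a_K, one has |f(a_1+⋯+a_K) − (f(a_1)+⋯+f(a_K))| ≤ C(K,p) · ∑_{i≠j} f(a_i, a_j) for some constant C(K,p) depending only on K and p. -/
open Real Finset

section aux
variable {p : ℝ} (hp1 : 1 < p) (hp2 : p ≤ 2)

private noncomputable def fp (p : ℝ) (x : ℝ) : ℝ := |x| ^ (p - 1) * x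

private noncomputable def gp (p a b : ℝ) : ℝ :=
  min (|a| ^ (p - 1) * |b|) (|a| * |b| ^ (p - 1))

private lemma gp_nonneg (a b : ℝ) : 0 ≤ gp p a b := by
  refine le_min (mul_nonneg (Real.rpow_nonneg (abs_nonneg _) _) (abs_nonneg _))
    (mul_nonneg (abs_nonneg _) (Real.rpow_nonneg (abs_nonneg _) _))

include hp1 in
private lemma hasDerivAt_fp (t : ℝ) : HasDerivAt (fp p) (p * |t| ^ (p - 1)) t := by
  rcases lt_trichotomy t 0 with ht | ht | ht
  · have h1 : HasDerivAt (fun y : ℝ => y ^ p) (p * (-t) ^ (p - 1)) (-t) :=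
      Real.hasDerivAt_rpow_const (Or.inl (by linarith))
    have h2 : HasDerivAt (fun x : ℝ => -x) (-1) t := hasDerivAt_neg t
    have h3 : HasDerivAt (fun x : ℝ => (-x) ^ p) ((p * (-t) ^ (p - 1)) * (-1)) t :=
      h1.comp t h2
    have h4 := h3.neg
    have heq : (fun x : ℝ => -((-x) ^ p)) =ᶠ[nhds t] fp p := by
      filter_upwards [eventually_lt_nhds ht] with x hx
      have hx' : (0:ℝ) < -x := by linarith
      simp only [fp, abs_of_neg hx]
      have e : (-x) ^ p = (-x) ^ (p - 1) * (-x) := by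
        rw [← Real.rpow_add_one (ne_of_gt hx')]
        congr 1
        ring
      rw [e]
      ring
    have := h4.congr_of_eventuallyEq heq.symm
    refine this.congr_deriv ?_
    rw [abs_of_neg ht]; ring
  · subst ht
    have hzero : |(0:ℝ)| ^ (p - 1) = 0 := by
      rw [abs_zero, Real.zero_rpow (by linarith)]
    rw [hzero, mul_zero]
    rw [hasDerivAt_iff_isLittleO]
    simp only [fp, sub_zero, abs_zero, Real.zero_rpow (show p - 1 ≠ 0 by linarith),
      zero_mul, mul_zero, smul_zero, sub_zero]
    have h1 : (fun x : ℝ => |x| ^ (p - 1)) =o[nhds 0] (fun _ : ℝ => (1:ℝ)) := by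
      rw [Asymptotics.isLittleO_one_iff]
      have hc : ContinuousAt (fun x : ℝ => |x| ^ (p - 1)) 0 := by
        have h1 : ContinuousAt (fun y : ℝ => y ^ (p - 1)) (|(0:ℝ)|) := by
          rw [abs_zero]
          exact Real.continuousAt_rpow_const 0 (p - 1) (Or.inr (by linarith))
        exact h1.comp continuous_abs.continuousAt
      have := hc.tendsto
      simpa [Real.zero_rpow (show p - 1 ≠ 0 by linarith)] using this
    have h2 : (fun x : ℝ => x) =O[nhds 0] (fun x : ℝ => x) := Asymptotics.isBigO_refl _ _
    have := h1.mul_isBigO h2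
    simpa using this
  · have h1 : HasDerivAt (fun y : ℝ => y ^ p) (p * t ^ (p - 1)) t :=
      Real.hasDerivAt_rpow_const (Or.inl (ne_of_gt ht))
    have heq : (fun y : ℝ => y ^ p) =ᶠ[nhds t] fp p := by
      filter_upwards [eventually_gt_nhds ht] with x hx
      simp only [fp, abs_of_pos hx]
      have e : x ^ p = x ^ (p - 1) * x := by
        rw [← Real.rpow_add_one (ne_of_gt hx)]
        congr 1
        ring
      rw [e]
    have := h1.congr_of_eventuallyEq heq.symm
    rwa [abs_of_pos ht]

include hp1 in
private lemma fp_mvt (a b : ℝ) :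
    |fp p (a + b) - fp p a| ≤ p * (|a| + |b|) ^ (p - 1) * |b| := by
  have hconv : Convex ℝ (Metric.closedBall a |b|) := convex_closedBall a |b|
  have hderiv : ∀ x ∈ Metric.closedBall a |b|,
      HasDerivWithinAt (fp p) (p * |x| ^ (p - 1)) (Metric.closedBall a |b|) x :=
    fun x _ => (hasDerivAt_fp hp1 x).hasDerivWithinAt
  have hbound : ∀ x ∈ Metric.closedBall a |b|,
      ‖p * |x| ^ (p - 1)‖ ≤ p * (|a| + |b|) ^ (p - 1) := by
    intro x hx
    rw [Metric.mem_closedBall, Real.dist_eq] at hx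
    have hxa : |x| ≤ |a| + |b| := by
      calc |x| ≤ |x - a| + |a| := by
            have := abs_sub_abs_le_abs_sub x a; linarith [abs_sub_abs_le_abs_sub x a]
        _ ≤ |a| + |b| := by linarith
    rw [Real.norm_eq_abs, abs_of_nonneg (mul_nonneg (by linarith)
      (Real.rpow_nonneg (abs_nonneg _) _))]
    exact mul_le_mul_of_nonneg_left
      (Real.rpow_le_rpow (abs_nonneg _) hxa (by linarith)) (by linarith)
  have ha : a ∈ Metric.closedBall a |b| := Metric.mem_closedBall_self (abs_nonneg b)
  have hab : a + b ∈ Metric.closedBall a |b| := by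
    rw [Metric.mem_closedBall, Real.dist_eq]; simp
  have := Convex.norm_image_sub_le_of_norm_hasDerivWithin_le hderiv hbound hconv ha hab
  simpa [Real.norm_eq_abs] using this

include hp1 hp2 in
private lemma fp_two_asym (a b : ℝ) (h : |b| ≤ |a|) :
    |fp p (a + b) - fp p a - fp p b| ≤ (2 * p + 1) * (|a| ^ (p - 1) * |b|) := by
  have h1 : |fp p (a + b) - fp p a| ≤ p * (|a| + |b|) ^ (p - 1) * |b| := fp_mvt hp1 a b
  have h2 : |fp p b| = |b| ^ (p - 1) * |b| := by
    rw [fp, abs_mul, abs_of_nonneg (Real.rpow_nonneg (abs_nonneg _) _)]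
    
  have h3 : |b| ^ (p - 1) ≤ |a| ^ (p - 1) :=
    Real.rpow_le_rpow (abs_nonneg _) h (by linarith)
  have h4 : (|a| + |b|) ^ (p - 1) ≤ 2 * |a| ^ (p - 1) := by
    calc (|a| + |b|) ^ (p - 1) ≤ (2 * |a|) ^ (p - 1) :=
          Real.rpow_le_rpow (by positivity) (by linarith) (by linarith)
      _ = 2 ^ (p - 1) * |a| ^ (p - 1) :=
          Real.mul_rpow (by norm_num) (abs_nonneg _)
      _ ≤ 2 * |a| ^ (p - 1) := by
          have : (2:ℝ) ^ (p - 1) ≤ 2 ^ (1:ℝ) :=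
            Real.rpow_le_rpow_of_exponent_le one_le_two (by linarith)
          rw [Real.rpow_one] at this
          exact mul_le_mul_of_nonneg_right this (Real.rpow_nonneg (abs_nonneg _) _)
  have h5 : |fp p (a + b) - fp p a - fp p b| ≤ |fp p (a + b) - fp p a| + |fp p b| :=
    abs_sub _ _
  have hb : 0 ≤ |b| := abs_nonneg b
  have hp0 : (0:ℝ) < p := by linarith
  have m1 := mul_le_mul_of_nonneg_left (mul_le_mul_of_nonneg_right h4 hb) hp0.le
  have m2 := mul_le_mul_of_nonneg_right h3 hb
  linarith [h1, h5, h2, m1, m2]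

include hp1 hp2 in
private lemma min_eq_of_le (a b : ℝ) (h : |b| ≤ |a|) :
    |a| ^ (p - 1) * |b| ≤ |a| * |b| ^ (p - 1) := by
  rcases eq_or_lt_of_le (abs_nonneg b) with hb | hb
  · rw [← hb, Real.zero_rpow (show p - 1 ≠ 0 by intro h; linarith [h])]
    simp
  · have ha : (0:ℝ) < |a| := lt_of_lt_of_le hb h
    have key : |a| ^ (p - 2) ≤ |b| ^ (p - 2) :=
      Real.rpow_le_rpow_of_nonpos hb h (by linarith)
    have e1 : |a| ^ (p - 1) = |a| ^ (p - 2) * |a| := by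
      rw [← Real.rpow_add_one (ne_of_gt ha)]; congr 1; ring
    have e2 : |b| ^ (p - 1) = |b| ^ (p - 2) * |b| := by
      rw [← Real.rpow_add_one (ne_of_gt hb)]; congr 1; ring
    rw [e1, e2]
    calc |a| ^ (p - 2) * |a| * |b| ≤ |b| ^ (p - 2) * |a| * |b| := by
          apply mul_le_mul_of_nonneg_right _ (abs_nonneg b)
          exact mul_le_mul_of_nonneg_right key ha.le
      _ = |a| * (|b| ^ (p - 2) * |b|) := by ring

include hp1 hp2 in
private lemma fp_two (a b : ℝ) :
    |fp p (a + b) - fp p a - fp p b| ≤ (2 * p + 1) * gp p a b := by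
  rcases le_total |b| |a| with h | h
  · have hg : gp p a b = |a| ^ (p - 1) * |b| := min_eq_left (min_eq_of_le hp1 hp2 a b h)
    rw [hg]
    exact fp_two_asym hp1 hp2 a b h
  · have : gp p a b = |b| ^ (p - 1) * |a| := by
      have : gp p a b = min (|b| * |a| ^ (p - 1)) (|b| ^ (p - 1) * |a|) := by
        rw [gp]
        congr 1 <;> ring
      rw [this]
      exact min_eq_right (min_eq_of_le hp1 hp2 b a h)
    rw [this]
    have := fp_two_asym hp1 hp2 b a h
    rw [show b + a = a + b by ring] at this
    calc |fp p (a + b) - fp p a - fp p b|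
        = |fp p (a + b) - fp p b - fp p a| := by ring_nf
      _ ≤ (2 * p + 1) * (|b| ^ (p - 1) * |a|) := this

include hp1 hp2 in
private lemma gp_le_scale (c A a' b : ℝ) (hc : 1 ≤ c) (hA : |A| ≤ c * |a'|) :
    gp p A b ≤ c * gp p a' b := by
  have hc0 : (0:ℝ) ≤ c := by linarith
  have h1 : |A| ^ (p - 1) ≤ c * |a'| ^ (p - 1) := by
    calc |A| ^ (p - 1) ≤ (c * |a'|) ^ (p - 1) :=
          Real.rpow_le_rpow (abs_nonneg _) hA (by linarith)
      _ = c ^ (p - 1) * |a'| ^ (p - 1) := Real.mul_rpow hc0 (abs_nonneg _)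
      _ ≤ c * |a'| ^ (p - 1) := by
          have : c ^ (p - 1) ≤ c ^ (1:ℝ) :=
            Real.rpow_le_rpow_of_exponent_le hc (by linarith)
          rw [Real.rpow_one] at this
          exact mul_le_mul_of_nonneg_right this (Real.rpow_nonneg (abs_nonneg _) _)
  rcases le_total (|a'| ^ (p - 1) * |b|) (|a'| * |b| ^ (p - 1)) with h | h
  · have hg : gp p a' b = |a'| ^ (p - 1) * |b| := min_eq_left h
    rw [hg]
    calc gp p A b ≤ |A| ^ (p - 1) * |b| := min_le_left _ _
      _ ≤ c * |a'| ^ (p - 1) * |b| :=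
          mul_le_mul_of_nonneg_right h1 (abs_nonneg _)
      _ = c * (|a'| ^ (p - 1) * |b|) := by ring
  · have hg : gp p a' b = |a'| * |b| ^ (p - 1) := min_eq_right h
    rw [hg]
    calc gp p A b ≤ |A| * |b| ^ (p - 1) := min_le_right _ _
      _ ≤ c * |a'| * |b| ^ (p - 1) := by
          apply mul_le_mul_of_nonneg_right _ (Real.rpow_nonneg (abs_nonneg _) _)
          exact le_trans hA (by nlinarith [abs_nonneg a'])
      _ = c * (|a'| * |b| ^ (p - 1)) := by ring

include hp1 hp2 in
private lemma gp_sum_bound (K : ℕ) (a : Fin K → ℝ) (b : ℝ) :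
    gp p (∑ i, a i) b ≤ (K : ℝ) * ∑ i, gp p (a i) b := by
  rcases Nat.eq_zero_or_pos K with hK | hK
  · subst hK
    simp only [Finset.univ_eq_empty, Finset.sum_empty]
    have : gp p 0 b = 0 := by
      have h0 : |(0:ℝ)| ^ (p - 1) * |b| = 0 := by
        rw [abs_zero, Real.zero_rpow (by linarith), zero_mul]
      refine le_antisymm ?_ (gp_nonneg 0 b)
      exact le_trans (min_le_left _ _) (le_of_eq h0)
    simp [this]
  · obtain ⟨i₀, -, hi₀⟩ := Finset.exists_max_image Finset.univ (fun i => |a i|)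
      (Finset.univ_nonempty_iff.mpr (Fin.pos_iff_nonempty.mp hK))
    have hsum : |∑ i, a i| ≤ (K : ℝ) * |a i₀| := by
      calc |∑ i, a i| ≤ ∑ i, |a i| := Finset.abs_sum_le_sum_abs _ _
        _ ≤ ∑ _i : Fin K, |a i₀| :=
            Finset.sum_le_sum (fun i _ => hi₀ i (Finset.mem_univ i))
        _ = (K : ℝ) * |a i₀| := by
            rw [Finset.sum_const, Finset.card_univ, Fintype.card_fin, nsmul_eq_mul]
    have hK1 : (1:ℝ) ≤ K := by exact_mod_cast hK
    calc gp p (∑ i, a i) b ≤ (K : ℝ) * gp p (a i₀) b :=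
          gp_le_scale hp1 hp2 _ _ _ _ hK1 hsum
      _ ≤ (K : ℝ) * ∑ i, gp p (a i) b := by
          apply mul_le_mul_of_nonneg_left _ (by positivity)
          exact Finset.single_le_sum (fun i _ => gp_nonneg (a i) b) (Finset.mem_univ i₀)

include hp1 hp2 in
private lemma main_aux (K : ℕ) :
    ∃ C : ℝ, 0 ≤ C ∧ ∀ a : Fin K → ℝ,
      |fp p (∑ i, a i) - ∑ i, fp p (a i)| ≤
        C * ∑ i, ∑ j, if i ≠ j then gp p (a i) (a j) else 0 := by
  induction K with
  | zero =>
    refine ⟨0, le_refl 0, fun a => ?_⟩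
    simp [fp, Real.zero_rpow (show p - 1 ≠ 0 by linarith)]
  | succ K ih =>
    obtain ⟨C, hC0, hC⟩ := ih
    refine ⟨(2 * p + 1) * K + C, by positivity, fun a => ?_⟩
    set b := a (Fin.last K) with hb
    set A := ∑ i : Fin K, a i.castSucc with hA
    set Sfull := ∑ i : Fin (K+1), ∑ j : Fin (K+1),
      if i ≠ j then gp p (a i) (a j) else 0 with hSfull
    set Sin := ∑ i : Fin K, ∑ j : Fin K,
      if i ≠ j then gp p (a i.castSucc) (a j.castSucc) else 0 with hSin
    set Scross := ∑ i : Fin K, gp p (a i.castSucc) b with hScross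
    set Scross2 := ∑ j : Fin K, gp p b (a j.castSucc) with hScross2
    have hsplit : Sfull = Sin + Scross + Scross2 := by
      rw [hSfull, Fin.sum_univ_castSucc]
      congr 1
      · rw [← Finset.sum_add_distrib]
        apply Finset.sum_congr rfl
        intro i _
        rw [Fin.sum_univ_castSucc]
        congr 1
        · apply Finset.sum_congr rfl
          intro j _
          congr 1
          simp [Fin.castSucc_inj]
        · rw [if_pos (Fin.ne_last_of_lt (Fin.castSucc_lt_last i))]
      · rw [Fin.sum_univ_castSucc, if_neg (by simp), add_zero]
        apply Finset.sum_congr rfl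
        intro j _
        rw [if_pos (Ne.symm (Fin.ne_last_of_lt (Fin.castSucc_lt_last j)))]
    have hSin_nonneg : 0 ≤ Sin := by
      apply Finset.sum_nonneg; intro i _
      apply Finset.sum_nonneg; intro j _
      split <;> [exact gp_nonneg _ _; exact le_refl 0]
    have hScross_nonneg : 0 ≤ Scross :=
      Finset.sum_nonneg fun i _ => gp_nonneg _ _
    have hScross2_nonneg : 0 ≤ Scross2 :=
      Finset.sum_nonneg fun i _ => gp_nonneg _ _
    have hsum_eq : ∑ i : Fin (K+1), a i = A + b := Fin.sum_univ_castSucc a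
    have hfsum_eq : ∑ i : Fin (K+1), fp p (a i)
        = (∑ i : Fin K, fp p (a i.castSucc)) + fp p b :=
      Fin.sum_univ_castSucc (fun i => fp p (a i))
    have htri : |fp p (∑ i, a i) - ∑ i, fp p (a i)| ≤
        |fp p (A + b) - fp p A - fp p b| + |fp p A - ∑ i : Fin K, fp p (a i.castSucc)| := by
      rw [hsum_eq, hfsum_eq]
      calc |fp p (A + b) - ((∑ i : Fin K, fp p (a i.castSucc)) + fp p b)|
          = |(fp p (A + b) - fp p A - fp p b)
              + (fp p A - ∑ i : Fin K, fp p (a i.castSucc))| := by ring_nf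
        _ ≤ _ := abs_add_le _ _
    have h1 : |fp p (A + b) - fp p A - fp p b| ≤ (2 * p + 1) * ((K:ℝ) * Scross) := by
      calc |fp p (A + b) - fp p A - fp p b| ≤ (2 * p + 1) * gp p A b :=
            fp_two hp1 hp2 A b
        _ ≤ (2 * p + 1) * ((K:ℝ) * Scross) := by
            apply mul_le_mul_of_nonneg_left _ (by linarith)
            exact gp_sum_bound hp1 hp2 K (fun i => a i.castSucc) b
    have h2 : |fp p A - ∑ i : Fin K, fp p (a i.castSucc)| ≤ C * Sin :=
      hC (fun i => a i.castSucc)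
    have hKnn : (0:ℝ) ≤ K := Nat.cast_nonneg K
    have hfin1 : Scross ≤ Sfull := by rw [hsplit]; linarith
    have hfin2 : Sin ≤ Sfull := by rw [hsplit]; linarith
    calc |fp p (∑ i, a i) - ∑ i, fp p (a i)|
        ≤ (2 * p + 1) * ((K:ℝ) * Scross) + C * Sin := by linarith
      _ ≤ (2 * p + 1) * ((K:ℝ) * Sfull) + C * Sfull := by
          have := mul_le_mul_of_nonneg_left hfin1 hKnn
          have h2p : (0:ℝ) ≤ 2 * p + 1 := by linarith
          have := mul_le_mul_of_nonneg_left (mul_le_mul_of_nonneg_left hfin1 hKnn) h2p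
          nlinarith [mul_le_mul_of_nonneg_left hfin2 hC0]
      _ = ((2 * p + 1) * K + C) * Sfull := by ring

end aux

/-- Pointwise estimate: |f(a₁+⋯+a_K) − ∑f(a_i)| ≲_{K,p} ∑_{i≠j} f(a_i,a_j),
where f(a) = |a|^{p-1}a and f(a,b) = min{|a|^{p-1}|b|, |a||b|^{p-1}}, for 1 < p ≤ 2. -/
theorem stmt_0 (p : ℝ) (hp1 : 1 < p) (hp2 : p ≤ 2) (K : ℕ) :
    ∃ C : ℝ, ∀ a : Fin K → ℝ,
      |(|∑ i, a i| ^ (p - 1) * (∑ i, a i)) - (∑ i, |a i| ^ (p - 1) * a i)| ≤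
        C * ∑ i, ∑ j,
          if i ≠ j then min (|a i| ^ (p - 1) * |a j|) (|a i| * |a j| ^ (p - 1)) else 0 := by
  obtain ⟨C, -, hC⟩ := main_aux hp1 hp2 K
  exact ⟨C, fun a => hC a⟩
end

section
/- Let 1 < p ≤ 2, f(a) = |a|^{p-1}a, f'(a) = p|a|^{p-1}. Then for all real a, b: |a·(f'(a+b) − f'(a))| ≤ C(p) · min{|a|^{p-1}|b|, |a||b|^{p-1}} for some constant C(p) depending only on p. -/
private lemma aux_subadd {s : ℝ} (hs0 : 0 ≤ s) (hs1 : s ≤ 1) {x y : ℝ}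
    (hx : 0 ≤ x) (hy : 0 ≤ y) : (x + y) ^ s ≤ x ^ s + y ^ s := by
  have h := NNReal.rpow_add_le_add_rpow x.toNNReal y.toNNReal hs0 hs1
  have h' := NNReal.coe_le_coe.2 h
  rw [← Real.toNNReal_add hx hy] at h'
  simpa [NNReal.coe_rpow, Real.coe_toNNReal _ hx, Real.coe_toNNReal _ hy,
    Real.coe_toNNReal _ (add_nonneg hx hy)] using h'

private lemma aux_sub {s : ℝ} (hs0 : 0 ≤ s) (hs1 : s ≤ 1) {u v : ℝ}
    (hu : 0 ≤ u) (huv : u ≤ v) : v ^ s - u ^ s ≤ (v - u) ^ s := by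
  have h := aux_subadd hs0 hs1 hu (sub_nonneg.2 huv)
  rw [add_sub_cancel] at h
  linarith

/-- Bernoulli / concavity: for `x > 0`, `y ≥ 0`, `0 < s ≤ 1`,
`y ^ s ≤ x ^ s + s * x ^ (s - 1) * (y - x)`. -/
private lemma aux_bernoulli {s : ℝ} (hs0 : 0 < s) (hs1 : s ≤ 1) {x y : ℝ}
    (hx : 0 < x) (hy : 0 ≤ y) : y ^ s ≤ x ^ s + s * x ^ (s - 1) * (y - x) := by
  have ht : (-1 : ℝ) ≤ y / x - 1 := by
    have : 0 ≤ y / x := div_nonneg hy hx.le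
    linarith
  have h := rpow_one_add_le_one_add_mul_self ht hs0.le hs1
  rw [add_sub_cancel] at h
  have hxs : (0:ℝ) < x ^ s := Real.rpow_pos_of_pos hx s
  have hmul := mul_le_mul_of_nonneg_left h hxs.le
  have h1 : x ^ s * (y / x) ^ s = y ^ s := by
    rw [← Real.mul_rpow hx.le (div_nonneg hy hx.le), mul_div_cancel₀ _ hx.ne']
  have h2 : x ^ (s - 1) = x ^ s / x := Real.rpow_sub_one hx.ne' s
  rw [h1] at hmul
  calc y ^ s ≤ x ^ s * (1 + s * (y / x - 1)) := hmul
    _ = x ^ s + s * (x ^ s / x) * (y - x) := by field_simp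
    _ = x ^ s + s * x ^ (s - 1) * (y - x) := by rw [h2]

private lemma aux_key {s : ℝ} (hs0 : 0 < s) (hs1 : s ≤ 1) {x y d : ℝ}
    (hx : 0 ≤ x) (hy : 0 ≤ y) (hd : 0 ≤ d) (hxy : |y - x| ≤ d) :
    x * |y ^ s - x ^ s| ≤ 2 * min (x ^ s * d) (x * d ^ s) := by
  have hds : (0:ℝ) ≤ d ^ s := Real.rpow_nonneg hd s
  have hxs : (0:ℝ) ≤ x ^ s := Real.rpow_nonneg hx s
  -- claim 1 : |y^s - x^s| ≤ d^s
  have claim1 : |y ^ s - x ^ s| ≤ d ^ s := by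
    rcases le_total x y with h | h
    · rw [abs_of_nonneg (sub_nonneg.2 (Real.rpow_le_rpow hx h hs0.le))]
      calc y ^ s - x ^ s ≤ (y - x) ^ s := aux_sub hs0.le hs1 hx h
        _ ≤ d ^ s := Real.rpow_le_rpow (sub_nonneg.2 h)
            (by rwa [abs_of_nonneg (sub_nonneg.2 h)] at hxy) hs0.le
    · rw [abs_of_nonpos (sub_nonpos.2 (Real.rpow_le_rpow hy h hs0.le)), neg_sub]
      calc x ^ s - y ^ s ≤ (x - y) ^ s := aux_sub hs0.le hs1 hy h
        _ ≤ d ^ s := Real.rpow_le_rpow (sub_nonneg.2 h)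
            (by rw [abs_sub_comm] at hxy;
                rwa [abs_of_nonneg (sub_nonneg.2 h)] at hxy) hs0.le
  have hB : x * |y ^ s - x ^ s| ≤ 2 * (x * d ^ s) := by
    nlinarith [mul_le_mul_of_nonneg_left claim1 hx, mul_nonneg hx hds]
  have hA : x * |y ^ s - x ^ s| ≤ 2 * (x ^ s * d) := by
    rcases le_total x (2 * d) with h | h
    · -- x ≤ 2d : use x * d^s ≤ 2 * x^s * d
      have h1 : x ^ (1 - s) ≤ 2 * d ^ (1 - s) := by
        calc x ^ (1 - s) ≤ (2 * d) ^ (1 - s) :=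
              Real.rpow_le_rpow hx h (by linarith)
          _ = 2 ^ (1 - s) * d ^ (1 - s) := Real.mul_rpow (by norm_num) hd
          _ ≤ 2 * d ^ (1 - s) := by
              have h2 : (2:ℝ) ^ (1 - s) ≤ 2 ^ (1:ℝ) :=
                Real.rpow_le_rpow_of_exponent_le one_le_two (by linarith)
              rw [Real.rpow_one] at h2
              exact mul_le_mul_of_nonneg_right h2 (Real.rpow_nonneg hd _)
      have hxsplit : x = x ^ (1 - s) * x ^ s := by
        rw [← Real.rpow_add' hx (by norm_num)]; norm_num
      have hdsplit : d ^ (1 - s) * d ^ s = d := by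
        rw [← Real.rpow_add' hd (by norm_num)]; norm_num
      calc x * |y ^ s - x ^ s| ≤ x * d ^ s :=
            mul_le_mul_of_nonneg_left claim1 hx
        _ = x ^ (1 - s) * x ^ s * d ^ s := by rw [← hxsplit]
        _ ≤ 2 * d ^ (1 - s) * x ^ s * d ^ s := by
            have := mul_le_mul_of_nonneg_right
              (mul_le_mul_of_nonneg_right h1 hxs) hds
            linarith
        _ = 2 * (x ^ s * (d ^ (1 - s) * d ^ s)) := by ring
        _ = 2 * (x ^ s * d) := by rw [hdsplit]
    · -- 2d ≤ x
      rcases eq_or_lt_of_le hx with hx0 | hx0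
      · simp [← hx0]
        positivity
      have habs := abs_le.1 hxy
      have hy2 : x / 2 ≤ y := by linarith
      have hypos : 0 < y := by linarith
      have hxx : x * x ^ (s - 1) = x ^ s := by
        nth_rw 1 [← Real.rpow_one x]
        rw [← Real.rpow_add hx0]; norm_num
      rcases le_total x y with hxy' | hxy'
      · have hb := aux_bernoulli hs0 hs1 hx0 hy
        rw [abs_of_nonneg (sub_nonneg.2 (Real.rpow_le_rpow hx hxy' hs0.le))]
        have hxs1 : (0:ℝ) ≤ x ^ (s - 1) := Real.rpow_nonneg hx _
        have hyx : y - x ≤ d := by linarith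
        calc x * (y ^ s - x ^ s) ≤ x * (s * x ^ (s - 1) * (y - x)) := by
              apply mul_le_mul_of_nonneg_left _ hx
              linarith
          _ ≤ x * (s * x ^ (s - 1) * d) := by
              apply mul_le_mul_of_nonneg_left _ hx
              apply mul_le_mul_of_nonneg_left hyx
              positivity
          _ = s * (x * x ^ (s - 1)) * d := by ring
          _ = s * x ^ s * d := by rw [hxx]
          _ ≤ 2 * (x ^ s * d) := by nlinarith [mul_nonneg hxs hd]
      · have hb := aux_bernoulli hs0 hs1 hypos hx
        rw [abs_of_nonpos (sub_nonpos.2 (Real.rpow_le_rpow hy hxy' hs0.le)), neg_sub]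
        have hys1 : (0:ℝ) ≤ y ^ (s - 1) := Real.rpow_nonneg hy _
        have hyx : x - y ≤ d := by linarith
        -- y^(s-1) ≤ 2 * x^(s-1)
        have hmono : y ^ (s - 1) ≤ (x / 2) ^ (s - 1) :=
          Real.rpow_le_rpow_of_nonpos (by linarith) hy2 (by linarith)
        have hhalf : (x / 2) ^ (s - 1) ≤ 2 * x ^ (s - 1) := by
          have e1 : (x / 2) ^ (s - 1) * (2:ℝ) ^ (s - 1) = x ^ (s - 1) := by
            rw [← Real.mul_rpow (by positivity) (by norm_num)]
            norm_num
          have h2pos : (0:ℝ) < (2:ℝ) ^ (s - 1) := Real.rpow_pos_of_pos two_pos _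
          have hhalfle : (1:ℝ) / 2 ≤ (2:ℝ) ^ (s - 1) := by
            have h3 := Real.rpow_le_rpow_of_exponent_le (show (1:ℝ) ≤ 2 by norm_num)
              (show (-1:ℝ) ≤ s - 1 by linarith)
            rw [Real.rpow_neg_one] at h3
            linarith
          have hhpos : (0:ℝ) ≤ (x / 2) ^ (s - 1) := Real.rpow_nonneg (by linarith) _
          nlinarith
        have hkey : y ^ (s - 1) ≤ 2 * x ^ (s - 1) := hmono.trans hhalf
        calc x * (x ^ s - y ^ s) ≤ x * (s * y ^ (s - 1) * (x - y)) := by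
              apply mul_le_mul_of_nonneg_left _ hx
              linarith
          _ ≤ x * (s * y ^ (s - 1) * d) := by
              apply mul_le_mul_of_nonneg_left _ hx
              apply mul_le_mul_of_nonneg_left hyx
              positivity
          _ ≤ x * (s * (2 * x ^ (s - 1)) * d) := by
              apply mul_le_mul_of_nonneg_left _ hx
              apply mul_le_mul_of_nonneg_right _ hd
              exact mul_le_mul_of_nonneg_left hkey hs0.le
          _ = 2 * s * (x * x ^ (s - 1)) * d := by ring
          _ = 2 * s * x ^ s * d := by rw [hxx]
          _ ≤ 2 * (x ^ s * d) := by nlinarith [mul_nonneg hxs hd]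
  rw [mul_min_of_nonneg _ _ (by norm_num : (0:ℝ) ≤ 2)]
  exact le_min hA hB

/-- Pointwise estimate: |a(f'(a+b) − f'(a))| ≲_p min{|a|^{p-1}|b|, |a||b|^{p-1}},
where f'(a) = p|a|^{p-1}, for 1 < p ≤ 2. -/
theorem stmt_1 (p : ℝ) (hp1 : 1 < p) (hp2 : p ≤ 2) :
    ∃ C : ℝ, ∀ a b : ℝ,
      |a * (p * |a + b| ^ (p - 1) - p * |a| ^ (p - 1))| ≤
        C * min (|a| ^ (p - 1) * |b|) (|a| * |b| ^ (p - 1)) := by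
  refine ⟨2 * p, fun a b => ?_⟩
  have hs0 : 0 < p - 1 := by linarith
  have hs1 : p - 1 ≤ 1 := by linarith
  have hxy : |(|a + b| - |a|)| ≤ |b| := by
    have h := abs_abs_sub_abs_le_abs_sub (a + b) a
    simpa using h
  have hkey := aux_key hs0 hs1 (abs_nonneg a) (abs_nonneg (a + b)) (abs_nonneg b) hxy
  have hlhs : |a * (p * |a + b| ^ (p - 1) - p * |a| ^ (p - 1))| =
      p * (|a| * |(|a + b| ^ (p - 1) - |a| ^ (p - 1))|) := by
    rw [abs_mul, ← mul_sub, abs_mul, abs_of_pos (by linarith : (0:ℝ) < p)]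
    ring
  rw [hlhs]
  calc p * (|a| * |(|a + b| ^ (p - 1) - |a| ^ (p - 1))|)
      ≤ p * (2 * min (|a| ^ (p - 1) * |b|) (|a| * |b| ^ (p - 1))) :=
        mul_le_mul_of_nonneg_left hkey (by linarith)
    _ = 2 * p * min (|a| ^ (p - 1) * |b|) (|a| * |b| ^ (p - 1)) := by ring
end

section
/- Let 1 < p ≤ 2 and f(a) = |a|^{p-1}a. Then for all real a ≠ 0 and b: |f(a+b) − f(a) − f'(a)b| ≤ C(p) · min{|b|^p, |a|^{p-2}|b|^2}, where f'(a) = p|a|^{p-1} and C(p) depends only on p. -/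
open Set

-- subadditivity of rpow for exponent ≤ 1
lemma my_add_rpow_le {α : ℝ} (h0 : 0 ≤ α) (h1 : α ≤ 1) {u v : ℝ} (hu : 0 ≤ u) (hv : 0 ≤ v) :
    (u + v) ^ α ≤ u ^ α + v ^ α := by
  have h := NNReal.coe_le_coe.2 (NNReal.rpow_add_le_add_rpow u.toNNReal v.toNNReal h0 h1)
  push_cast [NNReal.coe_rpow, Real.coe_toNNReal u hu, Real.coe_toNNReal v hv] at h
  exact h

lemma my_abs_rpow_sub {α : ℝ} (h0 : 0 ≤ α) (h1 : α ≤ 1) {x y : ℝ} (hx : 0 ≤ x) (hy : 0 ≤ y) :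
    |x ^ α - y ^ α| ≤ |x - y| ^ α := by
  wlog h : y ≤ x with H
  · rw [abs_sub_comm, abs_sub_comm x y]; exact H h0 h1 hy hx (le_of_not_ge h)
  have hxy : 0 ≤ x - y := sub_nonneg.2 h
  have key : x ^ α ≤ (x - y) ^ α + y ^ α := by
    have := my_add_rpow_le h0 h1 hxy hy
    simpa using this
  have h2 : y ^ α ≤ x ^ α := Real.rpow_le_rpow hy h h0
  rw [abs_of_nonneg (sub_nonneg.2 h2), abs_of_nonneg hxy]
  linarith

lemma my_hasDerivAt {p : ℝ} (hp1 : 1 < p) (x : ℝ) :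
    HasDerivAt (fun y : ℝ => |y| ^ (p - 1) * y) (p * |x| ^ (p - 1)) x := by
  rcases lt_trichotomy x 0 with hx | hx | hx
  · -- x < 0
    have h1 : HasDerivAt (fun y : ℝ => (-y) ^ p) (p * (-x) ^ (p - 1) * (-1)) x :=
      (Real.hasDerivAt_rpow_const (p := p) (Or.inl (neg_ne_zero.2 hx.ne))).comp x (hasDerivAt_neg x)
    have h2 : HasDerivAt (fun y : ℝ => -((-y) ^ p)) (p * (-x) ^ (p - 1)) x := by
      simpa using h1.fun_neg
    have hev : (fun y : ℝ => |y| ^ (p - 1) * y) =ᶠ[nhds x] (fun y : ℝ => -((-y) ^ p)) := by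
      filter_upwards [Iio_mem_nhds hx] with y hy
      have hy' : (-y : ℝ) ≠ 0 := neg_ne_zero.2 (ne_of_lt hy)
      rw [abs_of_neg hy]
      rw [show p = (p - 1) + 1 by ring, Real.rpow_add_one hy']
      ring
    rw [abs_of_neg hx]
    exact h2.congr_of_eventuallyEq hev
  · -- x = 0
    subst hx
    rw [abs_zero, Real.zero_rpow (by linarith : p - 1 ≠ 0), mul_zero]
    rw [hasDerivAt_iff_tendsto_slope]
    have htend : Filter.Tendsto (fun y : ℝ => |y| ^ (p - 1)) (nhds 0) (nhds 0) := by
      have h1 : ContinuousAt (fun t : ℝ => t ^ (p - 1)) 0 :=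
        Real.continuousAt_rpow_const 0 (p - 1) (Or.inr (by linarith))
      have h2 : ContinuousAt (fun y : ℝ => |y| ^ (p - 1)) 0 := by
        have := ContinuousAt.comp (x := (0:ℝ)) (g := fun t : ℝ => t ^ (p - 1))
          (f := fun y : ℝ => |y|) (by simpa using h1) continuous_abs.continuousAt
        exact this
      have := h2.tendsto
      simpa [Real.zero_rpow (by linarith : p - 1 ≠ 0)] using this
    refine (htend.mono_left nhdsWithin_le_nhds).congr' ?_
    filter_upwards [self_mem_nhdsWithin] with y hy
    have hy' : (y : ℝ) ≠ 0 := hy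
    simp [slope_def_field, abs_zero, Real.zero_rpow (by linarith : p - 1 ≠ 0)]
    field_simp
  · -- x > 0
    have h1 : HasDerivAt (fun y : ℝ => y ^ p) (p * x ^ (p - 1)) x :=
      Real.hasDerivAt_rpow_const (Or.inl hx.ne')
    have hev : (fun y : ℝ => |y| ^ (p - 1) * y) =ᶠ[nhds x] (fun y : ℝ => y ^ p) := by
      filter_upwards [Ioi_mem_nhds hx] with y hy
      rw [abs_of_pos hy, ← Real.rpow_add_one (ne_of_gt hy) (p - 1), sub_add_cancel]
    rw [abs_of_pos hx]
    exact h1.congr_of_eventuallyEq hev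

lemma my_key {f d : ℝ → ℝ} {s : Set ℝ} {a b C : ℝ}
    (hs : Convex ℝ s) (hd : ∀ y ∈ s, HasDerivWithinAt f (d y) s y)
    (bound : ∀ y ∈ s, |d y - d a| ≤ C) (ha : a ∈ s) (hab : a + b ∈ s) :
    |f (a + b) - f a - d a * b| ≤ C * |b| := by
  have hder : ∀ y ∈ s, HasDerivWithinAt (fun z => f z - d a * z) (d y - d a) s y := by
    intro y hy
    have h1 : HasDerivWithinAt (fun z : ℝ => d a * z) (d a) s y := by
      simpa using ((hasDerivAt_id y).const_mul (d a)).hasDerivWithinAt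
    exact (hd y hy).sub h1
  have H := Convex.norm_image_sub_le_of_norm_hasDerivWithin_le hder
    (fun y hy => by simpa [Real.norm_eq_abs] using bound y hy) hs ha hab
  rw [Real.norm_eq_abs, Real.norm_eq_abs] at H
  have e1 : f (a + b) - d a * (a + b) - (f a - d a * a) = f (a + b) - f a - d a * b := by ring
  have e2 : a + b - a = b := by ring
  rwa [e1, e2] at H

lemma my_bound1 {p : ℝ} (hp1 : 1 < p) (hp2 : p ≤ 2) (a b : ℝ) :
    |(|a + b| ^ (p - 1) * (a + b) - |a| ^ (p - 1) * a - p * |a| ^ (p - 1) * b)| ≤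
      (p * |b| ^ (p - 1)) * |b| := by
  have key := my_key (f := fun y : ℝ => |y| ^ (p - 1) * y) (d := fun y : ℝ => p * |y| ^ (p - 1))
    (s := uIcc a (a + b)) (a := a) (b := b) (C := p * |b| ^ (p - 1)) (convex_uIcc _ _)
    (fun y _ => (my_hasDerivAt hp1 y).hasDerivWithinAt)
    (fun y hy => ?_) left_mem_uIcc right_mem_uIcc
  · simpa [mul_assoc] using key
  · have hya : |y - a| ≤ |b| := by
      rcases mem_uIcc.1 hy with ⟨h1, h2⟩ | ⟨h1, h2⟩ <;>
        · rw [abs_le]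
          have := le_abs_self b
          have := neg_abs_le b
          constructor <;> linarith
    have h1 : |(|y| ^ (p - 1) - |a| ^ (p - 1))| ≤ |(|y| - |a|)| ^ (p - 1) :=
      my_abs_rpow_sub (by linarith) (by linarith) (abs_nonneg y) (abs_nonneg a)
    have h2 : |(|y| - |a|)| ^ (p - 1) ≤ |y - a| ^ (p - 1) :=
      Real.rpow_le_rpow (abs_nonneg _) (abs_abs_sub_abs_le_abs_sub _ _) (by linarith)
    have h3 : |y - a| ^ (p - 1) ≤ |b| ^ (p - 1) :=
      Real.rpow_le_rpow (abs_nonneg _) hya (by linarith)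
    calc |p * |y| ^ (p - 1) - p * |a| ^ (p - 1)|
        = p * |(|y| ^ (p - 1) - |a| ^ (p - 1))| := by
          rw [← mul_sub, abs_mul, abs_of_pos (by linarith : (0:ℝ) < p)]
      _ ≤ p * |b| ^ (p - 1) := by
          have hp0 : (0:ℝ) ≤ p := by linarith
          exact mul_le_mul_of_nonneg_left (h1.trans (h2.trans h3)) hp0

lemma my_bound2 {p : ℝ} (hp1 : 1 < p) (hp2 : p ≤ 2) {a b : ℝ} (ha : 0 < a) (hb : |b| ≤ a / 2) :
    |(|a + b| ^ (p - 1) * (a + b) - |a| ^ (p - 1) * a - p * |a| ^ (p - 1) * b)| ≤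
      (p * (p - 1) * (a / 2) ^ (p - 2) * |b|) * |b| := by
  set s : Set ℝ := Icc (a - |b|) (a + |b|) with hs_def
  have hsub : ∀ y ∈ s, a / 2 ≤ y := by
    intro y hy
    have := hy.1
    linarith
  have hpos : ∀ y ∈ s, (0:ℝ) < y := fun y hy => lt_of_lt_of_le (by linarith) (hsub y hy)
  have ha2 : (0:ℝ) < a / 2 := by linarith
  -- Lipschitz bound for the derivative on s
  have hlip : ∀ y ∈ s, |p * |y| ^ (p - 1) - p * |a| ^ (p - 1)| ≤
      (p * (p - 1) * (a / 2) ^ (p - 2)) * |b| := by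
    intro y hy
    have hg : ∀ z ∈ s, HasDerivWithinAt (fun w : ℝ => p * |w| ^ (p - 1))
        (p * ((p - 1) * z ^ (p - 2))) s z := by
      intro z hz
      have hz0 : (0:ℝ) < z := hpos z hz
      have h1 : HasDerivAt (fun w : ℝ => w ^ (p - 1)) ((p - 1) * z ^ (p - 1 - 1)) z :=
        Real.hasDerivAt_rpow_const (Or.inl hz0.ne')
      have h2 : HasDerivAt (fun w : ℝ => p * w ^ (p - 1)) (p * ((p - 1) * z ^ (p - 2))) z := by
        have := h1.const_mul p
        simpa [show p - 1 - 1 = p - 2 by ring] using this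
      exact h2.hasDerivWithinAt.congr
        (fun w hw => by rw [abs_of_pos (hpos w hw)]) (by rw [abs_of_pos hz0])
    have hbound : ∀ z ∈ s, ‖p * ((p - 1) * z ^ (p - 2))‖ ≤ p * (p - 1) * (a / 2) ^ (p - 2) := by
      intro z hz
      have hz0 : (0:ℝ) < z := hpos z hz
      have h3 : z ^ (p - 2) ≤ (a / 2) ^ (p - 2) :=
        Real.rpow_le_rpow_of_nonpos ha2 (hsub z hz) (by linarith)
      rw [Real.norm_eq_abs, abs_of_nonneg (mul_nonneg (by linarith)
        (mul_nonneg (by linarith) (Real.rpow_nonneg hz0.le _)))]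
      have hpp : (0:ℝ) ≤ p * (p - 1) := by nlinarith
      calc p * ((p - 1) * z ^ (p - 2)) = p * (p - 1) * z ^ (p - 2) := by ring
        _ ≤ p * (p - 1) * (a / 2) ^ (p - 2) := mul_le_mul_of_nonneg_left h3 hpp
    have hmem_a : a ∈ s := by
      constructor <;> [linarith [abs_nonneg b]; linarith [abs_nonneg b]]
    have H := Convex.norm_image_sub_le_of_norm_hasDerivWithin_le hg hbound
      (convex_Icc _ _) hmem_a hy
    rw [Real.norm_eq_abs, Real.norm_eq_abs] at H
    have hya : |y - a| ≤ |b| := by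
      rw [abs_le]; constructor <;> [linarith [hy.1]; linarith [hy.2]]
    calc |p * |y| ^ (p - 1) - p * |a| ^ (p - 1)| ≤ p * (p - 1) * (a / 2) ^ (p - 2) * |y - a| := H
      _ ≤ (p * (p - 1) * (a / 2) ^ (p - 2)) * |b| :=
          mul_le_mul_of_nonneg_left hya (mul_nonneg (mul_nonneg (by linarith)
            (by linarith)) (Real.rpow_nonneg ha2.le _))
  -- now the outer MVT
  have hmem_a : a ∈ s := by
    constructor <;> [linarith [abs_nonneg b]; linarith [abs_nonneg b]]
  have hmem_ab : a + b ∈ s := by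
    constructor <;> [linarith [neg_abs_le b]; linarith [le_abs_self b]]
  have key := my_key (f := fun y : ℝ => |y| ^ (p - 1) * y) (d := fun y : ℝ => p * |y| ^ (p - 1))
    (s := s) (a := a) (b := b) (C := p * (p - 1) * (a / 2) ^ (p - 2) * |b|)
    (convex_Icc _ _) (fun y _ => (my_hasDerivAt hp1 y).hasDerivWithinAt)
    hlip hmem_a hmem_ab
  simpa [mul_assoc] using key

lemma my_bound2' {p : ℝ} (hp1 : 1 < p) (hp2 : p ≤ 2) {a b : ℝ} (ha : a ≠ 0)
    (hb : |b| ≤ |a| / 2) :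
    |(|a + b| ^ (p - 1) * (a + b) - |a| ^ (p - 1) * a - p * |a| ^ (p - 1) * b)| ≤
      (p * (p - 1) * (|a| / 2) ^ (p - 2) * |b|) * |b| := by
  rcases ha.lt_or_gt with hneg | hpos
  · have hE : |(-a) + (-b)| ^ (p - 1) * ((-a) + (-b)) - |(-a)| ^ (p - 1) * (-a) -
        p * |(-a)| ^ (p - 1) * (-b) =
        -(|a + b| ^ (p - 1) * (a + b) - |a| ^ (p - 1) * a - p * |a| ^ (p - 1) * b) := by
      rw [show (-a) + (-b) = -(a + b) by ring, abs_neg, abs_neg]; ring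
    have h2 := my_bound2 hp1 hp2 (a := -a) (b := -b) (by linarith)
      (by rw [abs_neg]; rw [abs_of_neg hneg] at hb; exact hb)
    rw [hE, abs_neg, abs_neg, ← abs_of_neg hneg] at h2
    exact h2
  · rw [abs_of_pos hpos] at hb
    have h := my_bound2 hp1 hp2 hpos hb
    rw [show a / 2 = |a| / 2 by rw [abs_of_pos hpos]] at h
    exact h




/-- Pointwise estimate: |f(a+b) − f(a) − f'(a)b| ≲_p min{|b|^p, |a|^{p-2}|b|^2} for a ≠ 0,
where f(a) = |a|^{p-1}a and f'(a) = p|a|^{p-1}, for 1 < p ≤ 2. -/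
theorem stmt_2 (p : ℝ) (hp1 : 1 < p) (hp2 : p ≤ 2) :
    ∃ C : ℝ, ∀ a b : ℝ, a ≠ 0 →
      |(|a + b| ^ (p - 1) * (a + b) - |a| ^ (p - 1) * a - p * |a| ^ (p - 1) * b)| ≤
        C * min (|b| ^ p) (|a| ^ (p - 2) * |b| ^ 2) := by
  refine ⟨(p + p * (p - 1)) * 2 ^ (2 - p), fun a b ha => ?_⟩
  have ha' : (0:ℝ) < |a| := abs_pos.2 ha
  have hp0 : (0:ℝ) < p := by linarith
  have h2p : (0:ℝ) < (2:ℝ) ^ (2 - p) := Real.rpow_pos_of_pos two_pos _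
  by_cases hb0 : b = 0
  · subst hb0
    simp [Real.zero_rpow hp0.ne']
  have hb' : (0:ℝ) < |b| := abs_pos.2 hb0
  have hsq : |b| ^ (2:ℕ) = |b| ^ ((2:ℕ):ℝ) := (Real.rpow_natCast _ 2).symm
  by_cases hb : |b| ≤ |a| / 2
  · -- small b : use second-order bound; min = |a|^(p-2)|b|^2
    have hYX : |a| ^ (p - 2) * |b| ^ (2:ℕ) ≤ |b| ^ p := by
      have h1 : |a| ^ (p - 2) ≤ |b| ^ (p - 2) :=
        Real.rpow_le_rpow_of_nonpos hb' (by linarith) (by linarith)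
      have h2 : |b| ^ (p - 2) * |b| ^ (2:ℕ) = |b| ^ p := by
        rw [hsq, ← Real.rpow_add hb']; norm_num
      calc |a| ^ (p - 2) * |b| ^ (2:ℕ) ≤ |b| ^ (p - 2) * |b| ^ (2:ℕ) :=
            mul_le_mul_of_nonneg_right h1 (by positivity)
        _ = |b| ^ p := h2
    rw [min_eq_right hYX]
    have hE := my_bound2' hp1 hp2 ha hb
    have hhalf : (|a| / 2) ^ (p - 2) = |a| ^ (p - 2) * 2 ^ (2 - p) := by
      rw [Real.div_rpow (abs_nonneg a) (by norm_num : (0:ℝ) ≤ 2), div_eq_mul_inv,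
        ← Real.rpow_neg (by norm_num : (0:ℝ) ≤ 2)]
      norm_num
    calc |(|a + b| ^ (p - 1) * (a + b) - |a| ^ (p - 1) * a - p * |a| ^ (p - 1) * b)|
        ≤ (p * (p - 1) * (|a| / 2) ^ (p - 2) * |b|) * |b| := hE
      _ = p * (p - 1) * 2 ^ (2 - p) * (|a| ^ (p - 2) * |b| ^ (2:ℕ)) := by
          rw [hhalf]; ring
      _ ≤ (p + p * (p - 1)) * 2 ^ (2 - p) * (|a| ^ (p - 2) * |b| ^ (2:ℕ)) := by
          have hY : (0:ℝ) ≤ |a| ^ (p - 2) * |b| ^ (2:ℕ) := by positivity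
          have : p * (p - 1) * 2 ^ (2 - p) ≤ (p + p * (p - 1)) * 2 ^ (2 - p) := by nlinarith
          exact mul_le_mul_of_nonneg_right this hY
  · -- large b : use first-order bound
    push_neg at hb
    have hE := my_bound1 hp1 hp2 a b
    have hEp : |(|a + b| ^ (p - 1) * (a + b) - |a| ^ (p - 1) * a - p * |a| ^ (p - 1) * b)|
        ≤ p * |b| ^ p := by
      have h2 : |b| ^ (p - 1) * |b| = |b| ^ p := by
        rw [← Real.rpow_add_one hb'.ne' (p - 1), sub_add_cancel]
      calc |(|a + b| ^ (p - 1) * (a + b) - |a| ^ (p - 1) * a - p * |a| ^ (p - 1) * b)|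
          ≤ (p * |b| ^ (p - 1)) * |b| := hE
        _ = p * |b| ^ p := by rw [mul_assoc, h2]
    have hminge : 2 ^ (p - 2) * |b| ^ p ≤ min (|b| ^ p) (|a| ^ (p - 2) * |b| ^ (2:ℕ)) := by
      refine le_min ?_ ?_
      · have h1 : (2:ℝ) ^ (p - 2) ≤ 1 := by
          have := Real.rpow_le_one_of_one_le_of_nonpos (by norm_num : (1:ℝ) ≤ 2)
            (by linarith : p - 2 ≤ 0)
          exact this
        have := mul_le_mul_of_nonneg_right h1 (Real.rpow_nonneg (abs_nonneg b) p)
        simpa using this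
      · have h1 : (2 * |b|) ^ (p - 2) ≤ |a| ^ (p - 2) :=
          Real.rpow_le_rpow_of_nonpos ha' (by linarith) (by linarith)
        have h2 : (2 * |b|) ^ (p - 2) = 2 ^ (p - 2) * |b| ^ (p - 2) :=
          Real.mul_rpow (by norm_num) (abs_nonneg b)
        have h3 : 2 ^ (p - 2) * |b| ^ p = (2 * |b|) ^ (p - 2) * |b| ^ (2:ℕ) := by
          rw [h2, hsq, mul_assoc, ← Real.rpow_add hb']; norm_num
        rw [h3]
        exact mul_le_mul_of_nonneg_right h1 (by positivity)
    have hCpos : (0:ℝ) ≤ (p + p * (p - 1)) * 2 ^ (2 - p) :=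
      mul_nonneg (by nlinarith) h2p.le
    calc |(|a + b| ^ (p - 1) * (a + b) - |a| ^ (p - 1) * a - p * |a| ^ (p - 1) * b)|
        ≤ p * |b| ^ p := hEp
      _ ≤ (p + p * (p - 1)) * |b| ^ p := by
          have h0 : (0:ℝ) ≤ |b| ^ p := Real.rpow_nonneg (abs_nonneg b) p
          nlinarith [mul_nonneg (mul_nonneg hp0.le (by linarith : (0:ℝ) ≤ p - 1)) h0]
      _ = (p + p * (p - 1)) * 2 ^ (2 - p) * (2 ^ (p - 2) * |b| ^ p) := by
          rw [show (p + p * (p - 1)) * 2 ^ (2 - p) * (2 ^ (p - 2) * |b| ^ p) =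
            (p + p * (p - 1)) * (2 ^ (2 - p) * 2 ^ (p - 2)) * |b| ^ p by ring,
            ← Real.rpow_add two_pos]
          norm_num
      _ ≤ (p + p * (p - 1)) * 2 ^ (2 - p) * min (|b| ^ p) (|a| ^ (p - 2) * |b| ^ (2:ℕ)) :=
          mul_le_mul_of_nonneg_left hminge hCpos
end

section
/- Let 1 < p ≤ 2, f(a) = |a|^{p-1}a, f'(a) = p|a|^{p-1}, and f(a,b) = min{|a|^{p-1}|b|, |a||b|^{p-1}}. Then for all real a, b, c: |a·(f(a+b+c) − f(a+b) − f'(a)c)| ≤ C(p)·(f(a,b) + f(a,c))·|c| for some constant C(p). -/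
open Real

open Real

lemma bern {p : ℝ} (hp : 1 ≤ p) {x y : ℝ} (hy : 0 < y) (hx : 0 ≤ x) :
    y ^ p + p * y ^ (p - 1) * (x - y) ≤ x ^ p := by
  have hs : (-1 : ℝ) ≤ x / y - 1 := by
    have : 0 ≤ x / y := div_nonneg hx hy.le
    linarith
  have key := one_add_mul_self_le_rpow_one_add hs hp
  have h1 : (1 + (x / y - 1)) = x / y := by ring
  rw [h1, Real.div_rpow hx hy.le] at key
  have hyp : (0:ℝ) < y ^ p := Real.rpow_pos_of_pos hy p
  have h2 : y ^ (p - 1) = y ^ p / y := Real.rpow_sub_one hy.ne' p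
  rw [h2]
  have key2 := mul_le_mul_of_nonneg_left key hyp.le
  have h3 : y ^ p * (x ^ p / y ^ p) = x ^ p := by field_simp
  rw [h3] at key2
  have h4 : y ^ p * (1 + p * (x / y - 1)) = y ^ p + p * (y ^ p / y) * (x - y) := by
    field_simp
  linarith [h4 ▸ key2]

lemma cbern {q : ℝ} (hq0 : 0 ≤ q) (hq1 : q ≤ 1) {x y : ℝ} (hy : 0 < y) (hx : 0 ≤ x) :
    x ^ q ≤ y ^ q + q * y ^ (q - 1) * (x - y) := by
  have hs : (-1 : ℝ) ≤ x / y - 1 := by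
    have : 0 ≤ x / y := div_nonneg hx hy.le
    linarith
  have key := rpow_one_add_le_one_add_mul_self hs hq0 hq1
  have h1 : (1 + (x / y - 1)) = x / y := by ring
  rw [h1, Real.div_rpow hx hy.le] at key
  have hyp : (0:ℝ) < y ^ q := Real.rpow_pos_of_pos hy q
  have h2 : y ^ (q - 1) = y ^ q / y := Real.rpow_sub_one hy.ne' q
  rw [h2]
  have key2 := mul_le_mul_of_nonneg_left key hyp.le
  have h3 : y ^ q * (x ^ q / y ^ q) = x ^ q := by field_simp
  rw [h3] at key2
  have h4 : y ^ q * (1 + q * (x / y - 1)) = y ^ q + q * (y ^ q / y) * (x - y) := by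
    field_simp
  linarith [h4 ▸ key2]

-- |x^q - y^q| ≤ y^(q-1) |x - y| for 0 ≤ x, 0 < y, 0 < q ≤ 1
lemma holder_sub {q : ℝ} (hq0 : 0 < q) (hq1 : q ≤ 1) {x y : ℝ} (hx : 0 ≤ x) (hy : 0 < y) :
    |x ^ q - y ^ q| ≤ y ^ (q - 1) * |x - y| := by
  have hyq1 : (0:ℝ) < y ^ (q - 1) := Real.rpow_pos_of_pos hy _
  rcases le_total y x with h | h
  · -- x ≥ y
    have hmono : y ^ q ≤ x ^ q := Real.rpow_le_rpow hy.le h hq0.le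
    rw [abs_of_nonneg (by linarith), abs_of_nonneg (by linarith)]
    have := cbern hq0.le hq1 hy hx
    nlinarith [Real.rpow_pos_of_pos hy (q - 1), mul_nonneg hyq1.le (sub_nonneg.2 h)]
  · -- x ≤ y : reduces to x * y^(q-1) ≤ x^q
    have hmono : x ^ q ≤ y ^ q := Real.rpow_le_rpow hx h hq0.le
    rw [abs_of_nonpos (by linarith), abs_of_nonpos (by linarith)]
    have hkey : x * y ^ (q - 1) ≤ x ^ q := by
      rcases eq_or_lt_of_le hx with h0 | h0
      · rw [← h0]; simp [Real.zero_rpow hq0.ne']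
      · have hanti : y ^ (q - 1) ≤ x ^ (q - 1) :=
          Real.rpow_le_rpow_of_nonpos h0 h (by linarith)
        have : x * y ^ (q - 1) ≤ x * x ^ (q - 1) :=
          mul_le_mul_of_nonneg_left hanti hx
        have hxq : x * x ^ (q - 1) = x ^ q := by
          rw [Real.rpow_sub_one h0.ne' q]; field_simp
        linarith
    have hyy : y ^ (q - 1) * y = y ^ q := by
      rw [Real.rpow_sub_one hy.ne' q]; field_simp
    nlinarith

-- for 0 ≤ y ≤ x : x^p - y^p ≤ p x^(p-1)(x-y)
lemma pow_diff_le {p : ℝ} (hp : 1 ≤ p) {x y : ℝ} (hy : 0 ≤ y) (hxy : y ≤ x) :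
    x ^ p - y ^ p ≤ p * x ^ (p - 1) * (x - y) := by
  rcases eq_or_lt_of_le (hy.trans hxy) with h0 | h0
  · have hx0 : x = 0 := h0.symm
    have hy0 : y = 0 := le_antisymm (hx0 ▸ hxy) hy
    simp [hx0, hy0]
  · have := bern hp h0 hy
    linarith

-- nonneg case of fdiff
lemma fdiff_nonneg {p : ℝ} (hp : 1 ≤ p) {x y : ℝ} (hx : 0 ≤ x) (hy : 0 ≤ y) :
    |x ^ p - y ^ p| ≤ p * (max x y) ^ (p - 1) * |x - y| := by
  rcases le_total y x with h | h
  · rw [max_eq_left h, abs_of_nonneg (sub_nonneg.2 (Real.rpow_le_rpow hy h (by linarith))),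
      abs_of_nonneg (sub_nonneg.2 h)]
    exact pow_diff_le hp hy h
  · rw [max_eq_right h, abs_sub_comm, abs_sub_comm x y,
      abs_of_nonneg (sub_nonneg.2 (Real.rpow_le_rpow hx h (by linarith))),
      abs_of_nonneg (sub_nonneg.2 h)]
    exact pow_diff_le hp hx h

-- |f x - f y| ≤ p (max |x| |y|)^(p-1) |x - y| with f t = |t|^(p-1) t
lemma fdiff {p : ℝ} (hp : 1 ≤ p) (x y : ℝ) :
    abs (|x| ^ (p - 1) * x - |y| ^ (p - 1) * y) ≤ p * (max |x| |y|) ^ (p - 1) * |x - y| := by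
  have key : ∀ u v : ℝ, 0 ≤ u → v ≤ 0 →
      abs (|u| ^ (p - 1) * u - |v| ^ (p - 1) * v) ≤ p * (max |u| |v|) ^ (p - 1) * |u - v| := by
    intro u v hu hv
    have hvv : |v| = -v := abs_of_nonpos hv
    have huu : |u| = u := abs_of_nonneg hu
    rw [huu, hvv]
    have hum : u ≤ max u (-v) := le_max_left _ _
    have hvm : -v ≤ max u (-v) := le_max_right _ _
    have hm0 : 0 ≤ max u (-v) := le_trans hu hum
    have h1 : u ^ (p - 1) ≤ (max u (-v)) ^ (p - 1) :=
      Real.rpow_le_rpow hu hum (by linarith)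
    have h2 : (-v) ^ (p - 1) ≤ (max u (-v)) ^ (p - 1) :=
      Real.rpow_le_rpow (by linarith) hvm (by linarith)
    have hup : 0 ≤ u ^ (p - 1) * u := mul_nonneg (Real.rpow_nonneg hu _) hu
    have hvp : 0 ≤ (-v) ^ (p - 1) * (-v) :=
      mul_nonneg (Real.rpow_nonneg (by linarith) _) (by linarith)
    rw [abs_of_nonneg (by nlinarith), abs_of_nonneg (by linarith : (0:ℝ) ≤ u - v)]
    have e1 : u ^ (p - 1) * u ≤ (max u (-v)) ^ (p - 1) * u :=
      mul_le_mul_of_nonneg_right h1 hu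
    have e2 : (-v) ^ (p - 1) * (-v) ≤ (max u (-v)) ^ (p - 1) * (-v) :=
      mul_le_mul_of_nonneg_right h2 (by linarith)
    have hM : 0 ≤ (max u (-v)) ^ (p - 1) * (u - v) := by nlinarith
    nlinarith
  rcases le_or_gt 0 x with hx | hx <;> rcases le_or_gt 0 y with hy | hy
  · have ex : |x| ^ (p - 1) * x = x ^ p := by
      rw [abs_of_nonneg hx]
      rcases eq_or_lt_of_le hx with h0 | h0
      · simp [← h0, Real.zero_rpow (by linarith : p ≠ 0)]
      · rw [Real.rpow_sub_one h0.ne' p]; field_simp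
    have ey : |y| ^ (p - 1) * y = y ^ p := by
      rw [abs_of_nonneg hy]
      rcases eq_or_lt_of_le hy with h0 | h0
      · simp [← h0, Real.zero_rpow (by linarith : p ≠ 0)]
      · rw [Real.rpow_sub_one h0.ne' p]; field_simp
    rw [ex, ey, abs_of_nonneg hx, abs_of_nonneg hy]
    exact fdiff_nonneg hp hx hy
  · exact key x y hx hy.le
  · have := key y x hy hx.le
    rw [abs_sub_comm, abs_sub_comm x y, max_comm]
    exact this
  · -- both negative: apply nonneg case to -x, -y
    have ex : |x| ^ (p - 1) * x = -((-x) ^ p) := by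
      rw [abs_of_neg hx, Real.rpow_sub_one (by linarith : (-x) ≠ 0) p]
      have : -x ≠ 0 := by linarith
      have : x ≠ 0 := by linarith
      field_simp
    have ey : |y| ^ (p - 1) * y = -((-y) ^ p) := by
      rw [abs_of_neg hy, Real.rpow_sub_one (by linarith : (-y) ≠ 0) p]
      have : -y ≠ 0 := by linarith
      have : y ≠ 0 := by linarith
      field_simp
    have := fdiff_nonneg hp (by linarith : (0:ℝ) ≤ -x) (by linarith : (0:ℝ) ≤ -y)
    rw [ex, ey, abs_of_neg hx, abs_of_neg hy]
    calc |-(-x) ^ p - -(-y) ^ p| = |(-x) ^ p - (-y) ^ p| := by rw [abs_sub_comm]; ring_nf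
      _ ≤ p * (max (-x) (-y)) ^ (p - 1) * |-x - -y| := this
      _ = p * (max (-x) (-y)) ^ (p - 1) * |x - y| := by rw [abs_sub_comm]; ring_nf


-- q ∈ (0,1], 0 ≤ b ≤ a  ⇒  a^q b ≤ a b^q
lemma min_side {q : ℝ} (hq0 : 0 < q) (hq1 : q ≤ 1) {a b : ℝ} (hb : 0 ≤ b) (hba : b ≤ a) :
    a ^ q * b ≤ a * b ^ q := by
  have ha : 0 ≤ a := hb.trans hba
  have h1 : b ^ (1 - q) ≤ a ^ (1 - q) := Real.rpow_le_rpow hb hba (by linarith)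
  have ea : a ^ q * a ^ (1 - q) = a := by
    rw [← Real.rpow_add' ha (by norm_num : q + (1 - q) ≠ 0)]
    norm_num
  have eb : b ^ q * b ^ (1 - q) = b := by
    rw [← Real.rpow_add' hb (by norm_num : q + (1 - q) ≠ 0)]
    norm_num
  calc a ^ q * b = a ^ q * (b ^ q * b ^ (1 - q)) := by rw [eb]
    _ ≤ a ^ q * (b ^ q * a ^ (1 - q)) := by
        have := mul_le_mul_of_nonneg_left h1 (Real.rpow_nonneg hb q)
        exact mul_le_mul_of_nonneg_left this (Real.rpow_nonneg ha q)
    _ = (a ^ q * a ^ (1 - q)) * b ^ q := by ring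
    _ = a * b ^ q := by rw [ea]

-- q ∈ (0,1], 0 ≤ a ≤ 4b  ⇒  a b^q ≤ 4 (a^q b)
lemma swap4 {q : ℝ} (hq0 : 0 < q) (hq1 : q ≤ 1) {a b : ℝ} (ha : 0 ≤ a) (hb : 0 ≤ b)
    (h : a ≤ 4 * b) : a * b ^ q ≤ 4 * (a ^ q * b) := by
  have h1 : a ^ (1 - q) ≤ (4 * b) ^ (1 - q) := Real.rpow_le_rpow ha h (by linarith)
  have h2 : (4 * b) ^ (1 - q) = (4:ℝ) ^ (1 - q) * b ^ (1 - q) :=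
    Real.mul_rpow (by norm_num) hb
  have h3 : (4:ℝ) ^ (1 - q) ≤ 4 := by
    calc (4:ℝ) ^ (1 - q) ≤ (4:ℝ) ^ (1:ℝ) :=
          Real.rpow_le_rpow_of_exponent_le (by norm_num) (by linarith)
      _ = 4 := Real.rpow_one 4
  have ea : a ^ q * a ^ (1 - q) = a := by
    rw [← Real.rpow_add' ha (by norm_num : q + (1 - q) ≠ 0)]; norm_num
  have eb : b ^ q * b ^ (1 - q) = b := by
    rw [← Real.rpow_add' hb (by norm_num : q + (1 - q) ≠ 0)]; norm_num
  have haq : 0 ≤ a ^ q := Real.rpow_nonneg ha q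
  have hbq : 0 ≤ b ^ q := Real.rpow_nonneg hb q
  have hb1q : 0 ≤ b ^ (1 - q) := Real.rpow_nonneg hb (1 - q)
  calc a * b ^ q = (a ^ q * a ^ (1 - q)) * b ^ q := by rw [ea]
    _ ≤ (a ^ q * ((4:ℝ) ^ (1 - q) * b ^ (1 - q))) * b ^ q := by
        have h4 := h2 ▸ h1
        have := mul_le_mul_of_nonneg_right (mul_le_mul_of_nonneg_left h4 haq) hbq
        linarith
    _ ≤ (a ^ q * (4 * b ^ (1 - q))) * b ^ q := by
        have := mul_le_mul_of_nonneg_right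
          (mul_le_mul_of_nonneg_left (mul_le_mul_of_nonneg_right h3 hb1q) haq) hbq
        linarith
    _ = 4 * (a ^ q * (b ^ q * b ^ (1 - q))) := by ring
    _ = 4 * (a ^ q * b) := by rw [eb]

set_option maxHeartbeats 1000000 in
lemma keypos (p : ℝ) (hp1 : 1 < p) (hp2 : p ≤ 2) {a : ℝ} (ha : 0 < a) (b c : ℝ) :
    |a * (|a + b + c| ^ (p - 1) * (a + b + c) - |a + b| ^ (p - 1) * (a + b) -
      p * |a| ^ (p - 1) * c)| ≤
    96 * (min (|a| ^ (p - 1) * |b|) (|a| * |b| ^ (p - 1)) +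
         min (|a| ^ (p - 1) * |c|) (|a| * |c| ^ (p - 1))) * |c| := by
  have hq0 : 0 < p - 1 := by linarith
  have hq1 : p - 1 ≤ 1 := by linarith
  have hp0 : 0 < p := by linarith
  have haa : |a| = a := abs_of_pos ha
  rw [haa]
  set Mb := min (a ^ (p - 1) * |b|) (a * |b| ^ (p - 1)) with hMbdef
  set Mc := min (a ^ (p - 1) * |c|) (a * |c| ^ (p - 1)) with hMcdef
  have hMb0 : 0 ≤ Mb := le_min
    (mul_nonneg (Real.rpow_nonneg ha.le _) (abs_nonneg b))
    (mul_nonneg ha.le (Real.rpow_nonneg (abs_nonneg b) _))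
  have hMc0 : 0 ≤ Mc := le_min
    (mul_nonneg (Real.rpow_nonneg ha.le _) (abs_nonneg c))
    (mul_nonneg ha.le (Real.rpow_nonneg (abs_nonneg c) _))
  have habs : ∀ g : ℝ, |a * g| = a * |g| := fun g => by rw [abs_mul, haa]
  rcases le_or_gt (2 * (|b| + |c|)) a with hB | hA
  · -- Case B : |b| + |c| ≤ a/2
    have hb2 : |b| ≤ a / 2 := by have := abs_nonneg c; linarith
    have hc2 : |c| ≤ a / 2 := by have := abs_nonneg b; linarith
    have hv : 0 < a + b := by have := neg_abs_le b; linarith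
    have hu : 0 < a + b + c := by have := neg_abs_le b; have := neg_abs_le c; linarith
    rw [abs_of_pos hv, abs_of_pos hu]
    have eu : (a + b + c) ^ (p - 1) * (a + b + c) = (a + b + c) ^ p := by
      rw [Real.rpow_sub_one hu.ne' p]; field_simp
    have ev : (a + b) ^ (p - 1) * (a + b) = (a + b) ^ p := by
      rw [Real.rpow_sub_one hv.ne' p]; field_simp
    rw [eu, ev]
    -- gradient inequalities
    have h1 := bern hp1.le hv hu.le
    have h2 := bern hp1.le hu hv.le
    have e1 : a + b + c - (a + b) = c := by ring
    have e2 : a + b - (a + b + c) = -c := by ring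
    rw [e1] at h1
    rw [e2] at h2
    -- hölder bounds on derivative differences
    have hvd := holder_sub hq0 hq1 hv.le ha
    have hud := holder_sub hq0 hq1 hu.le ha
    have e3 : a + b - a = b := by ring
    have e4 : a + b + c - a = b + c := by ring
    rw [e3] at hvd
    rw [e4] at hud
    have hud' : |(a + b + c) ^ (p - 1) - a ^ (p - 1)| ≤ a ^ (p - 1 - 1) * (|b| + |c|) := by
      calc |(a + b + c) ^ (p - 1) - a ^ (p - 1)| ≤ a ^ (p - 1 - 1) * |b + c| := hud
        _ ≤ a ^ (p - 1 - 1) * (|b| + |c|) :=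
            mul_le_mul_of_nonneg_left (abs_add_le b c) (Real.rpow_nonneg ha.le _)
    have hvd' : |(a + b) ^ (p - 1) - a ^ (p - 1)| ≤ a ^ (p - 1 - 1) * (|b| + |c|) := by
      calc |(a + b) ^ (p - 1) - a ^ (p - 1)| ≤ a ^ (p - 1 - 1) * |b| := hvd
        _ ≤ a ^ (p - 1 - 1) * (|b| + |c|) := by
            have := Real.rpow_nonneg ha.le (p - 1 - 1)
            have := abs_nonneg c
            nlinarith
    -- bound on g
    set E := a ^ (p - 1 - 1) * (|b| + |c|) * |c| with hEdef
    have hE0 : 0 ≤ E := by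
      have := Real.rpow_nonneg ha.le (p - 1 - 1)
      have := abs_nonneg b; have := abs_nonneg c
      positivity
    have hg : |(a + b + c) ^ p - (a + b) ^ p - p * a ^ (p - 1) * c| ≤ p * E := by
      rw [abs_le]
      have eu3 : ((a + b + c) ^ (p - 1) - a ^ (p - 1)) * c ≤ E := by
        calc ((a + b + c) ^ (p - 1) - a ^ (p - 1)) * c
            ≤ |((a + b + c) ^ (p - 1) - a ^ (p - 1)) * c| := le_abs_self _
          _ = |(a + b + c) ^ (p - 1) - a ^ (p - 1)| * |c| := abs_mul _ _
          _ ≤ a ^ (p - 1 - 1) * (|b| + |c|) * |c| :=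
              mul_le_mul_of_nonneg_right hud' (abs_nonneg c)
      have ev3 : -E ≤ ((a + b) ^ (p - 1) - a ^ (p - 1)) * c := by
        have h5 : -(|(a + b) ^ (p - 1) - a ^ (p - 1)| * |c|) ≤
            ((a + b) ^ (p - 1) - a ^ (p - 1)) * c := by
          rw [← abs_mul]; exact neg_abs_le _
        have h6 : |(a + b) ^ (p - 1) - a ^ (p - 1)| * |c| ≤ E :=
          mul_le_mul_of_nonneg_right hvd' (abs_nonneg c)
        linarith
      constructor
      · have := mul_le_mul_of_nonneg_left ev3 hp0.le
        nlinarith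
      · have := mul_le_mul_of_nonneg_left eu3 hp0.le
        nlinarith
    -- multiply by a
    rw [habs]
    have haE : a * (p * E) = p * (a ^ (p - 1) * |b| + a ^ (p - 1) * |c|) * |c| := by
      have h : a * a ^ (p - 1 - 1) = a ^ (p - 1) := by
        rw [Real.rpow_sub_one ha.ne' (p - 1)]; field_simp
      rw [hEdef]
      linear_combination (p * (|b| + |c|) * |c|) * h
    have step1 : a * |(a + b + c) ^ p - (a + b) ^ p - p * a ^ (p - 1) * c| ≤ a * (p * E) :=
      mul_le_mul_of_nonneg_left hg ha.le
    have hb' : a ^ (p - 1) * |b| ≤ Mb :=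
      le_min (le_refl _) (min_side hq0 hq1 (abs_nonneg b) (by linarith))
    have hc' : a ^ (p - 1) * |c| ≤ Mc :=
      le_min (le_refl _) (min_side hq0 hq1 (abs_nonneg c) (by linarith))
    have step2 : p * (a ^ (p - 1) * |b| + a ^ (p - 1) * |c|) * |c| ≤ 96 * (Mb + Mc) * |c| := by
      have hcn := abs_nonneg c
      have n1 : 0 ≤ a ^ (p - 1) * |b| := mul_nonneg (Real.rpow_nonneg ha.le _) (abs_nonneg b)
      have n2 : 0 ≤ a ^ (p - 1) * |c| := mul_nonneg (Real.rpow_nonneg ha.le _) (abs_nonneg c)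
      have s1 : p * (a ^ (p - 1) * |b| + a ^ (p - 1) * |c|) ≤ 96 * (Mb + Mc) := by nlinarith
      exact mul_le_mul_of_nonneg_right s1 hcn
    rw [haE] at step1
    linarith
  · -- Case A : a < 2(|b| + |c|)
    set m := max |b| |c| with hmdef
    have hbm : |b| ≤ m := le_max_left _ _
    have hcm : |c| ≤ m := le_max_right _ _
    have hm0 : 0 < m := by
      rcases le_or_gt m 0 with h | h
      · exfalso; have := abs_nonneg b; have := abs_nonneg c; linarith
      · exact h
    have ha4 : a ≤ 4 * m := by linarith
    -- crude bound on the difference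
    have hfd := fdiff hp1.le (a + b + c) (a + b)
    have e1 : a + b + c - (a + b) = c := by ring
    rw [e1] at hfd
    have hmax6 : max |a + b + c| |a + b| ≤ 6 * m := by
      have t1 : |a + b + c| ≤ |a| + |b| + |c| := by
        calc |a + b + c| ≤ |a + b| + |c| := abs_add_le _ _
          _ ≤ |a| + |b| + |c| := by have := abs_add_le a b; linarith
      have t2 : |a + b| ≤ |a| + |b| := abs_add_le a b
      rw [haa] at t1 t2
      apply max_le <;> linarith
    have hmax0 : 0 ≤ max |a + b + c| |a + b| := le_trans (abs_nonneg _) (le_max_left _ _)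
    have h6 : (max |a + b + c| |a + b|) ^ (p - 1) ≤ 6 * m ^ (p - 1) := by
      calc (max |a + b + c| |a + b|) ^ (p - 1) ≤ (6 * m) ^ (p - 1) :=
            Real.rpow_le_rpow hmax0 hmax6 hq0.le
        _ = (6:ℝ) ^ (p - 1) * m ^ (p - 1) := Real.mul_rpow (by norm_num) hm0.le
        _ ≤ 6 * m ^ (p - 1) := by
            have h61 : (6:ℝ) ^ (p - 1) ≤ (6:ℝ) ^ (1:ℝ) :=
              Real.rpow_le_rpow_of_exponent_le (by norm_num) hq1
            rw [Real.rpow_one] at h61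
            exact mul_le_mul_of_nonneg_right h61 (Real.rpow_nonneg hm0.le _)
    have ha6 : a ^ (p - 1) ≤ 6 * m ^ (p - 1) := by
      calc a ^ (p - 1) ≤ (6 * m) ^ (p - 1) :=
            Real.rpow_le_rpow ha.le (by linarith) hq0.le
        _ = (6:ℝ) ^ (p - 1) * m ^ (p - 1) := Real.mul_rpow (by norm_num) hm0.le
        _ ≤ 6 * m ^ (p - 1) := by
            have h61 : (6:ℝ) ^ (p - 1) ≤ (6:ℝ) ^ (1:ℝ) :=
              Real.rpow_le_rpow_of_exponent_le (by norm_num) hq1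
            rw [Real.rpow_one] at h61
            exact mul_le_mul_of_nonneg_right h61 (Real.rpow_nonneg hm0.le _)
    have hg : |(|a + b + c| ^ (p - 1) * (a + b + c) - |a + b| ^ (p - 1) * (a + b) -
        p * a ^ (p - 1) * c)| ≤ 12 * p * m ^ (p - 1) * |c| := by
      have t0 : |(|a + b + c| ^ (p - 1) * (a + b + c) - |a + b| ^ (p - 1) * (a + b) -
          p * a ^ (p - 1) * c)|
          ≤ abs (|a + b + c| ^ (p - 1) * (a + b + c) - |a + b| ^ (p - 1) * (a + b)) +
            |p * a ^ (p - 1) * c| := abs_sub _ _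
      have t1 : |p * a ^ (p - 1) * c| = p * a ^ (p - 1) * |c| := by
        rw [abs_mul, abs_mul, abs_of_pos hp0, abs_of_nonneg (Real.rpow_nonneg ha.le _)]
      have t2 : p * (max |a + b + c| |a + b|) ^ (p - 1) * |c| ≤ 6 * (p * m ^ (p - 1) * |c|) := by
        have := mul_le_mul_of_nonneg_right (mul_le_mul_of_nonneg_left h6 hp0.le) (abs_nonneg c)
        linarith
      have t3 : p * a ^ (p - 1) * |c| ≤ 6 * (p * m ^ (p - 1) * |c|) := by
        have := mul_le_mul_of_nonneg_right (mul_le_mul_of_nonneg_left ha6 hp0.le) (abs_nonneg c)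
        linarith
      rw [t1] at t0
      linarith
    rw [habs]
    have step1 := mul_le_mul_of_nonneg_left hg ha.le
    have hswap : a * m ^ (p - 1) ≤ 4 * (Mb + Mc) := by
      rcases le_total |c| |b| with h | h
      · have hm : m = |b| := max_eq_left h
        rw [hm]
        have k1 : a * |b| ^ (p - 1) ≤ 4 * (a ^ (p - 1) * |b|) :=
          swap4 hq0 hq1 ha.le (abs_nonneg b) (by linarith)
        have k2 : a * |b| ^ (p - 1) ≤ 4 * Mb := by
          rcases min_choice (a ^ (p - 1) * |b|) (a * |b| ^ (p - 1)) with hmin | hmin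
          · rw [hMbdef, hmin]; linarith
          · rw [hMbdef, hmin]; nlinarith [mul_nonneg ha.le (Real.rpow_nonneg (abs_nonneg b) (p-1))]
        linarith
      · have hm : m = |c| := max_eq_right h
        rw [hm]
        have k1 : a * |c| ^ (p - 1) ≤ 4 * (a ^ (p - 1) * |c|) :=
          swap4 hq0 hq1 ha.le (abs_nonneg c) (by linarith)
        have k2 : a * |c| ^ (p - 1) ≤ 4 * Mc := by
          rcases min_choice (a ^ (p - 1) * |c|) (a * |c| ^ (p - 1)) with hmin | hmin
          · rw [hMcdef, hmin]; linarith
          · rw [hMcdef, hmin]; nlinarith [mul_nonneg ha.le (Real.rpow_nonneg (abs_nonneg c) (p-1))]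
        linarith
    have final : a * (12 * p * m ^ (p - 1) * |c|) ≤ 96 * (Mb + Mc) * |c| := by
      have h1 : a * (12 * p * m ^ (p - 1) * |c|) = 12 * p * (a * m ^ (p - 1)) * |c| := by ring
      rw [h1]
      have h2 : 12 * p * (a * m ^ (p - 1)) ≤ 12 * p * (4 * (Mb + Mc)) :=
        mul_le_mul_of_nonneg_left hswap (by linarith)
      have h3 : 12 * p * (4 * (Mb + Mc)) ≤ 96 * (Mb + Mc) := by nlinarith
      exact mul_le_mul_of_nonneg_right (le_trans h2 h3) (abs_nonneg c)
    linarith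


/-- Pointwise estimate: |a(f(a+b+c) − f(a+b) − f'(a)c)| ≲_p (f(a,b) + f(a,c))|c|,
where f(a) = |a|^{p-1}a, f'(a) = p|a|^{p-1} and f(a,b) = min{|a|^{p-1}|b|, |a||b|^{p-1}},
for 1 < p ≤ 2. -/
theorem stmt_3 (p : ℝ) (hp1 : 1 < p) (hp2 : p ≤ 2) :
    ∃ C : ℝ, ∀ a b c : ℝ,
      |a * (|a + b + c| ^ (p - 1) * (a + b + c) - |a + b| ^ (p - 1) * (a + b) -
        p * |a| ^ (p - 1) * c)| ≤
      C * (min (|a| ^ (p - 1) * |b|) (|a| * |b| ^ (p - 1)) +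
           min (|a| ^ (p - 1) * |c|) (|a| * |c| ^ (p - 1))) * |c| := by
  refine ⟨96, fun a b c => ?_⟩
  rcases lt_trichotomy a 0 with ha | ha | ha
  · have h := keypos p hp1 hp2 (neg_pos.2 ha) (-b) (-c)
    have e1 : -a + -b + -c = -(a + b + c) := by ring
    have e2 : -a + -b = -(a + b) := by ring
    rw [e1, e2] at h
    simp only [abs_neg] at h
    have e3 : -a * (|a + b + c| ^ (p - 1) * -(a + b + c) - |a + b| ^ (p - 1) * -(a + b) -
        p * |a| ^ (p - 1) * -c) =
        a * (|a + b + c| ^ (p - 1) * (a + b + c) - |a + b| ^ (p - 1) * (a + b) -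
        p * |a| ^ (p - 1) * c) := by ring
    rw [e3] at h
    exact h
  · rw [ha]
    rw [zero_mul, abs_zero]
    positivity
  · exact keypos p hp1 hp2 ha b c
end

section
/- Let J ∈ ℕ, 1 < p ≤ 2, and let a_1,…,a_J ≥ 0 be nonnegative reals. Suppose i ∈ {1,…,J} satisfies a_i < max_{j≠i} a_j. Then ∑_{j≠k} min(a_j^{p-1}a_k, a_j a_k^{p-1}) + ∑_{j≠i} a_i^{p-1} a_j ≤ C(J,p) · ( ∑_{j,k,i distinct, a_j ≥ a_k ≥ a_i} a_j^{p-1} a_k + ∑_{j≠i, a_j ≥ a_i} a_j a_i^{p-1} ) for a constant C(J,p). -/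
lemma stmt_4_aux {p x y : ℝ} (hp1 : 1 < p) (hp2 : p ≤ 2) (hx : 0 ≤ x) (hxy : x ≤ y) :
    y ^ (p - 1) * x ≤ y * x ^ (p - 1) := by
  rcases eq_or_lt_of_le hx with h0 | hx
  · simp [← h0, Real.zero_rpow (show p - 1 ≠ 0 by linarith)]
  · have hy : 0 < y := lt_of_lt_of_le hx hxy
    have ht : 1 ≤ y / x := (one_le_div hx).2 hxy
    have h1 : (y / x) ^ (p - 1) ≤ y / x := by
      calc (y / x) ^ (p - 1) ≤ (y / x) ^ (1 : ℝ) :=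
            Real.rpow_le_rpow_of_exponent_le ht (by linarith)
        _ = y / x := Real.rpow_one _
    have hyx : (y / x) * x = y := by field_simp
    calc y ^ (p - 1) * x = ((y / x) * x) ^ (p - 1) * x := by rw [hyx]
      _ = (y / x) ^ (p - 1) * x ^ (p - 1) * x := by
          rw [Real.mul_rpow (by positivity) hx.le]
      _ ≤ (y / x) * x ^ (p - 1) * x :=
          mul_le_mul_of_nonneg_right
            (mul_le_mul_of_nonneg_right h1 (Real.rpow_nonneg hx.le _)) hx.le
      _ = y * x ^ (p - 1) := by rw [mul_right_comm, hyx]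

/-- For nonnegative a₁,…,a_J with a_i < max_{j≠i} a_j (i.e. there is j ≠ i with a_i < a_j):
∑_{j≠k} min(a_j^{p-1}a_k, a_j a_k^{p-1}) + ∑_{j≠i} a_i^{p-1}a_j
  ≲_{J,p} ∑_{j,k,i distinct, a_j ≥ a_k ≥ a_i} a_j^{p-1}a_k + ∑_{j≠i, a_j ≥ a_i} a_j a_i^{p-1}. -/
theorem stmt_4 (J : ℕ) (p : ℝ) (hp1 : 1 < p) (hp2 : p ≤ 2) :
    ∃ C : ℝ, ∀ a : Fin J → ℝ, (∀ i, 0 ≤ a i) →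
      ∀ i : Fin J, (∃ j, j ≠ i ∧ a i < a j) →
      (∑ j, ∑ k, if j ≠ k then min (a j ^ (p - 1) * a k) (a j * a k ^ (p - 1)) else 0) +
        (∑ j, if j ≠ i then a i ^ (p - 1) * a j else 0) ≤
      C * ((∑ j, ∑ k, if j ≠ k ∧ j ≠ i ∧ k ≠ i ∧ a i ≤ a k ∧ a k ≤ a j
              then a j ^ (p - 1) * a k else 0) +
           (∑ j, if j ≠ i ∧ a i ≤ a j then a j * a i ^ (p - 1) else 0)) := by
  refine ⟨(J : ℝ) * J + J, ?_⟩
  intro a ha i hex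
  obtain ⟨j₀, hj₀i, hj₀⟩ := hex
  have hp1' : (0:ℝ) ≤ p - 1 := by linarith
  set S1 : ℝ := ∑ j, ∑ k, if j ≠ k ∧ j ≠ i ∧ k ≠ i ∧ a i ≤ a k ∧ a k ≤ a j
      then a j ^ (p - 1) * a k else 0 with hS1def
  set S2 : ℝ := ∑ j, if j ≠ i ∧ a i ≤ a j then a j * a i ^ (p - 1) else 0 with hS2def
  have hterm1 : ∀ j k : Fin J,
      0 ≤ (if j ≠ k ∧ j ≠ i ∧ k ≠ i ∧ a i ≤ a k ∧ a k ≤ a j then a j ^ (p - 1) * a k else 0) := by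
    intro j k; split
    · exact mul_nonneg (Real.rpow_nonneg (ha j) _) (ha k)
    · exact le_rfl
  have hterm2 : ∀ j : Fin J,
      0 ≤ (if j ≠ i ∧ a i ≤ a j then a j * a i ^ (p - 1) else 0) := by
    intro j; split
    · exact mul_nonneg (ha j) (Real.rpow_nonneg (ha i) _)
    · exact le_rfl
  have hS1nn : 0 ≤ S1 :=
    Finset.sum_nonneg fun j _ => Finset.sum_nonneg fun k _ => hterm1 j k
  have hS2nn : 0 ≤ S2 := Finset.sum_nonneg fun j _ => hterm2 j
  -- single terms of S2
  have hS2 : ∀ j : Fin J, j ≠ i → a i ≤ a j → a j * a i ^ (p - 1) ≤ S2 := by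
    intro j hji hij
    have := Finset.single_le_sum (f := fun j => if j ≠ i ∧ a i ≤ a j then a j * a i ^ (p - 1) else 0)
      (fun k _ => hterm2 k) (Finset.mem_univ j)
    simpa [hji, hij] using this
  -- single terms of S1
  have hS1 : ∀ j k : Fin J, j ≠ k → j ≠ i → k ≠ i → a i ≤ a k → a k ≤ a j →
      a j ^ (p - 1) * a k ≤ S1 := by
    intro j k h1 h2 h3 h4 h5
    have hinner : a j ^ (p - 1) * a k ≤
        ∑ k', if j ≠ k' ∧ j ≠ i ∧ k' ≠ i ∧ a i ≤ a k' ∧ a k' ≤ a j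
          then a j ^ (p - 1) * a k' else 0 := by
      have := Finset.single_le_sum
        (f := fun k' => if j ≠ k' ∧ j ≠ i ∧ k' ≠ i ∧ a i ≤ a k' ∧ a k' ≤ a j
          then a j ^ (p - 1) * a k' else 0) (fun k' _ => hterm1 j k') (Finset.mem_univ k)
      simpa [h1, h2, h3, h4, h5] using this
    have houter : (∑ k', if j ≠ k' ∧ j ≠ i ∧ k' ≠ i ∧ a i ≤ a k' ∧ a k' ≤ a j
          then a j ^ (p - 1) * a k' else 0) ≤ S1 :=
      Finset.single_le_sum
        (f := fun j' => ∑ k', if j' ≠ k' ∧ j' ≠ i ∧ k' ≠ i ∧ a i ≤ a k' ∧ a k' ≤ a j'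
          then a j' ^ (p - 1) * a k' else 0)
        (fun j' _ => Finset.sum_nonneg fun k' _ => hterm1 j' k') (Finset.mem_univ j)
    linarith
  -- key pointwise bound
  have K : ∀ j k : Fin J, j ≠ k → a k ≤ a j → a j ^ (p - 1) * a k ≤ S1 + S2 := by
    intro j k hjk hkj
    by_cases hki : k = i
    · subst hki
      have h1 : a j ^ (p - 1) * a k ≤ a j * a k ^ (p - 1) := stmt_4_aux hp1 hp2 (ha k) hkj
      have h2 := hS2 j hjk hkj
      linarith
    · by_cases hji : j = i
      · subst hji
        have h1 : a j ^ (p - 1) * a k ≤ a j ^ (p - 1) * a j₀ :=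
          mul_le_mul_of_nonneg_left (hkj.trans hj₀.le) (Real.rpow_nonneg (ha j) _)
        have h2 := hS2 j₀ hj₀i hj₀.le
        have h3 : a j ^ (p - 1) * a j₀ = a j₀ * a j ^ (p - 1) := mul_comm _ _
        linarith
      · by_cases hik : a i ≤ a k
        · have := hS1 j k hjk hji hki hik hkj
          linarith
        · push_neg at hik
          by_cases hij : a i ≤ a j
          · have h1 : a j ^ (p - 1) * a k ≤ a j ^ (p - 1) * a i :=
              mul_le_mul_of_nonneg_left hik.le (Real.rpow_nonneg (ha j) _)
            have h2 : a j ^ (p - 1) * a i ≤ a j * a i ^ (p - 1) :=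
              stmt_4_aux hp1 hp2 (ha i) hij
            have h3 := hS2 j hji hij
            linarith
          · push_neg at hij
            have h1 : a j ^ (p - 1) * a k ≤ a i ^ (p - 1) * a j₀ := by
              apply mul_le_mul
              · exact Real.rpow_le_rpow (ha j) hij.le hp1'
              · exact (hik.trans hj₀).le
              · exact ha k
              · exact Real.rpow_nonneg (ha i) _
            have h2 := hS2 j₀ hj₀i hj₀.le
            have h3 : a i ^ (p - 1) * a j₀ = a j₀ * a i ^ (p - 1) := mul_comm _ _
            linarith
  have hT : ∀ j k : Fin J,
      (if j ≠ k then min (a j ^ (p - 1) * a k) (a j * a k ^ (p - 1)) else 0) ≤ S1 + S2 := by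
    intro j k
    split
    · rename_i h
      rcases le_total (a k) (a j) with hkj | hjk
      · exact (min_le_left _ _).trans (K j k h hkj)
      · have := K k j (Ne.symm h) hjk
        have hm : min (a j ^ (p - 1) * a k) (a j * a k ^ (p - 1)) ≤ a k ^ (p - 1) * a j := by
          rw [mul_comm (a k ^ (p - 1))]
          exact min_le_right _ _
        linarith
    · linarith
  have hU : ∀ j : Fin J, (if j ≠ i then a i ^ (p - 1) * a j else 0) ≤ S1 + S2 := by
    intro j
    split
    · rename_i hji
      by_cases hij : a i ≤ a j
      · have h2 := hS2 j hji hij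
        have : a i ^ (p - 1) * a j = a j * a i ^ (p - 1) := mul_comm _ _
        linarith
      · push_neg at hij
        have h1 : a i ^ (p - 1) * a j ≤ a i ^ (p - 1) * a j₀ :=
          mul_le_mul_of_nonneg_left (hij.le.trans hj₀.le) (Real.rpow_nonneg (ha i) _)
        have h2 := hS2 j₀ hj₀i hj₀.le
        have h3 : a i ^ (p - 1) * a j₀ = a j₀ * a i ^ (p - 1) := mul_comm _ _
        linarith
    · linarith
  have hL1 : (∑ j, ∑ k, if j ≠ k then min (a j ^ (p - 1) * a k) (a j * a k ^ (p - 1)) else 0)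
      ≤ (J : ℝ) * J * (S1 + S2) := by
    calc (∑ j, ∑ k, if j ≠ k then min (a j ^ (p - 1) * a k) (a j * a k ^ (p - 1)) else 0)
        ≤ ∑ _j : Fin J, ∑ _k : Fin J, (S1 + S2) :=
          Finset.sum_le_sum fun j _ => Finset.sum_le_sum fun k _ => hT j k
      _ = (J : ℝ) * J * (S1 + S2) := by
          simp [Finset.sum_const, nsmul_eq_mul]; ring
  have hL2 : (∑ j, if j ≠ i then a i ^ (p - 1) * a j else 0) ≤ (J : ℝ) * (S1 + S2) := by
    calc (∑ j, if j ≠ i then a i ^ (p - 1) * a j else 0)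
        ≤ ∑ _j : Fin J, (S1 + S2) := Finset.sum_le_sum fun j _ => hU j
      _ = (J : ℝ) * (S1 + S2) := by simp [Finset.sum_const, nsmul_eq_mul]; ring
  have : ((J : ℝ) * J + J) * (S1 + S2) = (J:ℝ)*J*(S1+S2) + (J:ℝ)*(S1+S2) := by ring
  linarith
end

section
/- Let J ≥ 2, let A be a real symmetric J×J matrix, and assume A has no nonzero kernel element in [0,∞)^J (i.e., A·c = 0 with c ∈ [0,∞)^J implies c = 0). Then there exists a vector β ∈ ℝ^J such that every component of A·β is strictly positive. -/
open Matrix RealInnerProductSpace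


/-- If a real symmetric J×J matrix (J ≥ 2) has no nonzero kernel element in [0,∞)^J,
then there exists β ∈ ℝ^J with Aβ ∈ (0,∞)^J. -/
theorem stmt_5 (J : ℕ) (hJ : 2 ≤ J) (A : Matrix (Fin J) (Fin J) ℝ)
    (hA : A.IsSymm)
    (hker : ∀ c : Fin J → ℝ, A.mulVec c = 0 → (∀ i, 0 ≤ c i) → c = 0) :
    ∃ β : Fin J → ℝ, ∀ i, 0 < A.mulVec β i := by
  classical
  -- symmetry of the bilinear form
  have hsym : ∀ w z : Fin J → ℝ, A.mulVec w ⬝ᵥ z = w ⬝ᵥ A.mulVec z := by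
    intro w z
    calc A *ᵥ w ⬝ᵥ z = z ⬝ᵥ A *ᵥ w := dotProduct_comm _ _
    _ = z ᵥ* A ⬝ᵥ w := dotProduct_mulVec _ _ _
    _ = Aᵀ *ᵥ z ⬝ᵥ w := by rw [Matrix.mulVec_transpose]
    _ = A *ᵥ z ⬝ᵥ w := by rw [hA.eq]
    _ = w ⬝ᵥ A *ᵥ z := dotProduct_comm _ _
  -- the kernel, as a set, is closed and convex, and disjoint from the simplex
  have hdisj : Disjoint (stdSimplex ℝ (Fin J))
      ((LinearMap.ker A.mulVecLin : Submodule ℝ (Fin J → ℝ)) : Set (Fin J → ℝ)) := by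
    rw [Set.disjoint_left]
    rintro c ⟨hc0, hc1⟩ hck
    have hAc : A.mulVec c = 0 := hck
    have : c = 0 := hker c hAc hc0
    rw [this] at hc1
    simp at hc1
  obtain ⟨f, u, v, hfu, huv, hvf⟩ :=
    geometric_hahn_banach_compact_closed (convex_stdSimplex ℝ (Fin J))
      (isCompact_stdSimplex ℝ (Fin J))
      ((LinearMap.ker A.mulVecLin : Submodule ℝ (Fin J → ℝ)).convex)
      (Submodule.closed_of_finiteDimensional _) hdisj
  -- f vanishes on the kernel
  have hf0 : ∀ c : Fin J → ℝ, A.mulVec c = 0 → f c = 0 := by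
    intro c hc
    by_contra h
    have ht : ∀ t : ℝ, v < t * f c := by
      intro t
      have : (t • c) ∈ (LinearMap.ker A.mulVecLin : Submodule ℝ (Fin J → ℝ)) := by
        simp [LinearMap.mem_ker, Matrix.mulVecLin_apply, Matrix.mulVec_smul, hc]
      simpa [mul_comm] using hvf _ this
    have := ht ((v - 1) / f c)
    rw [div_mul_cancel₀ _ h] at this
    linarith
  have hv0 : v < 0 := by
    have h0 : (0 : Fin J → ℝ) ∈ (LinearMap.ker A.mulVecLin : Submodule ℝ (Fin J → ℝ)) := by
      simp
    simpa using hvf _ h0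
  -- the representing vector of f
  set b : Fin J → ℝ := fun i => f (Pi.single i 1) with hb
  have hrep : ∀ c : Fin J → ℝ, f c = ∑ i, c i * b i := by
    intro c
    have hc : c = ∑ i, c i • (Pi.single i 1 : Fin J → ℝ) := by
      funext j
      simp [Finset.sum_apply, Pi.single_apply]
    conv_lhs => rw [hc]
    simp [hb, smul_eq_mul]
  -- each b i is negative
  have hbneg : ∀ i, b i < 0 := by
    intro i
    have hmem : Pi.single i (1 : ℝ) ∈ stdSimplex ℝ (Fin J) := by
      constructor
      · intro j
        by_cases h : j = i <;> simp [Pi.single_apply, h]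
      · simp [Pi.single_apply]
    have := hfu _ hmem
    calc b i < u := this
    _ < v := huv
    _ < 0 := hv0
  -- move to Euclidean space to use orthogonality
  let T : EuclideanSpace ℝ (Fin J) →ₗ[ℝ] EuclideanSpace ℝ (Fin J) := Matrix.toEuclideanLin A
  have hTapp : ∀ x : EuclideanSpace ℝ (Fin J), (T x).ofLp = A.mulVec x.ofLp := fun _ => rfl
  have hinner : ∀ x y : EuclideanSpace ℝ (Fin J), (inner ℝ x y : ℝ) = x.ofLp ⬝ᵥ y.ofLp := by
    intro x y
    simp [PiLp.inner_apply, RCLike.inner_apply, dotProduct, mul_comm]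
  -- b is orthogonal to ker T
  have hbmem : (WithLp.toLp 2 b : EuclideanSpace ℝ (Fin J)) ∈ (LinearMap.ker T)ᗮ := by
    refine (Submodule.mem_orthogonal (LinearMap.ker T) _).mpr ?_
    intro c hc
    have hc' : A.mulVec c.ofLp = 0 := by
      have := congrArg WithLp.ofLp (LinearMap.mem_ker.mp hc)
      rw [hTapp] at this
      simpa using this
    rw [hinner]
    have := hf0 c.ofLp hc'
    rw [hrep c.ofLp] at this
    simpa [dotProduct] using this
  -- (range T)ᗮ ≤ ker T by symmetry
  have hrk : (LinearMap.range T)ᗮ ≤ LinearMap.ker T := by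
    intro z hz
    replace hz := (Submodule.mem_orthogonal (LinearMap.range T) z).mp hz
    have hz' : ∀ w : EuclideanSpace ℝ (Fin J), (inner ℝ w (T z) : ℝ) = 0 := by
      intro w
      have h1 : (inner ℝ (T w) z : ℝ) = 0 := hz (T w) (LinearMap.mem_range_self T w)
      rw [hinner] at h1 ⊢
      rw [hTapp] at h1 ⊢
      rw [← hsym w.ofLp z.ofLp]
      exact h1
    have : (inner ℝ (T z) (T z) : ℝ) = 0 := hz' (T z)
    rw [LinearMap.mem_ker]
    exact inner_self_eq_zero.mp this
  -- hence b ∈ range T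
  have hbr : (WithLp.toLp 2 b : EuclideanSpace ℝ (Fin J)) ∈ LinearMap.range T := by
    have h1 : (LinearMap.ker T)ᗮ ≤ ((LinearMap.range T)ᗮ)ᗮ :=
      Submodule.orthogonal_le hrk
    have h2 : ((LinearMap.range T)ᗮ)ᗮ = LinearMap.range T :=
      Submodule.orthogonal_orthogonal _
    rw [← h2]
    exact h1 hbmem
  obtain ⟨x, hx⟩ := hbr
  refine ⟨-x.ofLp, fun i => ?_⟩
  have hx' : A.mulVec x.ofLp = b := by
    have := congrArg WithLp.ofLp hx
    rw [hTapp] at this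
    simpa using this
  have : A.mulVec (-x.ofLp) = -b := by
    rw [Matrix.mulVec_neg, hx']
  rw [this]
  simpa using hbneg i
end

section
/- Let J ≥ 2, D > 0, and let A be a real symmetric J×J matrix with no nonzero kernel element in [0,∞)^J. Then there exist constants 0 < c ≤ C such that for every λ = (λ_1,…,λ_J) ∈ (0,∞)^J, c·(max_i λ_i)^D ≤ |A·λ^D| ≤ C·(max_i λ_i)^D, where λ^D := (λ_1^D, …, λ_J^D) and |·| is the Euclidean norm. -/
/-- If a real symmetric J×J matrix (J ≥ 2) has no nonzero kernel element in [0,∞)^J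
and D > 0, then |A·λ^D| ≍ (max_i λ_i)^D uniformly over λ ∈ (0,∞)^J, with the
Euclidean norm and componentwise powers λ^D.  (The maximum is encoded by an
arbitrary index i₀ achieving it.) -/
theorem stmt_6 (J : ℕ) (hJ : 2 ≤ J) (D : ℝ) (hD : 0 < D)
    (A : Matrix (Fin J) (Fin J) ℝ) (hA : A.IsSymm)
    (hker : ∀ c : Fin J → ℝ, A.mulVec c = 0 → (∀ i, 0 ≤ c i) → c = 0) :
    ∃ c C : ℝ, 0 < c ∧ c ≤ C ∧
      ∀ l : Fin J → ℝ, (∀ i, 0 < l i) →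
        ∀ i₀ : Fin J, (∀ i, l i ≤ l i₀) →
          c * l i₀ ^ D ≤ Real.sqrt (∑ i, (A.mulVec (fun j => l j ^ D) i) ^ 2) ∧
          Real.sqrt (∑ i, (A.mulVec (fun j => l j ^ D) i) ^ 2) ≤ C * l i₀ ^ D := by
  set f : (Fin J → ℝ) → ℝ := fun x => Real.sqrt (∑ i, (A.mulVec x i) ^ 2) with hf
  have hcont : Continuous f := by
    apply Real.continuous_sqrt.comp
    apply continuous_finset_sum
    intro i _
    have : Continuous fun x : Fin J → ℝ => A.mulVec x i := by
      simp only [Matrix.mulVec, dotProduct]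
      exact continuous_finset_sum _ fun j _ => (continuous_const.mul (continuous_apply j))
    exact this.pow 2
  have hhom : ∀ (t : ℝ), 0 ≤ t → ∀ x, f (t • x) = t * f x := by
    intro t ht x
    have h1 : ∀ i, A.mulVec (t • x) i = t * A.mulVec x i := by
      intro i; rw [Matrix.mulVec_smul]; rfl
    simp only [hf, h1, mul_pow, ← Finset.mul_sum]
    rw [Real.sqrt_mul (sq_nonneg t), Real.sqrt_sq ht]
  set K : Set (Fin J → ℝ) := {x | (∀ i, 0 ≤ x i ∧ x i ≤ 1) ∧ ∃ i, x i = 1} with hK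
  have hKcomp : IsCompact K := by
    have h1 : K = (Set.Icc (0 : Fin J → ℝ) 1) ∩ (⋃ i, {x : Fin J → ℝ | x i = 1}) := by
      ext x
      simp [hK, Set.mem_Icc, Pi.le_def, forall_and]
    rw [h1]
    exact isCompact_Icc.inter_right
      (isClosed_iUnion_of_finite fun i => isClosed_eq (continuous_apply i) continuous_const)
  have hKne : K.Nonempty := ⟨fun _ => 1, fun i => ⟨zero_le_one, le_refl 1⟩, ⟨0, by omega⟩, rfl⟩
  obtain ⟨x₀, hx₀K, hx₀⟩ := hKcomp.exists_isMinOn hKne hcont.continuousOn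
  obtain ⟨x₁, hx₁K, hx₁⟩ := hKcomp.exists_isMaxOn hKne hcont.continuousOn
  have hfpos : 0 < f x₀ := by
    have hne : A.mulVec x₀ ≠ 0 := by
      intro h
      have := hker x₀ h (fun i => (hx₀K.1 i).1)
      obtain ⟨i, hi⟩ := hx₀K.2
      rw [this] at hi
      simp at hi
    obtain ⟨i, hi⟩ := Function.ne_iff.mp hne
    apply Real.sqrt_pos.mpr
    apply Finset.sum_pos' (fun j _ => sq_nonneg _) ⟨i, Finset.mem_univ i, ?_⟩
    exact lt_of_le_of_ne (sq_nonneg _) (Ne.symm (pow_ne_zero 2 hi))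
  refine ⟨f x₀, f x₁, hfpos, hx₀ hx₁K, ?_⟩
  intro l hl i₀ hle
  set t : ℝ := l i₀ ^ D with hT
  have ht : 0 < t := Real.rpow_pos_of_pos (hl i₀) D
  set μ : Fin J → ℝ := fun j => l j ^ D / t with hμ
  have hμK : μ ∈ K := by
    constructor
    · intro j
      constructor
      · exact div_nonneg (Real.rpow_nonneg (hl j).le D) ht.le
      · rw [div_le_one ht]
        exact Real.rpow_le_rpow (hl j).le (hle j) hD.le
    · exact ⟨i₀, div_self ht.ne'⟩
  have hsmul : (fun j => l j ^ D) = t • μ := by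
    funext j
    simp [hμ, mul_div_cancel₀ _ ht.ne']
  have key : Real.sqrt (∑ i, (A.mulVec (fun j => l j ^ D) i) ^ 2) = t * f μ := by
    rw [show Real.sqrt (∑ i, (A.mulVec (fun j => l j ^ D) i) ^ 2)
        = f (fun j => l j ^ D) from rfl, hsmul, hhom t ht.le]
  rw [key]
  constructor
  · rw [mul_comm (f x₀) t]
    exact mul_le_mul_of_nonneg_left (hx₀ hμK) ht.le
  · rw [mul_comm (f x₁) t]
    exact mul_le_mul_of_nonneg_left (hx₁ hμK) ht.le
end

section
/- Let J ≥ 2 and let A* be the J×J matrix with entries A*_{ij} = κ·ι_i·ι_j / |z_i − z_j|^{N−2} for i ≠ j and A*_{ii} = 0, where κ > 0, ι_i ∈ {±1}, and z_1,…,z_J ∈ ℝ^N are distinct. If at most one of the signs ι_i equals +1, or at most one equals −1, then A* has no nonzero kernel element in [0,∞)^J. -/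
lemma stmt_7_aux (J : ℕ) (hJ : 2 ≤ J) (ι : Fin J → ℝ) (v w : ℝ)
    (hι : ∀ i, ι i = v ∨ ι i = w)
    (h : ∀ a, ι a = v → ∀ b, ι b = v → a = b) :
    ∃ i₀ : Fin J, ∀ j, j ≠ i₀ → ι j = w := by
  by_cases he : ∃ a, ι a = v
  · obtain ⟨a, ha⟩ := he
    exact ⟨a, fun j hj => (hι j).resolve_left (fun hv => hj (h j hv a ha))⟩
  · push_neg at he
    exact ⟨⟨0, by omega⟩, fun j _ => (hι j).resolve_left (he j)⟩

/-- For distinct points z₁,…,z_J ∈ ℝ^N and signs ι_i ∈ {±1}, if at most one sign equals +1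
or at most one equals −1, then the matrix A*_{ij} = 1_{i≠j} κ ι_i ι_j / |z_i − z_j|^{N−2}
has no nonzero kernel element in [0,∞)^J. -/
theorem stmt_7 (J N : ℕ) (hJ : 2 ≤ J) (hN : 3 ≤ N) (κ : ℝ) (hκ : 0 < κ)
    (ι : Fin J → ℝ) (hι : ∀ i, ι i = 1 ∨ ι i = -1)
    (z : Fin J → Fin N → ℝ) (hz : ∀ i j, i ≠ j → z i ≠ z j)
    (hsign : (Finset.univ.filter (fun i => ι i = 1)).card ≤ 1 ∨
             (Finset.univ.filter (fun i => ι i = -1)).card ≤ 1) :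
    ∀ c : Fin J → ℝ,
      (Matrix.of fun i j => if i ≠ j then
          κ * ι i * ι j / Real.sqrt (∑ t, (z i t - z j t) ^ 2) ^ (N - 2)
        else 0).mulVec c = 0 →
      (∀ i, 0 ≤ c i) → c = 0 := by
  intro c hc hcnn
  set R : Fin J → Fin J → ℝ :=
    fun i j => Real.sqrt (∑ t, (z i t - z j t) ^ 2) ^ (N - 2) with hR
  have hRpos : ∀ i j : Fin J, i ≠ j → 0 < R i j := by
    intro i j hij
    apply pow_pos
    apply Real.sqrt_pos.2
    have hne := hz i j hij
    obtain ⟨t, ht⟩ : ∃ t, z i t ≠ z j t := by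
      by_contra h; push_neg at h; exact hne (funext h)
    refine Finset.sum_pos' (fun t _ => sq_nonneg _) ⟨t, Finset.mem_univ t, ?_⟩
    have h0 : z i t - z j t ≠ 0 := sub_ne_zero_of_ne ht
    positivity
  have hι1 : ∀ i, ι i * ι i = 1 := fun i => by rcases hι i with h | h <;> rw [h] <;> norm_num
  have hι0 : ∀ i, ι i ≠ 0 := fun i => by rcases hι i with h | h <;> rw [h] <;> norm_num
  have hrow : ∀ i, ∑ j, (if i = j then 0 else κ * ι i * ι j / R i j) * c j = 0 := by
    intro i
    have := congrFun hc i
    simpa [Matrix.mulVec, dotProduct, hR, ite_mul] using this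
  -- find i₀ such that all other signs equal some w
  obtain ⟨i₀, w, hw1, hw⟩ : ∃ (i₀ : Fin J) (w : ℝ), w * w = 1 ∧ ∀ j, j ≠ i₀ → ι j = w := by
    rcases hsign with h | h
    · rw [Finset.card_le_one] at h
      obtain ⟨i₀, hi₀⟩ := stmt_7_aux J hJ ι 1 (-1) hι
        (fun a ha b hb => h a (by simp [ha]) b (by simp [hb]))
      exact ⟨i₀, -1, by norm_num, hi₀⟩
    · rw [Finset.card_le_one] at h
      obtain ⟨i₀, hi₀⟩ := stmt_7_aux J hJ ι (-1) 1 (fun i => (hι i).symm)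
        (fun a ha b hb => h a (by simp [ha]) b (by simp [hb]))
      exact ⟨i₀, 1, by norm_num, hi₀⟩
  set σ : ℝ := ι i₀ * w with hσ
  -- row i₀ multiplied by σ has all terms nonneg
  have hkey : ∀ j, j ≠ i₀ → c j = 0 := by
    have hsum : ∑ j, σ * ((if i₀ = j then 0 else κ * ι i₀ * ι j / R i₀ j) * c j) = 0 := by
      rw [← Finset.mul_sum, hrow i₀, mul_zero]
    have hterm : ∀ j, j ≠ i₀ →
        σ * ((if i₀ = j then 0 else κ * ι i₀ * ι j / R i₀ j) * c j)
          = κ / R i₀ j * c j := by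
      intro j hj
      rw [if_neg (Ne.symm hj), hw j hj, hσ]
      have hRne : R i₀ j ≠ 0 := (hRpos i₀ j (Ne.symm hj)).ne'
      field_simp
      linear_combination (c j * (w * w)) * hι1 i₀ + (c j) * hw1
    have hnn : ∀ j ∈ Finset.univ,
        0 ≤ σ * ((if i₀ = j then 0 else κ * ι i₀ * ι j / R i₀ j) * c j) := by
      intro j _
      by_cases hj : j = i₀
      · subst hj; simp
      · rw [hterm j hj]
        exact mul_nonneg (div_nonneg hκ.le (hRpos i₀ j (Ne.symm hj)).le) (hcnn j)
    intro j hj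
    have := (Finset.sum_eq_zero_iff_of_nonneg hnn).1 hsum j (Finset.mem_univ j)
    rw [hterm j hj] at this
    have hpos : 0 < κ / R i₀ j := div_pos hκ (hRpos i₀ j (Ne.symm hj))
    exact (mul_eq_zero.1 this).resolve_left hpos.ne'
  -- now kill c i₀ using another row
  have hci₀ : c i₀ = 0 := by
    obtain ⟨i₁, hi₁⟩ : ∃ i₁ : Fin J, i₁ ≠ i₀ := by
      by_cases h0 : (i₀ : ℕ) = 0
      · exact ⟨⟨1, by omega⟩, by simp [Fin.ext_iff, h0]⟩
      · exact ⟨⟨0, by omega⟩, by simp [Fin.ext_iff]; omega⟩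
    have h1 := hrow i₁
    have heq : ∑ j, (if i₁ = j then 0 else κ * ι i₁ * ι j / R i₁ j) * c j
        = (κ * ι i₁ * ι i₀ / R i₁ i₀) * c i₀ := by
      rw [Finset.sum_eq_single i₀]
      · rw [if_neg hi₁]
      · intro j _ hj
        rw [hkey j hj, mul_zero]
      · simp
    rw [heq] at h1
    have hA : κ * ι i₁ * ι i₀ / R i₁ i₀ ≠ 0 := by
      apply div_ne_zero
      · exact mul_ne_zero (mul_ne_zero hκ.ne' (hι0 i₁)) (hι0 i₀)
      · exact (hRpos i₁ i₀ hi₁).ne'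
    exact (mul_eq_zero.1 h1).resolve_left hA
  funext i
  by_cases hi : i = i₀
  · subst hi; simpa using hci₀
  · simpa using hkey i hi
end

section
/- Let A be a real symmetric J×J matrix whose kernel is one-dimensional and spanned by a unit vector c ∈ (0,∞)^J. Then there exist constants 0 < c₁ ≤ C₁ such that for every nonzero ℓ ∈ [0,∞)^J, c₁·|A·ℓ|/|ℓ| ≤ |ℓ/|ℓ| − c| ≤ C₁·|A·ℓ|/|ℓ|. -/
open RealInnerProductSpace

private def toE (J : ℕ) (x : Fin J → ℝ) : EuclideanSpace ℝ (Fin J) := WithLp.toLp 2 x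

private lemma normE {J : ℕ} (x : EuclideanSpace ℝ (Fin J)) :
    ‖x‖ = Real.sqrt (∑ i, (x i)^2) := by
  rw [EuclideanSpace.norm_eq]; simp [sq_abs]

private lemma innerE {J : ℕ} (x y : EuclideanSpace ℝ (Fin J)) :
    ⟪x, y⟫ = ∑ i, x i * y i := by
  simp [PiLp.inner_apply, RCLike.inner_apply, conj_trivial]
  exact Finset.sum_congr rfl fun i _ => mul_comm _ _

set_option maxHeartbeats 2000000 in
/-- If A is a real symmetric J×J matrix whose kernel is spanned by a strictly positive
Euclidean unit vector c, then |ℓ/|ℓ| − c| ≍ |Aℓ|/|ℓ| uniformly over nonzero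
ℓ ∈ [0,∞)^J (Euclidean norms). -/
theorem stmt_9 (J : ℕ) (A : Matrix (Fin J) (Fin J) ℝ) (hsymm : A.IsSymm)
    (c : Fin J → ℝ) (hc : ∀ i, 0 < c i) (hnorm : ∑ i, (c i) ^ 2 = 1)
    (hker : ∀ v : Fin J → ℝ, A.mulVec v = 0 ↔ ∃ t : ℝ, v = t • c) :
    ∃ c₁ C₁ : ℝ, 0 < c₁ ∧ c₁ ≤ C₁ ∧
      ∀ l : Fin J → ℝ, (∀ i, 0 ≤ l i) → l ≠ 0 →
        c₁ * Real.sqrt (∑ i, (A.mulVec l i) ^ 2) / Real.sqrt (∑ i, (l i) ^ 2) ≤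
          Real.sqrt (∑ i, (l i / Real.sqrt (∑ k, (l k) ^ 2) - c i) ^ 2) ∧
        Real.sqrt (∑ i, (l i / Real.sqrt (∑ k, (l k) ^ 2) - c i) ^ 2) ≤
          C₁ * Real.sqrt (∑ i, (A.mulVec l i) ^ 2) / Real.sqrt (∑ i, (l i) ^ 2) := by
  classical
  set cE : EuclideanSpace ℝ (Fin J) := toE J c with hcE
  have hcnorm : ‖cE‖ = 1 := by
    rw [normE]
    have : ∑ i, (cE i)^2 = 1 := hnorm
    rw [this, Real.sqrt_one]
  set T : EuclideanSpace ℝ (Fin J) →L[ℝ] EuclideanSpace ℝ (Fin J) := LinearMap.toContinuousLinearMap (Matrix.toEuclideanLin A) with hT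
  have hTapp : ∀ x : Fin J → ℝ, T (toE J x) = toE J (A.mulVec x) := fun _ => rfl
  have hAc : A.mulVec c = 0 := (hker c).mpr ⟨1, (one_smul ℝ c).symm⟩
  have hTc : T cE = 0 := by rw [hcE, hTapp, hAc]; simp [toE]
  -- the minimum of ‖Tx‖² + ⟪x,c⟫² over the unit sphere
  obtain ⟨x₀, hx₀S, hx₀min'⟩ :=
    (isCompact_sphere (0 : EuclideanSpace ℝ (Fin J)) 1).exists_isMinOn
      ⟨cE, by simp [hcnorm]⟩
      (Continuous.continuousOn
        (((T.continuous.norm.pow 2).add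
          ((continuous_id.inner continuous_const).pow 2)) :
          Continuous fun x : EuclideanSpace ℝ (Fin J) => ‖T x‖^2 + ⟪x, cE⟫^2))
  have hx₀min := isMinOn_iff.mp hx₀min'
  set μ : ℝ := ‖T x₀‖^2 + ⟪x₀, cE⟫^2 with hμdef
  have hx₀norm : ‖x₀‖ = 1 := by simpa using hx₀S
  have hμpos : 0 < μ := by
    rcases lt_or_eq_of_le (by positivity : (0:ℝ) ≤ μ) with h | h
    · exact h
    · exfalso
      have h1 : ‖T x₀‖^2 = 0 ∧ ⟪x₀, cE⟫^2 = 0 := by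
        constructor <;> nlinarith [sq_nonneg ‖T x₀‖, sq_nonneg ⟪x₀, cE⟫]
      have hT0 : T x₀ = 0 := by
        have := h1.1
        have : ‖T x₀‖ = 0 := by nlinarith [norm_nonneg (T x₀)]
        exact norm_eq_zero.mp this
      have hmul : A.mulVec (x₀ : Fin J → ℝ) = 0 := congrArg WithLp.ofLp hT0
      obtain ⟨t, ht⟩ := (hker _).mp hmul
      have hx₀t : x₀ = t • cE := congrArg (WithLp.toLp 2) ht
      have hinner : ⟪x₀, cE⟫ = t := by
        rw [hx₀t, real_inner_smul_left, real_inner_self_eq_norm_sq, hcnorm]; ring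
      have ht0 : t = 0 := by
        have := h1.2
        nlinarith [hinner]
      rw [ht0, zero_smul] at hx₀t
      rw [hx₀t] at hx₀norm
      simp at hx₀norm
  -- homogeneous gap inequality
  have hgap : ∀ v : EuclideanSpace ℝ (Fin J), μ * ‖v‖^2 ≤ ‖T v‖^2 + ⟪v, cE⟫^2 := by
    intro v
    rcases eq_or_ne v 0 with rfl | hv
    · simp
    · have hv' : (0:ℝ) < ‖v‖ := norm_pos_iff.mpr hv
      set s : ℝ := ‖v‖⁻¹ with hs
      have hsv : s * ‖v‖ = 1 := inv_mul_cancel₀ (ne_of_gt hv')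
      have hmem : (s • v) ∈ Metric.sphere (0 : EuclideanSpace ℝ (Fin J)) 1 := by
        simp only [mem_sphere_iff_norm, sub_zero, norm_smul, Real.norm_eq_abs,
          abs_of_pos (inv_pos.mpr hv')]
        rw [abs_of_nonneg (show (0:ℝ) ≤ s from (inv_pos.mpr hv').le)]
        exact hsv
      have hmin := hx₀min _ hmem
      have hfs : ‖T (s • v)‖^2 + ⟪s • v, cE⟫^2 = s^2 * (‖T v‖^2 + ⟪v, cE⟫^2) := by
        rw [map_smul, norm_smul, real_inner_smul_left, Real.norm_eq_abs,
          abs_of_pos (inv_pos.mpr hv')]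
        ring
      simp only [Pi.add_apply, Pi.pow_apply] at hmin
      rw [hfs] at hmin
      have h2 : μ * ‖v‖^2 ≤ s^2 * (‖T v‖^2 + ⟪v, cE⟫^2) * ‖v‖^2 :=
        mul_le_mul_of_nonneg_right hmin (sq_nonneg _)
      have h3 : s^2 * (‖T v‖^2 + ⟪v, cE⟫^2) * ‖v‖^2 = ‖T v‖^2 + ⟪v, cE⟫^2 := by
        linear_combination ((‖T v‖^2 + ⟪v, cE⟫^2) * (s * ‖v‖ + 1)) * hsv
      linarith [h2, h3.le, h3.ge]
  -- constants
  set M : ℝ := ‖T‖ with hM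
  have hM0 : 0 ≤ M := norm_nonneg _
  have hM1 : (0:ℝ) < M + 1 := by linarith
  refine ⟨1/(M+1), Real.sqrt (2/μ) + 1/(M+1), by positivity,
    le_add_of_nonneg_left (Real.sqrt_nonneg _), ?_⟩
  intro l hl0 hlne
  set lE : EuclideanSpace ℝ (Fin J) := toE J l with hlE
  have hlE0 : lE ≠ 0 := fun h => hlne (congrArg WithLp.ofLp h)
  have hnl : (0:ℝ) < ‖lE‖ := norm_pos_iff.mpr hlE0
  set nl : ℝ := ‖lE‖ with hnldef
  have hsumnl : Real.sqrt (∑ i, (l i)^2) = nl := (normE lE).symm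
  set uE : EuclideanSpace ℝ (Fin J) := nl⁻¹ • lE with huE
  have hunorm : ‖uE‖ = 1 := by
    rw [huE, norm_smul, Real.norm_eq_abs, abs_of_pos (inv_pos.mpr hnl)]
    exact inv_mul_cancel₀ (ne_of_gt hnl)
  set t : ℝ := ⟪uE, cE⟫ with htdef
  have ht0 : 0 ≤ t := by
    rw [htdef, innerE]
    refine Finset.sum_nonneg fun i _ => mul_nonneg ?_ (hc i).le
    have : uE i = nl⁻¹ * l i := rfl
    rw [this]
    exact mul_nonneg (inv_pos.mpr hnl).le (hl0 i)
  have ht1 : t ≤ 1 := by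
    have := real_inner_le_norm uE cE
    rwa [hunorm, hcnorm, one_mul] at this
  -- the distance d and residual r
  set d : ℝ := ‖uE - cE‖ with hddef
  set r : ℝ := ‖T uE‖ with hrdef
  have hd0 : 0 ≤ d := norm_nonneg _
  have hr0 : 0 ≤ r := norm_nonneg _
  have hd2 : d^2 = 2 - 2*t := by
    rw [hddef, norm_sub_sq_real, hunorm, hcnorm, ← htdef]; ring
  set w : EuclideanSpace ℝ (Fin J) := uE - t • cE with hw
  have hw2 : ‖w‖^2 = 1 - t^2 := by
    rw [hw, norm_sub_sq_real, hunorm, real_inner_smul_right, norm_smul,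
      Real.norm_eq_abs, hcnorm, ← htdef, mul_one, sq_abs]
    ring
  have hTtc : T (t • cE) = 0 := by rw [map_smul, hTc, smul_zero]
  have hTw : T w = T uE := by
    rw [hw, map_sub, hTtc, sub_zero]
  have hwc : ⟪w, cE⟫ = 0 := by
    have h1 : ⟪t • cE, cE⟫ = t := by
      rw [real_inner_smul_left, real_inner_self_eq_norm_sq, hcnorm]; ring
    rw [hw, inner_sub_left, h1]
    exact sub_eq_zero.mpr htdef.symm
  have hgapw := hgap w
  rw [hTw, hwc, hw2, ← hrdef] at hgapw
  -- hgapw : μ * (1 - t^2) ≤ r^2 + 0^2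
  have hr2 : μ * (1 - t^2) ≤ r^2 := by nlinarith [hgapw]
  have hrM : r ≤ M * ‖w‖ := by
    rw [hrdef, ← hTw]; exact T.le_opNorm w
  have hw0 : 0 ≤ ‖w‖ := norm_nonneg _
  -- ‖w‖ ≤ d
  have hwd : ‖w‖ ≤ d := by
    have h1 : ‖w‖^2 ≤ d^2 := by nlinarith [sq_nonneg (1 - t)]
    have := Real.sqrt_le_sqrt h1
    rwa [Real.sqrt_sq hw0, Real.sqrt_sq hd0] at this
  -- key scalar inequalities
  have hlow : (1/(M+1)) * r ≤ d := by
    rw [one_div, inv_mul_le_iff₀ hM1]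
    nlinarith [hrM, hwd, hM0, hd0]
  have hupp : d ≤ Real.sqrt (2/μ) * r := by
    have htt : t^2 ≤ t := by nlinarith
    have hr2' : 1 - t^2 ≤ r^2 / μ := by
      rw [le_div_iff₀ hμpos]; nlinarith [hr2]
    have h1 : d^2 ≤ (Real.sqrt (2/μ) * r)^2 := by
      rw [mul_pow, Real.sq_sqrt (by positivity : (0:ℝ) ≤ 2/μ)]
      have : 2/μ * r^2 = 2 * (r^2/μ) := by ring
      rw [this]
      linarith [hr2', htt, hd2.le, hd2.ge]
    have := Real.sqrt_le_sqrt h1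
    rwa [Real.sqrt_sq hd0, Real.sqrt_sq (by positivity)] at this
  -- translate statement quantities
  have happ : ∀ i, l i / nl - c i = (uE - cE : EuclideanSpace ℝ (Fin J)) i := fun i => by
    show l i / nl - c i = nl⁻¹ * l i - c i
    rw [inv_mul_eq_div]
  have hmid : Real.sqrt (∑ i, (l i / nl - c i)^2) = d := by
    rw [hddef, normE]
    congr 1
    exact Finset.sum_congr rfl fun i _ => by rw [happ i]
  have hres : Real.sqrt (∑ i, (A.mulVec l i)^2) = nl * r := by
    have h1 : toE J (A.mulVec l) = T lE := rfl
    have h2 : lE = nl • uE := by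
      rw [huE, smul_smul, mul_inv_cancel₀ (ne_of_gt hnl), one_smul]
    have : Real.sqrt (∑ i, (A.mulVec l i)^2) = ‖T lE‖ := by
      rw [← h1, normE]; rfl
    rw [this, h2, map_smul, norm_smul, Real.norm_eq_abs, abs_of_pos hnl, ← hrdef]
  rw [hsumnl, hmid, hres]
  constructor
  · calc 1/(M+1) * (nl * r) / nl = (1/(M+1)) * r := by
          field_simp
      _ ≤ d := hlow
  · calc d ≤ Real.sqrt (2/μ) * r := hupp
      _ ≤ (Real.sqrt (2/μ) + 1/(M+1)) * r := by
          have : 0 ≤ (1/(M+1)) * r := by positivity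
          nlinarith [this]
      _ = (Real.sqrt (2/μ) + 1/(M+1)) * (nl * r) / nl := by
          field_simp
end

section
/- Let N ≥ 3, D = (N−2)/2, and let 1 ≤ L ≤ N−1 be an integer. Let q₀ ∈ (0,∞) be the unique number with q₀^{−2D} + (q₀²+1)^{−D} = 1. Define a configuration of J = 4L points in ℝ^N: for each k ∈ {1,…,L}, set ι_{4k−3} = ι_{4k−2} = +1, ι_{4k−1} = ι_{4k} = −1, and z*_{4k−3} = (1/2, 0,…, q₀/2, …, 0), z*_{4k−2} = (−1/2, 0,…, q₀/2, …, 0), z*_{4k−1} = (1/2, 0,…, −q₀/2, …, 0), z*_{4k} = (−1/2, 0,…, −q₀/2, …, 0), where ±q₀/2 occupies the (k+1)-th coordinate. Let A* be the J×J matrix A*_{ij} = 1_{i≠j}·ι_iι_j·|z_i*−z_j*|^{−2D}. Then for each k, the vector e_k ∈ ℝ^{4L} with 1's in coordinates 4k−3, 4k−2, 4k−1, 4k and 0's elsewhere lies in ker(A*); consequently A* has at least L linearly independent nonnegative kernel vectors. -/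
private noncomputable def xfun (n : ℕ) : ℝ := if n % 2 = 0 then 1/2 else -(1/2)
private noncomputable def sfun (q : ℝ) (n : ℕ) : ℝ := if n % 4 ≤ 1 then q/2 else -(q/2)

private lemma xfun_eq {a b : ℕ} (h : a % 2 = b % 2) : xfun a = xfun b := by
  unfold xfun; rw [h]

private lemma xfun_sub_sq {a b : ℕ} (h : a % 2 ≠ b % 2) : (xfun a - xfun b)^2 = 1 := by
  unfold xfun
  rcases Nat.mod_two_eq_zero_or_one a with ha | ha <;>
    rcases Nat.mod_two_eq_zero_or_one b with hb | hb <;>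
      rw [ha, hb] at h ⊢ <;> first | (exact absurd rfl h) | norm_num

private lemma sfun_eq (q : ℝ) {a b : ℕ} (h : a % 4 ≤ 1 ↔ b % 4 ≤ 1) :
    sfun q a = sfun q b := by
  unfold sfun
  by_cases ha : a % 4 ≤ 1 <;> by_cases hb : b % 4 ≤ 1 <;> simp [ha, hb] <;> tauto

private lemma sfun_sub_sq (q : ℝ) {a b : ℕ} (h : ¬(a % 4 ≤ 1 ↔ b % 4 ≤ 1)) :
    (sfun q a - sfun q b)^2 = q^2 := by
  unfold sfun
  by_cases ha : a % 4 ≤ 1 <;> by_cases hb : b % 4 ≤ 1 <;>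
    simp only [ha, hb, if_true, if_false] <;> first | tauto | ring

private lemma sfun_sq (q : ℝ) (a : ℕ) : (sfun q a)^2 = q^2/4 := by
  unfold sfun; split <;> ring


set_option maxHeartbeats 1000000 in
/-- The J = 4L block configuration: for each block k, the indicator vector of the block
lies in the kernel of the signed interaction matrix A*_{ij} = 1_{i≠j} ι_i ι_j |z_i*−z_j*|^{−2D};
consequently A* has at least L linearly independent nonnegative kernel vectors.
(Indices are 0-based: m % 4 ∈ {0,1} carries sign +1, m % 4 ∈ {2,3} carries sign −1;
block number is m / 4, and the ±q₀/2 entry occupies coordinate m/4 + 1.) -/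
theorem stmt_12 (N L : ℕ) (hN : 3 ≤ N) (hL1 : 1 ≤ L) (hL2 : L ≤ N - 1)
    (D : ℝ) (hD : D = ((N : ℝ) - 2) / 2)
    (q₀ : ℝ) (hq : 0 < q₀) (hrel : q₀ ^ (-(2 * D)) + (q₀ ^ 2 + 1) ^ (-D) = 1)
    (ι : Fin (4 * L) → ℝ) (hι : ∀ m, ι m = if (m : ℕ) % 4 ≤ 1 then 1 else -1)
    (z : Fin (4 * L) → Fin N → ℝ)
    (hz : ∀ m t, z m t =
      if (t : ℕ) = 0 then (if (m : ℕ) % 2 = 0 then 1 / 2 else -(1 / 2))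
      else if (t : ℕ) = (m : ℕ) / 4 + 1 then (if (m : ℕ) % 4 ≤ 1 then q₀ / 2 else -(q₀ / 2))
      else 0)
    (A : Matrix (Fin (4 * L)) (Fin (4 * L)) ℝ)
    (hA : ∀ i j, A i j = if i ≠ j then
        ι i * ι j / Real.sqrt (∑ t, (z i t - z j t) ^ 2) ^ (2 * D) else 0)
    (e : Fin L → Fin (4 * L) → ℝ)
    (he : ∀ k m, e k m = if (m : ℕ) / 4 = (k : ℕ) then 1 else 0) :
    (∀ k, A.mulVec (e k) = 0) ∧ (∀ k m, 0 ≤ e k m) ∧ LinearIndependent ℝ e := by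
  have hNpos : 0 < N := by omega
  have hq2 : (0:ℝ) < q₀ ^ 2 + 1 := by positivity
  have hcoord : ∀ m : Fin (4 * L), (m : ℕ) / 4 + 1 < N := by
    intro m; have := m.isLt; omega
  -- values of z
  have hz0 : ∀ m : Fin (4*L), z m ⟨0, hNpos⟩ = xfun (m:ℕ) := by
    intro m; rw [hz]; simp [xfun]
  have hzc : ∀ m : Fin (4*L), z m ⟨(m:ℕ)/4+1, hcoord m⟩ = sfun q₀ (m:ℕ) := by
    intro m; rw [hz]; simp [sfun]
  have hzo : ∀ (m : Fin (4*L)) (t : Fin N), (t:ℕ) ≠ 0 → (t:ℕ) ≠ (m:ℕ)/4+1 → z m t = 0 := by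
    intro m t h1 h2; rw [hz]; simp [h1, h2]
  -- the squared distance
  have hsum : ∀ i j : Fin (4*L), (∑ t, (z i t - z j t)^2) =
      (xfun (i:ℕ) - xfun (j:ℕ))^2 + (if (i:ℕ)/4 = (j:ℕ)/4 then
        (sfun q₀ (i:ℕ) - sfun q₀ (j:ℕ))^2 else (sfun q₀ (i:ℕ))^2 + (sfun q₀ (j:ℕ))^2) := by
    intro i j
    by_cases hb : (i:ℕ)/4 = (j:ℕ)/4
    · have hcij : (⟨(i:ℕ)/4+1, hcoord i⟩ : Fin N) = ⟨(j:ℕ)/4+1, hcoord j⟩ := by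
        simp [Fin.ext_iff, hb]
      have hS : (∑ t, (z i t - z j t)^2)
          = ∑ t ∈ ({⟨0, hNpos⟩, ⟨(i:ℕ)/4+1, hcoord i⟩} : Finset (Fin N)),
              (z i t - z j t)^2 := by
        refine (Finset.sum_subset (Finset.subset_univ _) ?_).symm
        intro t _ ht
        simp only [Finset.mem_insert, Finset.mem_singleton] at ht
        push_neg at ht
        have h1 : (t:ℕ) ≠ 0 := fun h => ht.1 (Fin.ext h)
        have h2 : (t:ℕ) ≠ (i:ℕ)/4+1 := fun h => ht.2 (Fin.ext h)
        have h3 : (t:ℕ) ≠ (j:ℕ)/4+1 := by rw [← hb]; exact h2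
        rw [hzo i t h1 h2, hzo j t h1 h3]; ring
      have hne : (⟨0, hNpos⟩ : Fin N) ≠ ⟨(i:ℕ)/4+1, hcoord i⟩ := by
        simp [Fin.ext_iff]
      rw [hS, Finset.sum_pair hne, hz0, hz0, hzc i, hcij, hzc j, if_pos hb]
    · have hne0i : (⟨0, hNpos⟩ : Fin N) ≠ ⟨(i:ℕ)/4+1, hcoord i⟩ := by simp [Fin.ext_iff]
      have hne0j : (⟨0, hNpos⟩ : Fin N) ≠ ⟨(j:ℕ)/4+1, hcoord j⟩ := by simp [Fin.ext_iff]
      have hneij : (⟨(i:ℕ)/4+1, hcoord i⟩ : Fin N) ≠ ⟨(j:ℕ)/4+1, hcoord j⟩ := by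
        simp only [ne_eq, Fin.ext_iff]; omega
      have hS : (∑ t, (z i t - z j t)^2)
          = ∑ t ∈ ({⟨0, hNpos⟩, ⟨(i:ℕ)/4+1, hcoord i⟩, ⟨(j:ℕ)/4+1, hcoord j⟩} :
              Finset (Fin N)), (z i t - z j t)^2 := by
        refine (Finset.sum_subset (Finset.subset_univ _) ?_).symm
        intro t _ ht
        simp only [Finset.mem_insert, Finset.mem_singleton] at ht
        push_neg at ht
        rw [hzo i t (fun h => ht.1 (Fin.ext h)) (fun h => ht.2.1 (Fin.ext h)),
            hzo j t (fun h => ht.1 (Fin.ext h)) (fun h => ht.2.2 (Fin.ext h))]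
        ring
      rw [hS, Finset.sum_insert (by simp [Finset.mem_insert, hne0i, hne0j]),
          Finset.sum_pair hneij, hz0, hz0, hzc i, hzc j,
          hzo i ⟨(j:ℕ)/4+1, hcoord j⟩ (by show (j:ℕ)/4+1 ≠ 0; omega)
            (by show (j:ℕ)/4+1 ≠ (i:ℕ)/4+1; omega),
          hzo j ⟨(i:ℕ)/4+1, hcoord i⟩ (by show (i:ℕ)/4+1 ≠ 0; omega)
            (by show (i:ℕ)/4+1 ≠ (j:ℕ)/4+1; omega), if_neg hb]
      ring
  -- power facts
  have hpw1 : Real.sqrt 1 ^ (2*D) = 1 := by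
    rw [Real.sqrt_one, Real.one_rpow]
  have hpwq : Real.sqrt (q₀^2) ^ (2*D) = q₀ ^ (2*D) := by
    rw [Real.sqrt_sq hq.le]
  have hpwq1 : Real.sqrt (q₀^2+1) ^ (2*D) = (q₀^2+1) ^ D := by
    rw [Real.sqrt_eq_rpow, ← Real.rpow_mul hq2.le]
    congr 1
    ring
  have hfin : 1 - (q₀ ^ (2*D))⁻¹ - ((q₀^2+1) ^ D)⁻¹ = 0 := by
    rw [Real.rpow_neg hq.le, Real.rpow_neg hq2.le] at hrel
    linarith
  -- the three within-block interaction values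
  have hterm1 : ∀ i j : Fin (4*L), (i:ℕ)/4 = (j:ℕ)/4 → (i:ℕ)%2 ≠ (j:ℕ)%2 →
      ((i:ℕ)%4 ≤ 1 ↔ (j:ℕ)%4 ≤ 1) → A i j = 1 := by
    intro i j hb hp hh
    have hne : i ≠ j := by intro h; rw [h] at hp; exact hp rfl
    rw [hA, if_pos hne, hι i, hι j, hsum i j, if_pos hb]
    have h1 : (xfun (i:ℕ) - xfun (j:ℕ))^2 = 1 := xfun_sub_sq hp
    have h2 : (sfun q₀ (i:ℕ) - sfun q₀ (j:ℕ))^2 = 0 := by rw [sfun_eq q₀ hh]; ring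
    rw [h1, h2, add_zero, hpw1]
    by_cases hi : (i:ℕ)%4 ≤ 1
    · rw [if_pos hi, if_pos (hh.mp hi)]; norm_num
    · rw [if_neg hi, if_neg (fun h => hi (hh.mpr h))]; norm_num
  have hterm2 : ∀ i j : Fin (4*L), (i:ℕ)/4 = (j:ℕ)/4 → (i:ℕ)%2 = (j:ℕ)%2 →
      ¬((i:ℕ)%4 ≤ 1 ↔ (j:ℕ)%4 ≤ 1) → A i j = -(q₀ ^ (2*D))⁻¹ := by
    intro i j hb hp hh
    have hne : i ≠ j := by intro h; rw [h] at hh; exact hh Iff.rfl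
    rw [hA, if_pos hne, hι i, hι j, hsum i j, if_pos hb]
    have h1 : (xfun (i:ℕ) - xfun (j:ℕ))^2 = 0 := by rw [xfun_eq hp]; ring
    have h2 : (sfun q₀ (i:ℕ) - sfun q₀ (j:ℕ))^2 = q₀^2 := sfun_sub_sq q₀ hh
    rw [h1, h2, zero_add, hpwq]
    by_cases hi : (i:ℕ)%4 ≤ 1
    · rw [if_pos hi, if_neg (fun h => hh ⟨fun _ => h, fun _ => hi⟩)]; ring
    · have hj : (j:ℕ)%4 ≤ 1 := by
        by_contra hj
        exact hh ⟨fun h => absurd h hi, fun h => absurd h hj⟩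
      rw [if_neg hi, if_pos hj]; ring
  have hterm3 : ∀ i j : Fin (4*L), (i:ℕ)/4 = (j:ℕ)/4 → (i:ℕ)%2 ≠ (j:ℕ)%2 →
      ¬((i:ℕ)%4 ≤ 1 ↔ (j:ℕ)%4 ≤ 1) → A i j = -((q₀^2+1) ^ D)⁻¹ := by
    intro i j hb hp hh
    have hne : i ≠ j := by intro h; rw [h] at hp; exact hp rfl
    rw [hA, if_pos hne, hι i, hι j, hsum i j, if_pos hb]
    have h1 : (xfun (i:ℕ) - xfun (j:ℕ))^2 = 1 := xfun_sub_sq hp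
    have h2 : (sfun q₀ (i:ℕ) - sfun q₀ (j:ℕ))^2 = q₀^2 := sfun_sub_sq q₀ hh
    rw [h1, h2, show (1:ℝ) + q₀^2 = q₀^2 + 1 from by ring, hpwq1]
    by_cases hi : (i:ℕ)%4 ≤ 1
    · rw [if_pos hi, if_neg (fun h => hh ⟨fun _ => h, fun _ => hi⟩)]; ring
    · have hj : (j:ℕ)%4 ≤ 1 := by
        by_contra hj
        exact hh ⟨fun h => absurd h hi, fun h => absurd h hj⟩
      rw [if_neg hi, if_pos hj]; ring
  -- cross-block pairwise cancellation
  have hoff : ∀ (i j j' : Fin (4*L)), (i:ℕ)/4 ≠ (j:ℕ)/4 → (i:ℕ)/4 ≠ (j':ℕ)/4 →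
      (j:ℕ)%2 = (j':ℕ)%2 → ((j:ℕ)%4 ≤ 1) → ¬((j':ℕ)%4 ≤ 1) →
      A i j + A i j' = 0 := by
    intro i j j' hbj hbj' hp hj hj'
    have hne1 : i ≠ j := fun h => hbj (by rw [h])
    have hne2 : i ≠ j' := fun h => hbj' (by rw [h])
    rw [hA i j, hA i j', if_pos hne1, if_pos hne2, hsum i j, hsum i j',
        if_neg hbj, if_neg hbj', hι i, hι j, hι j', ← xfun_eq hp,
        sfun_sq q₀ (i:ℕ), sfun_sq q₀ (j:ℕ), sfun_sq q₀ (j':ℕ),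
        if_pos hj, if_neg hj']
    ring
  -- the kernel computation
  have hker : ∀ (k : Fin L) (i : Fin (4*L)), (∑ j, A i j * e k j) = 0 := by
    intro k i
    have hkL : (k:ℕ) < L := k.isLt
    set j0 : Fin (4*L) := ⟨4*(k:ℕ), by omega⟩ with hj0
    set j1 : Fin (4*L) := ⟨4*(k:ℕ)+1, by omega⟩ with hj1
    set j2 : Fin (4*L) := ⟨4*(k:ℕ)+2, by omega⟩ with hj2
    set j3 : Fin (4*L) := ⟨4*(k:ℕ)+3, by omega⟩ with hj3
    have hv0 : (j0:ℕ) = 4*(k:ℕ) := rfl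
    have hv1 : (j1:ℕ) = 4*(k:ℕ)+1 := rfl
    have hv2 : (j2:ℕ) = 4*(k:ℕ)+2 := rfl
    have hv3 : (j3:ℕ) = 4*(k:ℕ)+3 := rfl
    have hstep : (∑ j, A i j * e k j) = A i j0 + A i j1 + A i j2 + A i j3 := by
      have h1 : ∀ j : Fin (4*L), A i j * e k j
          = if (j:ℕ)/4 = (k:ℕ) then A i j else 0 := by
        intro j; rw [he]; split <;> simp
      rw [Finset.sum_congr rfl (fun j _ => h1 j), ← Finset.sum_filter]
      have hfe : Finset.univ.filter (fun j : Fin (4*L) => (j:ℕ)/4 = (k:ℕ))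
          = {j0, j1, j2, j3} := by
        ext j
        simp only [Finset.mem_filter, Finset.mem_univ, true_and, Finset.mem_insert,
          Finset.mem_singleton, Fin.ext_iff, hv0, hv1, hv2, hv3]
        omega
      rw [hfe, Finset.sum_insert (by
            simp only [Finset.mem_insert, Finset.mem_singleton, Fin.ext_iff,
              hv0, hv1, hv2, hv3]; omega),
          Finset.sum_insert (by
            simp only [Finset.mem_insert, Finset.mem_singleton, Fin.ext_iff,
              hv1, hv2, hv3]; omega),
          Finset.sum_pair (by
            simp only [ne_eq, Fin.ext_iff, hv2, hv3]; omega)]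
      ring
    rw [hstep]
    by_cases hik : (i:ℕ)/4 = (k:ℕ)
    · have hdiag : ∀ x : Fin (4*L), A x x = 0 := by intro x; rw [hA]; simp
      have h4 : (i:ℕ)%4 = 0 ∨ (i:ℕ)%4 = 1 ∨ (i:ℕ)%4 = 2 ∨ (i:ℕ)%4 = 3 := by omega
      rcases h4 with h | h | h | h
      · have hi0 : i = j0 := Fin.ext (by simp only [hv0]; omega)
        rw [hi0, hdiag j0,
          hterm1 j0 j1 (by simp only [hv0, hv1]; omega) (by simp only [hv0, hv1]; omega)
            (by simp only [hv0, hv1]; omega),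
          hterm2 j0 j2 (by simp only [hv0, hv2]; omega) (by simp only [hv0, hv2]; omega)
            (by simp only [hv0, hv2]; omega),
          hterm3 j0 j3 (by simp only [hv0, hv3]; omega) (by simp only [hv0, hv3]; omega)
            (by simp only [hv0, hv3]; omega)]
        linarith
      · have hi1 : i = j1 := Fin.ext (by simp only [hv1]; omega)
        rw [hi1, hdiag j1,
          hterm1 j1 j0 (by simp only [hv1, hv0]; omega) (by simp only [hv1, hv0]; omega)
            (by simp only [hv1, hv0]; omega),
          hterm2 j1 j3 (by simp only [hv1, hv3]; omega) (by simp only [hv1, hv3]; omega)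
            (by simp only [hv1, hv3]; omega),
          hterm3 j1 j2 (by simp only [hv1, hv2]; omega) (by simp only [hv1, hv2]; omega)
            (by simp only [hv1, hv2]; omega)]
        linarith
      · have hi2 : i = j2 := Fin.ext (by simp only [hv2]; omega)
        rw [hi2, hdiag j2,
          hterm1 j2 j3 (by simp only [hv2, hv3]; omega) (by simp only [hv2, hv3]; omega)
            (by simp only [hv2, hv3]; omega),
          hterm2 j2 j0 (by simp only [hv2, hv0]; omega) (by simp only [hv2, hv0]; omega)
            (by simp only [hv2, hv0]; omega),
          hterm3 j2 j1 (by simp only [hv2, hv1]; omega) (by simp only [hv2, hv1]; omega)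
            (by simp only [hv2, hv1]; omega)]
        linarith
      · have hi3 : i = j3 := Fin.ext (by simp only [hv3]; omega)
        rw [hi3, hdiag j3,
          hterm1 j3 j2 (by simp only [hv3, hv2]; omega) (by simp only [hv3, hv2]; omega)
            (by simp only [hv3, hv2]; omega),
          hterm2 j3 j1 (by simp only [hv3, hv1]; omega) (by simp only [hv3, hv1]; omega)
            (by simp only [hv3, hv1]; omega),
          hterm3 j3 j0 (by simp only [hv3, hv0]; omega) (by simp only [hv3, hv0]; omega)
            (by simp only [hv3, hv0]; omega)]
        linarith
    · have c02 : A i j0 + A i j2 = 0 :=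
        hoff i j0 j2 (by simp only [hv0]; omega) (by simp only [hv2]; omega)
          (by simp only [hv0, hv2]; omega) (by simp only [hv0]; omega)
          (by simp only [hv2]; omega)
      have c13 : A i j1 + A i j3 = 0 :=
        hoff i j1 j3 (by simp only [hv1]; omega) (by simp only [hv3]; omega)
          (by simp only [hv1, hv3]; omega) (by simp only [hv1]; omega)
          (by simp only [hv3]; omega)
      linarith
  refine ⟨?_, ?_, ?_⟩
  · intro k
    funext i
    simp only [Matrix.mulVec, dotProduct, Pi.zero_apply]
    exact hker k i
  · intro k m; rw [he]; split <;> norm_num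
  · rw [Fintype.linearIndependent_iff]
    intro g hg k
    have hk4 : 4*(k:ℕ) < 4*L := by have := k.isLt; omega
    have h := congrFun hg ⟨4*(k:ℕ), hk4⟩
    simp only [Finset.sum_apply, Pi.smul_apply, smul_eq_mul, Pi.zero_apply] at h
    have h2 : ∀ k' : Fin L, g k' * e k' ⟨4*(k:ℕ), hk4⟩ = if k' = k then g k' else 0 := by
      intro k'
      rw [he]
      by_cases hkk : k' = k
      · subst hkk
        rw [if_pos (by show 4*(k':ℕ)/4 = (k':ℕ); omega), if_pos rfl, mul_one]
      · rw [if_neg (fun hcon => hkk (Fin.ext (by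
            have : 4*(k:ℕ)/4 = (k':ℕ) := hcon
            omega))), if_neg hkk, mul_zero]
    rw [Finset.sum_congr rfl (fun k' _ => h2 k'), Finset.sum_ite_eq' Finset.univ k g] at h
    simpa using h
end

section
/- Let D > 1, let t_n < T_n be reals, and let ζ : [t_n, T_n) → (0,∞) be continuous. Suppose there is a constant C₀ such that for all τ₁ < τ₂ in [t_n, T_n): ∫_{τ₁}^{τ₂} ζ(t)^{4D−2} dt ≤ C₀·(ζ(τ₁)^{2D} + ζ(τ₂)^{2D}). Then there is a constant C₁ = C₁(C₀, D) such that for all τ₁ < τ₂ in [t_n, T_n): ∫_{τ₁}^{τ₂} ζ(t)^{2D−1} dt ≤ C₁·(ζ(τ₁) + ζ(τ₂)). -/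
open Set intervalIntegral MeasureTheory

lemma core_aux (D K : ℝ) (hD : 1 < D) (hK : 1 ≤ K) (a b : ℝ) (hab : a ≤ b)
    (f : ℝ → ℝ) (hc : ContinuousOn f (Set.Icc a b))
    (hp : ∀ t ∈ Set.Icc a b, 0 < f t)
    (hφ : ∀ t ∈ Set.Icc a b,
      f a ^ (2*D) + (∫ s in a..t, f s ^ (4*D-2)) ≤ K * f t ^ (2*D)) :
    (∫ t in a..b, f t ^ (2*D-1)) ≤ 2 * D * K * f b := by
  have hD2 : (0:ℝ) < 2*D := by linarith
  have hK0 : (0:ℝ) < K := by linarith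
  set e : ℝ := (2*D-1)/(2*D) with he
  have he0 : 0 < e := div_pos (by linarith) hD2
  set c : ℝ := K ^ e with hc'
  have hc0 : 0 < c := Real.rpow_pos_of_pos hK0 e
  -- the function under the original integral hypothesis
  set g4 : ℝ → ℝ := fun s => f s ^ (4*D-2) with hg4
  have hg4c : ContinuousOn g4 (Set.Icc a b) :=
    hc.rpow_const (fun x hx => Or.inr (by linarith))
  have huIcc : Set.uIcc a b = Set.Icc a b := Set.uIcc_of_le hab
  have hg4int : IntervalIntegrable g4 volume a b :=
    (hg4c.mono (by rw [huIcc])).intervalIntegrable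
  set φ : ℝ → ℝ := fun t => f a ^ (2*D) + ∫ s in a..t, g4 s with hφdef
  have hφc : ContinuousOn φ (Set.Icc a b) := by
    apply continuousOn_const.add
    have := intervalIntegral.continuousOn_primitive_interval
      (μ := volume) (f := g4) (a := a) (b := b) ?_
    · rwa [huIcc] at this
    · rw [huIcc]; exact hg4c.integrableOn_compact isCompact_Icc
  have hφpos : ∀ t ∈ Set.Icc a b, 0 < φ t := by
    intro t ht
    have h1 : 0 < f a ^ (2*D) :=
      Real.rpow_pos_of_pos (hp a ⟨le_refl a, hab⟩) _
    have h2 : 0 ≤ ∫ s in a..t, g4 s := by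
      apply intervalIntegral.integral_nonneg ht.1
      intro s hs
      exact Real.rpow_nonneg (hp s ⟨hs.1, le_trans hs.2 ht.2⟩).le _
    simp only [hφdef]; linarith
  have hφle : ∀ t ∈ Set.Icc a b, φ t ≤ K * f t ^ (2*D) := hφ
  -- ψ and its derivative g
  set ψ : ℝ → ℝ := fun t => 2*D*c * φ t ^ (1/(2*D)) with hψdef
  set g : ℝ → ℝ := fun t => c * (φ t ^ (1/(2*D) - 1) * g4 t) with hgdef
  have hψc : ContinuousOn ψ (Set.Icc a b) := by
    apply continuousOn_const.mul
    exact hφc.rpow_const (fun x hx => Or.inl (hφpos x hx).ne')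
  have hgc : ContinuousOn g (Set.Icc a b) := by
    apply continuousOn_const.mul
    exact (hφc.rpow_const (fun x hx => Or.inl (hφpos x hx).ne')).mul hg4c
  have hgint : IntervalIntegrable g volume a b :=
    (hgc.mono (by rw [huIcc])).intervalIntegrable
  have hderiv : ∀ t ∈ Set.Ioo a b, HasDerivAt ψ (g t) t := by
    intro t ht
    have htIcc : t ∈ Set.Icc a b := Set.Ioo_subset_Icc_self ht
    have hg4int' : IntervalIntegrable g4 volume a t :=
      hg4int.mono_set (by rw [huIcc, Set.uIcc_of_le ht.1.le]
                          exact Set.Icc_subset_Icc le_rfl ht.2.le)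
    have hmeas : StronglyMeasurableAtFilter g4 (nhds t) volume :=
      (hg4c.mono Set.Ioo_subset_Icc_self).stronglyMeasurableAtFilter isOpen_Ioo t ht
    have hcat : ContinuousAt g4 t :=
      (hg4c.mono Set.Ioo_subset_Icc_self).continuousAt (isOpen_Ioo.mem_nhds ht)
    have hφd : HasDerivAt φ (g4 t) t :=
      (intervalIntegral.integral_hasDerivAt_right hg4int' hmeas hcat).const_add _
    have hrpow : HasDerivAt (fun x : ℝ => x ^ (1/(2*D)))
        ((1/(2*D)) * φ t ^ (1/(2*D) - 1)) (φ t) :=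
      Real.hasDerivAt_rpow_const (Or.inl (hφpos t htIcc).ne')
    have := (hrpow.comp t hφd).const_mul (2*D*c)
    refine this.congr_deriv ?_
    simp only [hgdef, Function.comp]
    field_simp
  -- pointwise bound
  have hle : ∀ t ∈ Set.Icc a b, f t ^ (2*D-1) ≤ g t := by
    intro t ht
    set z := f t with hz
    have hz0 : 0 < z := hp t ht
    set F := φ t with hF
    have hF0 : 0 < F := hφpos t ht
    have hFe0 : 0 < F ^ e := Real.rpow_pos_of_pos hF0 e
    have key : F ^ e ≤ c * z ^ (2*D-1) := by
      have h1 : F ^ e ≤ (K * z ^ (2*D)) ^ e :=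
        Real.rpow_le_rpow hF0.le (hφle t ht) he0.le
      have h2 : (K * z ^ (2*D)) ^ e = c * z ^ (2*D-1) := by
        rw [Real.mul_rpow hK0.le (Real.rpow_nonneg hz0.le _),
          ← Real.rpow_mul hz0.le]
        congr 1
        rw [he]
        field_simp
      rw [h2] at h1; exact h1
    have hgt : g t = c * z ^ (4*D-2) / F ^ e := by
      have hDne : (2*D) ≠ 0 := hD2.ne'
      have hexp : (1/(2*D) - 1 : ℝ) = -e := by
        rw [he]; field_simp; ring
      simp only [hgdef, hg4]
      rw [hexp, Real.rpow_neg hF0.le]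
      field_simp
      try ring
    rw [hgt, le_div_iff₀ hFe0]
    calc z ^ (2*D-1) * F ^ e ≤ z ^ (2*D-1) * (c * z ^ (2*D-1)) := by
          exact mul_le_mul_of_nonneg_left key (Real.rpow_nonneg hz0.le _)
      _ = c * z ^ (4*D-2) := by
          rw [show (4*D-2 : ℝ) = (2*D-1) + (2*D-1) by ring,
            Real.rpow_add hz0]
          ring
  -- conclude
  have hfint : IntervalIntegrable (fun t => f t ^ (2*D-1)) volume a b := by
    apply ContinuousOn.intervalIntegrable
    rw [huIcc]
    exact hc.rpow_const (fun x hx => Or.inr (by linarith))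
  have hmono : (∫ t in a..b, f t ^ (2*D-1)) ≤ ∫ t in a..b, g t :=
    intervalIntegral.integral_mono_on hab hfint hgint hle
  have hftc : (∫ t in a..b, g t) = ψ b - ψ a :=
    intervalIntegral.integral_eq_sub_of_hasDeriv_right_of_le hab hψc
      (fun t ht => (hderiv t ht).hasDerivWithinAt) hgint
  have hψa : 0 ≤ ψ a := by
    have := (hφpos a ⟨le_rfl, hab⟩)
    have : 0 ≤ φ a ^ (1/(2*D)) := Real.rpow_nonneg this.le _
    simp only [hψdef]
    positivity
  have hψb : ψ b ≤ 2 * D * K * f b := by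
    have hb : b ∈ Set.Icc a b := ⟨hab, le_rfl⟩
    have h1 : φ b ^ (1/(2*D)) ≤ (K * f b ^ (2*D)) ^ (1/(2*D)) :=
      Real.rpow_le_rpow (hφpos b hb).le (hφle b hb) (by positivity)
    have h2 : (K * f b ^ (2*D)) ^ (1/(2*D)) = K ^ (1/(2*D)) * f b := by
      rw [Real.mul_rpow hK0.le (Real.rpow_nonneg (hp b hb).le _),
        ← Real.rpow_mul (hp b hb).le]
      congr 1
      rw [show (2*D) * (1/(2*D)) = (1:ℝ) by field_simp, Real.rpow_one]
    have h3 : c * K ^ (1/(2*D)) = K := by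
      rw [hc', ← Real.rpow_add hK0]
      rw [show e + 1/(2*D) = (1:ℝ) by rw [he]; field_simp; ring, Real.rpow_one]
    calc ψ b = 2*D*c * φ b ^ (1/(2*D)) := rfl
      _ ≤ 2*D*c * (K ^ (1/(2*D)) * f b) := by
          rw [← h2]; exact mul_le_mul_of_nonneg_left h1 (by positivity)
      _ = 2 * D * (c * K ^ (1/(2*D))) * f b := by ring
      _ = 2 * D * K * f b := by rw [h3]
  linarith

lemma core_aux' (D K : ℝ) (hD : 1 < D) (hK : 1 ≤ K) (a b : ℝ) (hab : a ≤ b)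
    (f : ℝ → ℝ) (hc : ContinuousOn f (Set.Icc a b))
    (hp : ∀ t ∈ Set.Icc a b, 0 < f t)
    (hφ : ∀ t ∈ Set.Icc a b,
      f b ^ (2*D) + (∫ s in t..b, f s ^ (4*D-2)) ≤ K * f t ^ (2*D)) :
    (∫ t in a..b, f t ^ (2*D-1)) ≤ 2 * D * K * f a := by
  set g : ℝ → ℝ := fun t => f (a + b - t) with hg
  have hmaps : ∀ t ∈ Set.Icc a b, a + b - t ∈ Set.Icc a b := by
    intro t ht; exact ⟨by linarith [ht.2], by linarith [ht.1]⟩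
  have hgc : ContinuousOn g (Set.Icc a b) :=
    hc.comp ((continuous_const.sub continuous_id).continuousOn) hmaps
  have hgp : ∀ t ∈ Set.Icc a b, 0 < g t := fun t ht => hp _ (hmaps t ht)
  have hgφ : ∀ t ∈ Set.Icc a b,
      g a ^ (2*D) + (∫ s in a..t, g s ^ (4*D-2)) ≤ K * g t ^ (2*D) := by
    intro t ht
    have h1 : (∫ s in a..t, g s ^ (4*D-2)) = ∫ s in (a+b-t)..b, f s ^ (4*D-2) := by
      have h := intervalIntegral.integral_comp_sub_left
        (a := a) (b := t) (fun s => f s ^ (4*D-2)) (a+b)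
      simp only [hg] at h ⊢
      rw [h]
      congr 1
      ring
    rw [h1]
    have hga : g a = f b := by simp [hg]
    rw [hga]
    exact hφ _ (hmaps t ht)
  have hmain := core_aux D K hD hK a b hab g hgc hgp hgφ
  have h2 : (∫ t in a..b, g t ^ (2*D-1)) = ∫ t in a..b, f t ^ (2*D-1) := by
    have h := intervalIntegral.integral_comp_sub_left
      (a := a) (b := b) (fun s => f s ^ (2*D-1)) (a+b)
    simp only [hg]
    rw [h]
    congr 1 <;> ring
  have h3 : g b = f a := by simp [hg]
  rw [h2, h3] at hmain
  exact hmain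

/-- If a continuous positive ζ on [t_n, T_n) satisfies
∫_{τ₁}^{τ₂} ζ^{4D−2} ≤ C₀(ζ(τ₁)^{2D} + ζ(τ₂)^{2D}) for all τ₁ < τ₂ in [t_n, T_n),
then there is C₁ = C₁(C₀, D) with ∫_{τ₁}^{τ₂} ζ^{2D−1} ≤ C₁(ζ(τ₁) + ζ(τ₂)). -/
theorem stmt_14 (D : ℝ) (hD : 1 < D) (tn Tn : ℝ) (htn : tn < Tn)
    (ζ : ℝ → ℝ)
    (hcont : ContinuousOn ζ (Set.Ico tn Tn))
    (hpos : ∀ t ∈ Set.Ico tn Tn, 0 < ζ t)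
    (C₀ : ℝ)
    (hint : ∀ τ₁ ∈ Set.Ico tn Tn, ∀ τ₂ ∈ Set.Ico tn Tn, τ₁ < τ₂ →
      (∫ t in τ₁..τ₂, ζ t ^ (4 * D - 2)) ≤ C₀ * (ζ τ₁ ^ (2 * D) + ζ τ₂ ^ (2 * D))) :
    ∃ C₁ : ℝ, ∀ τ₁ ∈ Set.Ico tn Tn, ∀ τ₂ ∈ Set.Ico tn Tn, τ₁ < τ₂ →
      (∫ t in τ₁..τ₂, ζ t ^ (2 * D - 1)) ≤ C₁ * (ζ τ₁ + ζ τ₂) := by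
  have hD2 : (0:ℝ) < 2*D := by linarith
  -- C₀ is positive
  have hC₀ : 0 < C₀ := by
    set mid := (tn + Tn)/2 with hmid
    have hlt : tn < mid := by rw [hmid]; linarith
    have hmidIco : mid ∈ Set.Ico tn Tn := ⟨hlt.le, by rw [hmid]; linarith⟩
    have htn' : tn ∈ Set.Ico tn Tn := ⟨le_rfl, htn⟩
    have hIcc : Set.Icc tn mid ⊆ Set.Ico tn Tn :=
      fun x hx => ⟨hx.1, lt_of_le_of_lt hx.2 hmidIco.2⟩
    have hcontI : ContinuousOn (fun t => ζ t ^ (4*D-2)) (Set.Icc tn mid) :=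
      (hcont.mono hIcc).rpow_const (fun x hx => Or.inr (by linarith))
    have hintI : IntervalIntegrable (fun t => ζ t ^ (4*D-2)) MeasureTheory.volume tn mid :=
      (hcontI.mono (by rw [Set.uIcc_of_le hlt.le])).intervalIntegrable
    have hpos' : 0 < ∫ t in tn..mid, ζ t ^ (4*D-2) := by
      apply intervalIntegral.intervalIntegral_pos_of_pos_on hintI _ hlt
      intro x hx
      exact Real.rpow_pos_of_pos (hpos x (hIcc (Set.Ioo_subset_Icc_self hx))) _
    have h := hint tn htn' mid hmidIco hlt
    have h4 : (∫ t in tn..mid, ζ t ^ (4*D-2)) = ∫ t in tn..mid, ζ t ^ (4*D-2) := rfl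
    have hsum : 0 < ζ tn ^ (2*D) + ζ mid ^ (2*D) := by
      have := Real.rpow_pos_of_pos (hpos tn htn') (2*D)
      have := Real.rpow_pos_of_pos (hpos mid hmidIco) (2*D)
      linarith
    nlinarith [h, hpos']
  set K : ℝ := 1 + 2*C₀ with hKdef
  have hK : 1 ≤ K := by rw [hKdef]; linarith
  refine ⟨2*D*K, ?_⟩
  intro τ₁ h1 τ₂ h2 h12
  have hsub : Set.Icc τ₁ τ₂ ⊆ Set.Ico tn Tn :=
    fun x hx => ⟨le_trans h1.1 hx.1, lt_of_le_of_lt hx.2 h2.2⟩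
  have hcI : ContinuousOn ζ (Set.Icc τ₁ τ₂) := hcont.mono hsub
  have hpI : ∀ t ∈ Set.Icc τ₁ τ₂, 0 < ζ t := fun t ht => hpos t (hsub ht)
  obtain ⟨τ', hτ'mem, hmin⟩ :=
    isCompact_Icc.exists_isMinOn ⟨τ₁, Set.left_mem_Icc.mpr h12.le⟩ hcI
  have hminle : ∀ x ∈ Set.Icc τ₁ τ₂, ζ τ' ≤ ζ x := fun x hx => hmin hx
  have hτ'Ico : τ' ∈ Set.Ico tn Tn := hsub hτ'mem
  -- right piece
  have hsub2 : Set.Icc τ' τ₂ ⊆ Set.Icc τ₁ τ₂ := Set.Icc_subset_Icc hτ'mem.1 le_rfl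
  have hright : (∫ t in τ'..τ₂, ζ t ^ (2*D-1)) ≤ 2*D*K * ζ τ₂ := by
    apply core_aux D K hD hK τ' τ₂ hτ'mem.2 ζ (hcI.mono hsub2)
      (fun t ht => hpI t (hsub2 ht))
    intro t ht
    have htI : t ∈ Set.Icc τ₁ τ₂ := hsub2 ht
    have hmle : ζ τ' ^ (2*D) ≤ ζ t ^ (2*D) :=
      Real.rpow_le_rpow (hpI τ' hτ'mem).le (hminle t htI) (by linarith)
    rcases eq_or_lt_of_le ht.1 with heq | hlt
    · rw [← heq]
      rw [intervalIntegral.integral_same]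
      have := Real.rpow_pos_of_pos (hpI τ' hτ'mem) (2*D)
      nlinarith
    · have h := hint τ' hτ'Ico t (hsub htI) hlt
      have e1 : K * ζ t ^ (2*D) = ζ t ^ (2*D) + (C₀ * ζ t ^ (2*D)) + (C₀ * ζ t ^ (2*D)) := by
        rw [hKdef]; ring
      have e2 : C₀ * (ζ τ' ^ (2*D) + ζ t ^ (2*D)) = C₀ * ζ τ' ^ (2*D) + C₀ * ζ t ^ (2*D) := by ring
      have e3 : C₀ * ζ τ' ^ (2*D) ≤ C₀ * ζ t ^ (2*D) := mul_le_mul_of_nonneg_left hmle hC₀.le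
      rw [e2] at h
      rw [show (4*D-2 : ℝ) = 4*D-2 from rfl]
      linarith [h, e3, hmle]
  -- left piece
  have hsub3 : Set.Icc τ₁ τ' ⊆ Set.Icc τ₁ τ₂ := Set.Icc_subset_Icc le_rfl hτ'mem.2
  have hleft : (∫ t in τ₁..τ', ζ t ^ (2*D-1)) ≤ 2*D*K * ζ τ₁ := by
    apply core_aux' D K hD hK τ₁ τ' hτ'mem.1 ζ (hcI.mono hsub3)
      (fun t ht => hpI t (hsub3 ht))
    intro t ht
    have htI : t ∈ Set.Icc τ₁ τ₂ := hsub3 ht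
    have hmle : ζ τ' ^ (2*D) ≤ ζ t ^ (2*D) :=
      Real.rpow_le_rpow (hpI τ' hτ'mem).le (hminle t htI) (by linarith)
    rcases eq_or_lt_of_le ht.2 with heq | hlt
    · rw [heq]
      rw [intervalIntegral.integral_same]
      have := Real.rpow_pos_of_pos (hpI τ' hτ'mem) (2*D)
      nlinarith
    · have h := hint t (hsub htI) τ' hτ'Ico hlt
      have e1 : K * ζ t ^ (2*D) = ζ t ^ (2*D) + (C₀ * ζ t ^ (2*D)) + (C₀ * ζ t ^ (2*D)) := by
        rw [hKdef]; ring
      have e2 : C₀ * (ζ t ^ (2*D) + ζ τ' ^ (2*D)) = C₀ * ζ t ^ (2*D) + C₀ * ζ τ' ^ (2*D) := by ring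
      have e3 : C₀ * ζ τ' ^ (2*D) ≤ C₀ * ζ t ^ (2*D) := mul_le_mul_of_nonneg_left hmle hC₀.le
      rw [e2] at h
      linarith [h, e3, hmle]
  -- combine
  have hcont21 : ContinuousOn (fun t => ζ t ^ (2*D-1)) (Set.Icc τ₁ τ₂) :=
    hcI.rpow_const (fun x hx => Or.inr (by linarith))
  have hi1 : IntervalIntegrable (fun t => ζ t ^ (2*D-1)) MeasureTheory.volume τ₁ τ' := by
    apply ContinuousOn.intervalIntegrable
    rw [Set.uIcc_of_le hτ'mem.1]
    exact hcont21.mono hsub3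
  have hi2 : IntervalIntegrable (fun t => ζ t ^ (2*D-1)) MeasureTheory.volume τ' τ₂ := by
    apply ContinuousOn.intervalIntegrable
    rw [Set.uIcc_of_le hτ'mem.2]
    exact hcont21.mono hsub2
  have hadd := intervalIntegral.integral_add_adjacent_intervals hi1 hi2
  rw [← hadd]
  have hring : 2*D*K * (ζ τ₁ + ζ τ₂) = 2*D*K * ζ τ₁ + 2*D*K * ζ τ₂ := by ring
  linarith
end

section
/- Let J ≥ 2, N ≥ 1, and let κ₀, κ₁, κ_∞ > 0 and ι_i ∈ {±1}. Consider the smooth ODE system for λ_i(t) ∈ (0,∞) and z_i(t) ∈ ℝ^N (with z_i pairwise distinct): λ_i·λ_{i,t} = κ₀κ_∞ ∑_{j≠i} ι_iι_j λ_i^{(N−2)/2} λ_j^{(N−2)/2} / |z_j − z_i|^{N−2}, and z_{i,t} = κ₁κ_∞ ∑_{j≠i} ι_iι_j λ_i^{(N−2)/2} λ_j^{(N−2)/2} (z_j − z_i)/|z_j − z_i|^N. Then along any solution: (a) d/dt (z_1 + ⋯ + z_J) = 0; (b) d/dt [ (λ_1² + ⋯ + λ_J²) + (2κ₀/κ₁)(|z_1|²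 + ⋯ + |z_J|²) ] = 0. -/
open scoped RealInnerProductSpace

private lemma antisym_sum {M : Type*} [AddCommGroup M] [Module ℝ M] {n : ℕ}
    (f : Fin n → Fin n → M) (h : ∀ i j, f i j = - f j i) :
    ∑ i, ∑ j, f i j = 0 := by
  have h1 : (∑ i, ∑ j, f i j) = - ∑ i, ∑ j, f i j := by
    calc ∑ i, ∑ j, f i j = ∑ j, ∑ i, f i j := Finset.sum_comm
      _ = ∑ j, ∑ i, -(f j i) :=
          Finset.sum_congr rfl fun j _ => Finset.sum_congr rfl fun i _ => h i j
      _ = - ∑ j, ∑ i, f j i := by simp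
  have h2 : (2:ℝ) • (∑ i, ∑ j, f i j) = 0 := by
    rw [two_smul]
    nth_rewrite 2 [h1]
    simp
  rcases smul_eq_zero.mp h2 with h' | h'
  · norm_num at h'
  · exact h'

private lemma pair_cancel {n u r X Y : ℝ} (hu : u ≠ 0) (hr : r ≠ 0)
    (hXY : X + Y = -(r ^ 2)) :
    n / u + 2 * (n / (u * r ^ 2) * X) = -(n / u + 2 * (n / (u * r ^ 2) * Y)) := by
  have key : n / (u * r ^ 2) * r ^ 2 = n / u := by
    rw [div_mul_eq_mul_div, mul_comm u (r ^ 2), ← div_div,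
      mul_div_assoc, div_self (pow_ne_zero _ hr), mul_one]
  linear_combination (2 * (n / (u * r ^ 2))) * hXY - 2 * key

/-- Conservation laws for the formal multi-bubble ODE system:
along any solution of
  λ_i λ_{i,t} = κ₀κ_∞ ∑_{j≠i} ι_iι_j λ_i^{(N−2)/2} λ_j^{(N−2)/2} / |z_j − z_i|^{N−2},
  z_{i,t} = κ₁κ_∞ ∑_{j≠i} ι_iι_j λ_i^{(N−2)/2} λ_j^{(N−2)/2} (z_j − z_i)/|z_j − z_i|^N,
(with z_i pairwise distinct and λ_i > 0) one has
(a) d/dt (z₁ + ⋯ + z_J) = 0 and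
(b) d/dt [∑ λ_i² + (2κ₀/κ₁) ∑ |z_i|²] = 0. -/
theorem stmt_17 (J N : ℕ) (hJ : 2 ≤ J) (hN : 1 ≤ N)
    (κ₀ κ₁ κe : ℝ) (hκ₀ : 0 < κ₀) (hκ₁ : 0 < κ₁) (hκe : 0 < κe)
    (ι : Fin J → ℝ) (hι : ∀ i, ι i = 1 ∨ ι i = -1)
    (I : Set ℝ)
    (lam lam' : Fin J → ℝ → ℝ)
    (z z' : Fin J → ℝ → EuclideanSpace ℝ (Fin N))
    (hlampos : ∀ t ∈ I, ∀ i, 0 < lam i t)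
    (hdist : ∀ t ∈ I, ∀ i j, i ≠ j → z i t ≠ z j t)
    (hlamderiv : ∀ t ∈ I, ∀ i, HasDerivAt (lam i) (lam' i t) t)
    (hzderiv : ∀ t ∈ I, ∀ i, HasDerivAt (z i) (z' i t) t)
    (hlameq : ∀ t ∈ I, ∀ i, lam i t * lam' i t =
      κ₀ * κe * ∑ j, (if j ≠ i then
        ι i * ι j * lam i t ^ (((N : ℝ) - 2) / 2) * lam j t ^ (((N : ℝ) - 2) / 2) /
          ‖z j t - z i t‖ ^ ((N : ℝ) - 2)
      else 0))
    (hzeq : ∀ t ∈ I, ∀ i, z' i t =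
      (κ₁ * κe) • ∑ j, (if j ≠ i then
        (ι i * ι j * lam i t ^ (((N : ℝ) - 2) / 2) * lam j t ^ (((N : ℝ) - 2) / 2) /
          ‖z j t - z i t‖ ^ (N : ℝ)) • (z j t - z i t)
      else 0)) :
    ∀ t ∈ I,
      HasDerivAt (fun s => ∑ i, z i s) (0 : EuclideanSpace ℝ (Fin N)) t ∧
      HasDerivAt (fun s => (∑ i, (lam i s) ^ 2) + (2 * κ₀ / κ₁) * ∑ i, ‖z i s‖ ^ 2)
        (0 : ℝ) t := by
  intro t ht
  have hrpos : ∀ i j : Fin J, j ≠ i → (0:ℝ) < ‖z j t - z i t‖ := fun i j hij =>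
    norm_pos_iff.mpr (sub_ne_zero.mpr (hdist t ht j i hij))
  -- abbreviations
  set p : ℝ := ((N : ℝ) - 2) / 2 with hp
  set a : Fin J → Fin J → ℝ := fun i j =>
    ι i * ι j * lam i t ^ p * lam j t ^ p / ‖z j t - z i t‖ ^ ((N : ℝ) - 2) with ha
  set b : Fin J → Fin J → ℝ := fun i j =>
    ι i * ι j * lam i t ^ p * lam j t ^ p / ‖z j t - z i t‖ ^ (N : ℝ) with hb
  have hnum : ∀ i j : Fin J,
      ι j * ι i * lam j t ^ p * lam i t ^ p = ι i * ι j * lam i t ^ p * lam j t ^ p :=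
    fun i j => by ring
  have hsplit : ∀ i j : Fin J, j ≠ i →
      ‖z j t - z i t‖ ^ (N : ℝ) = ‖z j t - z i t‖ ^ ((N : ℝ) - 2) * ‖z j t - z i t‖ ^ 2 := by
    intro i j hij
    rw [← Real.rpow_two, ← Real.rpow_add (hrpos i j hij)]
    norm_num
  constructor
  · -- part (a)
    have h1 : HasDerivAt (fun s => ∑ i, z i s) (∑ i, z' i t) t :=
      HasDerivAt.fun_sum (fun i _ => hzderiv t ht i)
    have h0 : ∑ i, z' i t = 0 := by
      have hz' : ∀ i, z' i t = ∑ j,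
          (if j ≠ i then ((κ₁ * κe) * b i j) • (z j t - z i t) else 0) := by
        intro i
        rw [hzeq t ht i, Finset.smul_sum]
        refine Finset.sum_congr rfl fun j _ => ?_
        split
        · rw [smul_smul]
        · simp
      rw [Finset.sum_congr rfl fun i _ => hz' i]
      refine antisym_sum _ fun i j => ?_
      by_cases hij : j = i
      · subst hij; simp
      · have hji : ¬ i = j := fun h => hij h.symm
        simp only [ne_eq, hij, hji, not_false_eq_true, if_true]
        have hc : (κ₁ * κe) * b j i = (κ₁ * κe) * b i j := by
          simp only [ha, hb]
          rw [norm_sub_rev (z i t) (z j t), hnum]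
        rw [hc, ← smul_neg, neg_sub]
    rw [← h0]; exact h1
  · -- part (b)
    have hlderiv : ∀ i, HasDerivAt (fun s => lam i s ^ 2) (2 * (lam i t * lam' i t)) t := by
      intro i
      have h := (hlamderiv t ht i).pow 2
      exact h.congr_deriv (by norm_num [mul_assoc])
    have hnder : ∀ i, HasDerivAt (fun s => ‖z i s‖ ^ 2) (2 * ⟪z i t, z' i t⟫) t := by
      intro i
      have h := (hzderiv t ht i).inner ℝ (hzderiv t ht i)
      have hfun : (fun s => ‖z i s‖ ^ 2) = fun s => ⟪z i s, z i s⟫ := by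
        funext s; rw [real_inner_self_eq_norm_sq]
      rw [hfun]
      exact h.congr_deriv (by rw [real_inner_comm (z i t) (z' i t)]; ring)
    have hD : HasDerivAt
        (fun s => (∑ i, lam i s ^ 2) + (2 * κ₀ / κ₁) * ∑ i, ‖z i s‖ ^ 2)
        ((∑ i, 2 * (lam i t * lam' i t)) + (2 * κ₀ / κ₁) * ∑ i, 2 * ⟪z i t, z' i t⟫) t :=
      (HasDerivAt.fun_sum fun i _ => hlderiv i).add
        ((HasDerivAt.fun_sum fun i _ => hnder i).const_mul _)
    have hinner : ∀ i, ⟪z i t, z' i t⟫ =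
        (κ₁ * κe) * ∑ j, (if j ≠ i then b i j * ⟪z i t, z j t - z i t⟫ else 0) := by
      intro i
      rw [hzeq t ht i, real_inner_smul_right, inner_sum]
      congr 1
      refine Finset.sum_congr rfl fun j _ => ?_
      split
      · rw [real_inner_smul_right]
      · simp
    have key : ∑ i, ∑ j,
        (if j ≠ i then a i j + 2 * (b i j * ⟪z i t, z j t - z i t⟫) else 0) = 0 := by
      refine antisym_sum _ fun i j => ?_
      by_cases hij : j = i
      · subst hij; simp
      · have hji : ¬ i = j := fun h => hij h.symm
        simp only [ne_eq, hij, hji, not_false_eq_true, if_true]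
        have hXY : ⟪z i t, z j t - z i t⟫ + ⟪z j t, z i t - z j t⟫
            = -(‖z j t - z i t‖ ^ 2) := by
          have e1 : ⟪z j t, z i t⟫ = ⟪z i t, z j t⟫ := real_inner_comm _ _
          rw [← real_inner_self_eq_norm_sq]
          simp only [inner_sub_left, inner_sub_right, e1]
          ring
        have hu : ‖z j t - z i t‖ ^ ((N : ℝ) - 2) ≠ 0 :=
          (Real.rpow_pos_of_pos (hrpos i j hij) _).ne'
        have hr : ‖z j t - z i t‖ ≠ 0 := (hrpos i j hij).ne'
        simp only [ha, hb]
        rw [norm_sub_rev (z i t) (z j t), hnum, hsplit i j hij]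
        exact pair_cancel hu hr hXY
    have hD0 : (∑ i, 2 * (lam i t * lam' i t)) + (2 * κ₀ / κ₁) * ∑ i, 2 * ⟪z i t, z' i t⟫
        = 0 := by
      have hsum : ∀ i, 2 * (lam i t * lam' i t) + (2 * κ₀ / κ₁) * (2 * ⟪z i t, z' i t⟫)
          = (2 * κ₀ * κe) * ∑ j,
            (if j ≠ i then a i j + 2 * (b i j * ⟪z i t, z j t - z i t⟫) else 0) := by
        intro i
        have hmerge : (∑ j, (if j ≠ i then a i j else 0))
            + 2 * (∑ j, (if j ≠ i then b i j * ⟪z i t, z j t - z i t⟫ else 0))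
            = ∑ j, (if j ≠ i then a i j + 2 * (b i j * ⟪z i t, z j t - z i t⟫) else 0) := by
          rw [Finset.mul_sum, ← Finset.sum_add_distrib]
          exact Finset.sum_congr rfl fun j _ => by split <;> ring
        rw [hlameq t ht i, hinner i, ← hmerge]
        field_simp
        ring
      calc (∑ i, 2 * (lam i t * lam' i t)) + (2 * κ₀ / κ₁) * ∑ i, 2 * ⟪z i t, z' i t⟫
          = ∑ i, (2 * (lam i t * lam' i t) + (2 * κ₀ / κ₁) * (2 * ⟪z i t, z' i t⟫)) := by
            rw [Finset.sum_add_distrib, Finset.mul_sum]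
        _ = ∑ i, (2 * κ₀ * κe) * ∑ j,
            (if j ≠ i then a i j + 2 * (b i j * ⟪z i t, z j t - z i t⟫) else 0) :=
            Finset.sum_congr rfl fun i _ => hsum i
        _ = (2 * κ₀ * κe) * ∑ i, ∑ j,
            (if j ≠ i then a i j + 2 * (b i j * ⟪z i t, z j t - z i t⟫) else 0) :=
            (Finset.mul_sum _ _ _).symm
        _ = 0 := by rw [key, mul_zero]
    rw [← hD0]
    exact hD
end

section
/- Let J ≥ 2, D > 1, δ₁ > 0, and let A be a real symmetric J×J matrix. Suppose λ ∈ (0,∞)^J satisfies, for every nonempty subset I ⊆ {1,…,J}: |A_I · λ_I^D| / |λ_I^D| + ∑_{i∉I} λ_i / λ_max ≥ δ₁, where λ_max = max_i λ_i, λ_I^D = (λ_i^D)_{i∈I}, and A_I is the principal submatrix on indices I. Then: (a) λ_secmax ≥ c·δ₁·λ_max for the second-largest entry λ_secmax and some universal constant c > 0; and (b) ∑_{i=1}^J (Aλ^D)_i² · λ_i^{2D−2} ≥ c(δ₁)·λ_max^{4D−2} for some constant c(δ₁) > 0 depending only on δ₁, J, D, and A. -/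
open Finset in
lemma stmt_18_aux (J : ℕ) (D : ℝ) (hD : 1 < D) (δ₁ : ℝ) (hδ₁ : 0 < δ₁)
    (A : Matrix (Fin J) (Fin J) ℝ) (i₀ : Fin J) :
    ∃ ε : ℝ, 0 < ε ∧ ∀ l : Fin J → ℝ, (∀ i, 0 ≤ l i ∧ l i ≤ 1) → l i₀ = 1 →
      (∀ I : Finset (Fin J), i₀ ∈ I →
        δ₁ ≤ Real.sqrt (∑ i ∈ I, (∑ j ∈ I, A i j * l j ^ D) ^ 2) /
               max (Real.sqrt (∑ i ∈ I, (l i ^ D) ^ 2)) (1/2) +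
             ∑ i ∈ Iᶜ, l i) →
      ε ≤ ∑ i, (∑ j, A i j * l j ^ D) ^ 2 * l i ^ (2*D-2) := by
  have hD0 : (0:ℝ) < D := by linarith
  have hD2 : (0:ℝ) < 2*D-2 := by linarith
  -- continuity of rpow maps
  have hcD : Continuous (fun x : ℝ => x ^ D) :=
    continuous_iff_continuousAt.mpr fun x => Real.continuousAt_rpow_const x D (Or.inr hD0.le)
  have hcD2 : Continuous (fun x : ℝ => x ^ (2*D-2)) :=
    continuous_iff_continuousAt.mpr fun x => Real.continuousAt_rpow_const x (2*D-2) (Or.inr hD2.le)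
  set F : (Fin J → ℝ) → ℝ := fun l => ∑ i, (∑ j, A i j * l j ^ D) ^ 2 * l i ^ (2*D-2) with hF
  have hFc : Continuous F := by
    apply continuous_finset_sum
    intro i _
    exact ((continuous_finset_sum _ fun j _ =>
      (continuous_const.mul (hcD.comp (continuous_apply j)))).pow 2).mul
      (hcD2.comp (continuous_apply i))
  set g : Finset (Fin J) → (Fin J → ℝ) → ℝ := fun I l =>
    Real.sqrt (∑ i ∈ I, (∑ j ∈ I, A i j * l j ^ D) ^ 2) /
      max (Real.sqrt (∑ i ∈ I, (l i ^ D) ^ 2)) (1/2) + ∑ i ∈ Iᶜ, l i with hg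
  have hgc : ∀ I, Continuous (g I) := by
    intro I
    apply Continuous.add
    · apply Continuous.div
      · exact (continuous_finset_sum _ fun i _ => (continuous_finset_sum _ fun j _ =>
          (continuous_const.mul (hcD.comp (continuous_apply j)))).pow 2).sqrt
      · exact ((continuous_finset_sum _ fun i _ =>
          ((hcD.comp (continuous_apply i)).pow 2)).sqrt).max continuous_const
      · intro l
        have : (1:ℝ)/2 ≤ max (Real.sqrt (∑ i ∈ I, (l i ^ D) ^ 2)) (1/2) := le_max_right _ _
        positivity
    · exact continuous_finset_sum _ fun i _ => continuous_apply i
  set C : Set (Fin J → ℝ) :=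
    (Set.pi Set.univ fun _ : Fin J => Set.Icc (0:ℝ) 1) ∩
      ({l | l i₀ = 1} ∩ ⋂ (I : Finset (Fin J)) (_ : i₀ ∈ I), {l | δ₁ ≤ g I l}) with hC
  have hCcpt : IsCompact C := by
    apply IsCompact.inter_right (isCompact_univ_pi fun _ => isCompact_Icc)
    apply IsClosed.inter
    · exact isClosed_eq (continuous_apply i₀) continuous_const
    · exact isClosed_iInter fun I => isClosed_iInter fun _ =>
        isClosed_le continuous_const (hgc I)
  -- F is positive on C
  have hFpos : ∀ l ∈ C, 0 < F l := by
    rintro l ⟨hbox, hl1, hcon⟩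
    simp only [Set.mem_pi, Set.mem_univ, forall_true_left, Set.mem_Icc] at hbox
    simp only [Set.mem_setOf_eq] at hl1
    by_contra hnot
    push_neg at hnot
    have hterm : ∀ i ∈ Finset.univ, (0:ℝ) ≤ (∑ j, A i j * l j ^ D) ^ 2 * l i ^ (2*D-2) :=
      fun i _ => mul_nonneg (sq_nonneg _) (Real.rpow_nonneg (hbox i).1 _)
    have hF0 : F l = 0 := le_antisymm hnot (Finset.sum_nonneg hterm)
    have hzero := (Finset.sum_eq_zero_iff_of_nonneg hterm).mp hF0
    set I : Finset (Fin J) := Finset.univ.filter (fun i => l i ≠ 0) with hI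
    have hi₀I : i₀ ∈ I := by simp [hI, hl1]
    have hinC := Set.mem_iInter.mp (Set.mem_iInter.mp hcon I) hi₀I
    simp only [Set.mem_setOf_eq] at hinC
    have hnum : ∀ i ∈ I, (∑ j ∈ I, A i j * l j ^ D) = 0 := by
      intro i hiI
      have hpos : 0 < l i := lt_of_le_of_ne (hbox i).1 (Ne.symm (by simpa [hI] using hiI))
      have h1 := hzero i (Finset.mem_univ i)
      have h2 : (∑ j, A i j * l j ^ D) = 0 := by
        have := mul_eq_zero.mp h1
        rcases this with h | h
        · exact pow_eq_zero_iff two_ne_zero |>.mp h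
        · exact absurd h (ne_of_gt (Real.rpow_pos_of_pos hpos _))
      rw [← h2]
      apply Finset.sum_subset (Finset.subset_univ I)
      intro j _ hjI
      have : l j = 0 := by by_contra h; exact hjI (by simp [hI, h])
      rw [this, Real.zero_rpow (ne_of_gt hD0), mul_zero]
    have hnum0 : (∑ i ∈ I, (∑ j ∈ I, A i j * l j ^ D) ^ 2) = 0 :=
      Finset.sum_eq_zero fun i hi => by rw [hnum i hi]; ring
    have hoff : (∑ i ∈ Iᶜ, l i) = 0 := Finset.sum_eq_zero fun i hi => by
      by_contra h
      exact (Finset.mem_compl.mp hi) (by simp [hI, h])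
    rw [hg] at hinC
    simp only [hnum0, hoff, Real.sqrt_zero, zero_div, add_zero] at hinC
    linarith
  by_cases hne : C.Nonempty
  · obtain ⟨a, haC, hmin⟩ := hCcpt.exists_isMinOn hne hFc.continuousOn
    refine ⟨F a, hFpos a haC, fun l hbox hl1 hcon => ?_⟩
    have hlC : l ∈ C := by
      refine ⟨?_, hl1, ?_⟩
      · intro i _; exact Set.mem_Icc.mpr (hbox i)
      · exact Set.mem_iInter.mpr fun I => Set.mem_iInter.mpr fun hI => hcon I hI
    exact hmin hlC
  · refine ⟨1, one_pos, fun l hbox hl1 hcon => ?_⟩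
    exact absurd ⟨l, ⟨fun i _ => Set.mem_Icc.mpr (hbox i), hl1,
      Set.mem_iInter.mpr fun I => Set.mem_iInter.mpr fun hI => hcon I hI⟩⟩ hne

/-- If a symmetric J×J matrix A (with zero diagonal) and λ ∈ (0,∞)^J satisfy, for every
nonempty I ⊆ {1,…,J}, |A_I λ_I^D|/|λ_I^D| + ∑_{i∉I} λ_i/λ_max ≥ δ₁, then
(a) λ_secmax ≥ c δ₁ λ_max (i.e. two distinct entries are ≥ c δ₁ λ_max), and
(b) ∑_i (Aλ^D)_i² λ_i^{2D−2} ≥ c(δ₁) λ_max^{4D−2}, with constants uniform in λ.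
(λ_max is encoded by an arbitrary index i₀ achieving the maximum.) -/
theorem stmt_18 (J : ℕ) (hJ : 2 ≤ J) (D : ℝ) (hD : 1 < D) (δ₁ : ℝ) (hδ₁ : 0 < δ₁)
    (A : Matrix (Fin J) (Fin J) ℝ) (hsymm : A.IsSymm) (hdiag : ∀ i, A i i = 0) :
    ∃ c c' : ℝ, 0 < c ∧ 0 < c' ∧
      ∀ l : Fin J → ℝ, (∀ i, 0 < l i) →
        ∀ i₀ : Fin J, (∀ i, l i ≤ l i₀) →
        (∀ I : Finset (Fin J), I.Nonempty →
          δ₁ ≤ Real.sqrt (∑ i ∈ I, (∑ j ∈ I, A i j * l j ^ D) ^ 2) /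
                 Real.sqrt (∑ i ∈ I, (l i ^ D) ^ 2) +
               ∑ i ∈ Iᶜ, l i / l i₀) →
        (∃ i j : Fin J, i ≠ j ∧ c * δ₁ * l i₀ ≤ l i ∧ c * δ₁ * l i₀ ≤ l j) ∧
        c' * l i₀ ^ (4 * D - 2) ≤
          ∑ i, (A.mulVec (fun j => l j ^ D) i) ^ 2 * l i ^ (2 * D - 2) := by
  have hD0 : (0:ℝ) < D := by linarith
  have hJ0 : (0:ℝ) < (J:ℝ) := by positivity
  have key : ∀ i₀ : Fin J, ∃ ε : ℝ, 0 < ε ∧ ∀ l : Fin J → ℝ,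
      (∀ i, 0 ≤ l i ∧ l i ≤ 1) → l i₀ = 1 →
      (∀ I : Finset (Fin J), i₀ ∈ I →
        δ₁ ≤ Real.sqrt (∑ i ∈ I, (∑ j ∈ I, A i j * l j ^ D) ^ 2) /
               max (Real.sqrt (∑ i ∈ I, (l i ^ D) ^ 2)) (1/2) +
             ∑ i ∈ Iᶜ, l i) →
      ε ≤ ∑ i, (∑ j, A i j * l j ^ D) ^ 2 * l i ^ (2*D-2) :=
    fun i₀ => stmt_18_aux J D hD δ₁ hδ₁ A i₀
  choose ε hεpos hεle using key
  have hne : (Finset.univ : Finset (Fin J)).Nonempty :=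
    ⟨⟨0, by omega⟩, Finset.mem_univ _⟩
  refine ⟨1/J, Finset.univ.inf' hne ε, by positivity, ?_, ?_⟩
  · exact (Finset.lt_inf'_iff hne).mpr fun i _ => hεpos i
  intro l hl i₀ hmax hcon
  have hm : 0 < l i₀ := hl i₀
  constructor
  · -- part (a)
    have h1 := hcon {i₀} ⟨i₀, Finset.mem_singleton_self i₀⟩
    simp only [Finset.sum_singleton, hdiag i₀, zero_mul] at h1
    norm_num at h1
    -- h1 : δ₁ ≤ ∑ i ∈ {i₀}ᶜ, l i / l i₀
    have hcard : ({i₀}ᶜ : Finset (Fin J)).card = J - 1 := by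
      simp [Finset.card_compl]
    have hcne : ({i₀}ᶜ : Finset (Fin J)).Nonempty := by
      rw [← Finset.card_pos, hcard]; omega
    have hub : ∀ i ∈ ({i₀}ᶜ : Finset (Fin J)), l i / l i₀ ≤ 1 :=
      fun i _ => (div_le_one hm).mpr (hmax i)
    have hδJ : δ₁ ≤ (J:ℝ) - 1 := by
      have := Finset.sum_le_card_nsmul _ _ 1 hub
      rw [hcard] at this
      have : (∑ i ∈ ({i₀}ᶜ : Finset (Fin J)), l i / l i₀) ≤ ((J:ℝ) - 1) := by
        have hJ1 : ((J - 1 : ℕ) : ℝ) = (J:ℝ) - 1 := by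
          have : 1 ≤ J := by omega
          push_cast [this]; ring
        simpa [hJ1] using this
      linarith
    obtain ⟨i, hiI, hige⟩ : ∃ i ∈ ({i₀}ᶜ : Finset (Fin J)), δ₁ / J ≤ l i / l i₀ := by
      by_contra hno
      push_neg at hno
      have hsum : (∑ i ∈ ({i₀}ᶜ : Finset (Fin J)), l i / l i₀) <
          ∑ _i ∈ ({i₀}ᶜ : Finset (Fin J)), δ₁ / J :=
        Finset.sum_lt_sum_of_nonempty hcne hno
      rw [Finset.sum_const, hcard, nsmul_eq_mul] at hsum
      have hJ1 : ((J - 1 : ℕ) : ℝ) = (J:ℝ) - 1 := by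
        have : 1 ≤ J := by omega
        push_cast [this]; ring
      rw [hJ1] at hsum
      have : ((J:ℝ) - 1) * (δ₁ / J) < δ₁ := by
        rw [div_eq_mul_inv]
        have h2 : ((J:ℝ) - 1) * (δ₁ * (J:ℝ)⁻¹) = δ₁ * (((J:ℝ) - 1) / J) := by
          field_simp
        rw [h2]
        have : ((J:ℝ) - 1) / J < 1 := by
          rw [div_lt_one hJ0]; linarith
        nlinarith
      linarith
    refine ⟨i, i₀, fun h => (Finset.mem_compl.mp hiI) (by simp [h]), ?_, ?_⟩
    · have : δ₁ / J * l i₀ ≤ l i := by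
        rw [div_le_div_iff₀ hJ0 hm] at hige
        rw [div_mul_eq_mul_div, div_le_iff₀ hJ0]
        nlinarith
      calc 1/(J:ℝ) * δ₁ * l i₀ = δ₁ / J * l i₀ := by ring
        _ ≤ l i := this
    · have hδJ1 : δ₁ / J ≤ 1 := by
        rw [div_le_one hJ0]; linarith
      calc 1/(J:ℝ) * δ₁ * l i₀ = (δ₁ / J) * l i₀ := by ring
        _ ≤ 1 * l i₀ := by nlinarith
        _ = l i₀ := one_mul _
  · -- part (b)
    set m := l i₀ with hmdef
    set lh : Fin J → ℝ := fun i => l i / m with hlh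
    have hMpos : (0:ℝ) < (m ^ D) ^ 2 := by
      have := Real.rpow_pos_of_pos hm D
      positivity
    set M := (m ^ D) ^ 2 with hM
    have hlhD : ∀ j, lh j ^ D = l j ^ D / m ^ D := fun j =>
      Real.div_rpow (hl j).le hm.le D
    have hεb := hεle i₀ lh
      (fun i => ⟨div_nonneg (hl i).le hm.le, (div_le_one hm).mpr (hmax i)⟩)
      (div_self hm.ne')
      ?_
    swap
    · -- the rescaled constraint
      intro I hi₀I
      have h := hcon I ⟨i₀, hi₀I⟩
      have hnumnn : (0:ℝ) ≤ ∑ i ∈ I, (∑ j ∈ I, A i j * l j ^ D) ^ 2 :=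
        Finset.sum_nonneg fun i _ => sq_nonneg _
      have hdennn : (0:ℝ) ≤ ∑ i ∈ I, (l i ^ D) ^ 2 :=
        Finset.sum_nonneg fun i _ => sq_nonneg _
      have hnum : (∑ i ∈ I, (∑ j ∈ I, A i j * lh j ^ D) ^ 2)
          = (∑ i ∈ I, (∑ j ∈ I, A i j * l j ^ D) ^ 2) / M := by
        rw [Finset.sum_div]
        refine Finset.sum_congr rfl fun i _ => ?_
        have hin : ∑ j ∈ I, A i j * lh j ^ D = (∑ j ∈ I, A i j * l j ^ D) / m ^ D := by
          rw [Finset.sum_div]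
          exact Finset.sum_congr rfl fun j _ => by rw [hlhD j, mul_div_assoc]
        rw [hin, div_pow]
      have hden : (∑ i ∈ I, (lh i ^ D) ^ 2) = (∑ i ∈ I, (l i ^ D) ^ 2) / M := by
        rw [Finset.sum_div]
        refine Finset.sum_congr rfl fun i _ => ?_
        rw [hlhD i, div_pow]
      have hden1 : (1:ℝ) ≤ ∑ i ∈ I, (lh i ^ D) ^ 2 := by
        have h1 : (lh i₀ ^ D) ^ 2 = 1 := by
          rw [show lh i₀ = 1 from div_self hm.ne', Real.one_rpow]; norm_num
        calc (1:ℝ) = (lh i₀ ^ D) ^ 2 := h1.symm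
          _ ≤ ∑ i ∈ I, (lh i ^ D) ^ 2 :=
            Finset.single_le_sum (f := fun i => (lh i ^ D) ^ 2) (fun i _ => sq_nonneg _) hi₀I
      have hmax_eq : max (Real.sqrt (∑ i ∈ I, (lh i ^ D) ^ 2)) (1/2)
          = Real.sqrt (∑ i ∈ I, (lh i ^ D) ^ 2) := by
        apply max_eq_left
        calc (1:ℝ)/2 ≤ 1 := by norm_num
          _ = Real.sqrt 1 := Real.sqrt_one.symm
          _ ≤ _ := Real.sqrt_le_sqrt hden1
      have hdenpos : (0:ℝ) < ∑ i ∈ I, (l i ^ D) ^ 2 := by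
        have : (0:ℝ) < (l i₀ ^ D) ^ 2 := by
          have := Real.rpow_pos_of_pos hm D
          positivity
        calc (0:ℝ) < (l i₀ ^ D) ^ 2 := this
          _ ≤ _ := Finset.single_le_sum (f := fun i => (l i ^ D) ^ 2) (fun i _ => sq_nonneg _) hi₀I
      have hratio : Real.sqrt (∑ i ∈ I, (∑ j ∈ I, A i j * lh j ^ D) ^ 2) /
          Real.sqrt (∑ i ∈ I, (lh i ^ D) ^ 2)
          = Real.sqrt (∑ i ∈ I, (∑ j ∈ I, A i j * l j ^ D) ^ 2) /
            Real.sqrt (∑ i ∈ I, (l i ^ D) ^ 2) := by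
        rw [hnum, hden, Real.sqrt_div hnumnn, Real.sqrt_div hdennn]
        have hsM : Real.sqrt M ≠ 0 := by positivity
        have hsden : Real.sqrt (∑ i ∈ I, (l i ^ D) ^ 2) ≠ 0 := by positivity
        field_simp
      rw [hmax_eq, hratio]
      have hoff : (∑ i ∈ Iᶜ, lh i) = ∑ i ∈ Iᶜ, l i / m :=
        Finset.sum_congr rfl fun i _ => rfl
      rw [hoff]
      exact h
    -- now rescale the conclusion
    have hKpos : (0:ℝ) < m ^ (4*D-2) := Real.rpow_pos_of_pos hm _
    have hscale : (∑ i, (∑ j, A i j * lh j ^ D) ^ 2 * lh i ^ (2*D-2))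
        = (∑ i, (∑ j, A i j * l j ^ D) ^ 2 * l i ^ (2*D-2)) / m ^ (4*D-2) := by
      rw [Finset.sum_div]
      refine Finset.sum_congr rfl fun i _ => ?_
      have h1 : (∑ j, A i j * lh j ^ D) ^ 2 = (∑ j, A i j * l j ^ D) ^ 2 / M := by
        have hin : ∑ j, A i j * lh j ^ D = (∑ j, A i j * l j ^ D) / m ^ D := by
          rw [Finset.sum_div]
          exact Finset.sum_congr rfl fun j _ => by rw [hlhD j, mul_div_assoc]
        rw [hin, div_pow]
      have h2 : lh i ^ (2*D-2) = l i ^ (2*D-2) / m ^ (2*D-2) :=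
        Real.div_rpow (hl i).le hm.le _
      rw [h1, h2, div_mul_div_comm]
      congr 1
      rw [hM, sq, ← Real.rpow_add hm, ← Real.rpow_add hm]
      ring_nf
    rw [hscale] at hεb
    have hc' : Finset.univ.inf' hne ε ≤ ε i₀ := Finset.inf'_le ε (Finset.mem_univ i₀)
    have hmv : ∀ i, A.mulVec (fun j => l j ^ D) i = ∑ j, A i j * l j ^ D := by
      intro i; simp [Matrix.mulVec, dotProduct]
    calc Finset.univ.inf' hne ε * m ^ (4*D-2)
        ≤ ε i₀ * m ^ (4*D-2) := by nlinarith
      _ ≤ ∑ i, (∑ j, A i j * l j ^ D) ^ 2 * l i ^ (2*D-2) := by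
          rw [le_div_iff₀ hKpos] at hεb; linarith
      _ = ∑ i, (A.mulVec (fun j => l j ^ D) i) ^ 2 * l i ^ (2*D-2) := by
          refine Finset.sum_congr rfl fun i _ => ?_
          rw [hmv i]
end
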